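/- arXiv:2310.16773 — 7 statements merged into one kernel-verified Lean document; each statement's English description precedes it below -/
import Mathlib

section
/- Let κ be a regular cardinal, K a κ-accessible category, and S a set of representatives of isomorphism classes of κ-presentable objects of K. Then for every object K₀ of K, the canonical diagram of morphisms from objects of S into K₀ is κ-filtered, and the natural morphism from its colimit to K₀ is an isomorphism. -/
open CategoryTheory Limits Opposite

universe w v u u₂ v₂

/-- A preorder is `κ`-directed if every subset of cardinality `< κ` has an upper bound. -/
def IsCardinalDirectedPre (κ : Cardinal.{w}) (J : Type w) [Preorder J] : Prop :=
  ∀ S : Set J, Cardinal.mk S < κ → ∃ j, ∀ s ∈ S, s ≤ j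

/-- An object is `κ`-presentable if its covariant Hom functor preserves colimits of
`κ`-directed diagrams. -/
def IsCardinalPresentableObj (κ : Cardinal.{w}) {K : Type u} [Category.{v} K] (X : K) : Prop :=
  ∀ (J : Type w) [Preorder J], IsCardinalDirectedPre κ J →
    Nonempty (PreservesColimitsOfShape J (coyoneda.obj (op X)))

/-- Existence of all `κ`-directed colimits. -/
def HasCardinalDirectedColimits (κ : Cardinal.{w}) (K : Type u) [Category.{v} K] : Prop :=
  ∀ (J : Type w) [Preorder J], IsCardinalDirectedPre κ J → ∀ D : J ⥤ K, HasColimit D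

/-- A presentation of an object `X` as a `κ`-directed colimit of objects from `S`. -/
structure DirColimPresentation (κ : Cardinal.{w}) {K : Type u} [Category.{v} K]
    (S : Set K) (X : K) where
  J : Type w
  [inst : Preorder J]
  directed : IsCardinalDirectedPre κ J
  D : J ⥤ K
  mem : ∀ j, D.obj j ∈ S
  c : Cocone D
  pt_eq : c.pt = X
  isColim : IsColimit c

/-- A category is `κ`-accessible if it has `κ`-directed colimits and there is a set of
`κ`-presentable objects from which every object is a `κ`-directed colimit. -/
def IsCardinalAccessible (κ : Cardinal.{w}) (K : Type u) [Category.{v} K] : Prop :=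
  HasCardinalDirectedColimits κ K ∧
  ∃ S : Set K, Small.{w} S ∧ (∀ X ∈ S, IsCardinalPresentableObj κ X) ∧
    ∀ X : K, Nonempty (DirColimPresentation κ S X)

/-- A functor preserves `κ`-directed colimits. -/
def PreservesCardinalDirectedColimits (κ : Cardinal.{w}) {K : Type u} {L : Type u₂}
    [Category.{v} K] [Category.{v₂} L] (F : K ⥤ L) : Prop :=
  ∀ (J : Type w) [Preorder J], IsCardinalDirectedPre κ J →
    Nonempty (PreservesColimitsOfShape J F)

/-- Colimits of `λ`-indexed chains exist (a `λ`-indexed chain is a functor from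
the ordinal `λ`, viewed as a poset category). -/
def HasChainColimits (lam : Cardinal.{w}) (K : Type u) [Category.{v} K] : Prop :=
  HasColimitsOfShape lam.ord.ToType K

/-- A functor preserves colimits of `λ`-indexed chains. -/
def PreservesChainColimits (lam : Cardinal.{w}) {K : Type u} {L : Type u₂}
    [Category.{v} K] [Category.{v₂} L] (F : K ⥤ L) : Prop :=
  Nonempty (PreservesColimitsOfShape lam.ord.ToType F)

/-- A category is `κ`-filtered if every diagram indexed by a `κ`-small category
admits a cocone. -/
def IsCardinalFilteredCat (κ : Cardinal.{w}) (C : Type u) [Category.{v} C] : Prop :=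
  ∀ (J : Type w) [SmallCategory J], Cardinal.mk J < κ →
    Cardinal.mk (Σ a : J, Σ b : J, a ⟶ b) < κ → ∀ D : J ⥤ C, Nonempty (Cocone D)


section Aux

variable {κ : Cardinal.{v}} {K : Type u} [Category.{v} K]

lemma aux_upper {J : Type v} [Preorder J]
    (hdir : IsCardinalDirectedPre κ J) {α : Type v} (f : α → J)
    (hα : Cardinal.mk α < κ) : ∃ j, ∀ a, f a ≤ j := by
  obtain ⟨j, hj⟩ := hdir (Set.range f) (lt_of_le_of_lt Cardinal.mk_range_le hα)
  exact ⟨j, fun a => hj _ ⟨a, rfl⟩⟩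

lemma aux_upper_insert {J : Type v} [Preorder J] (hκ : κ.IsRegular)
    (hdir : IsCardinalDirectedPre κ J) {α : Type v} (f : α → J) (j₀ : J)
    (hα : Cardinal.mk α < κ) : ∃ j, j₀ ≤ j ∧ ∀ a, f a ≤ j := by
  obtain ⟨j, hj⟩ := hdir (insert j₀ (Set.range f)) (by
    refine lt_of_le_of_lt Cardinal.mk_insert_le ?_
    exact Cardinal.add_lt_of_lt hκ.aleph0_le
      (lt_of_le_of_lt Cardinal.mk_range_le hα) (lt_of_lt_of_le Cardinal.one_lt_aleph0 hκ.aleph0_le))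
  exact ⟨j, hj _ (Set.mem_insert _ _), fun a => hj _ (Set.mem_insert_of_mem _ ⟨a, rfl⟩)⟩

end Aux

/-- For a κ-accessible category `K` and a set `S` of representatives of isomorphism
classes of κ-presentable objects, the canonical diagram of morphisms from objects of `S`
into any object `K₀` is κ-filtered, and its canonical cocone with apex `K₀` is a colimit. -/
theorem canonical_diagram_filtered_and_colimit
    (κ : Cardinal.{v}) (hκ : κ.IsRegular)
    (K : Type u) [Category.{v} K] (hK : IsCardinalAccessible κ K)
    (S : Set K)
    (hS₁ : ∀ X ∈ S, IsCardinalPresentableObj κ X)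
    (hS₂ : ∀ X : K, IsCardinalPresentableObj κ X → ∃ s ∈ S, Nonempty (X ≅ s))
    (hS₃ : ∀ s ∈ S, ∀ t ∈ S, Nonempty ((s : K) ≅ t) → s = t)
    (K₀ : K) :
    IsCardinalFilteredCat κ (CostructuredArrow (ObjectProperty.ι (· ∈ S)) K₀) ∧
    Nonempty (IsColimit
      ({ pt := K₀
         ι := { app := fun v => v.hom
                naturality := by intro X Y f; exact (CostructuredArrow.w f).trans (Category.comp_id _).symm } } :
        Cocone (CostructuredArrow.proj (ObjectProperty.ι (· ∈ S)) K₀ ⋙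
          ObjectProperty.ι (· ∈ S)))) := by
  classical
  obtain ⟨hcolims, S₀, _, hS₀pres, hS₀gen⟩ := hK
  obtain ⟨P⟩ := hS₀gen K₀
  letI : Preorder P.J := P.inst
  have hdir : IsCardinalDirectedPre κ P.J := P.directed
  -- J is a nonempty directed preorder
  have hne : Nonempty P.J := by
    obtain ⟨j, -⟩ := hdir ∅ (by
      simpa using lt_of_lt_of_le Cardinal.aleph0_pos hκ.aleph0_le)
    exact ⟨j⟩
  have hdirected : IsDirected P.J (· ≤ ·) := by
    constructor
    intro a b
    obtain ⟨j, hj⟩ := hdir {a, b} (lt_of_lt_of_le (Set.toFinite {a, b}).lt_aleph0 hκ.aleph0_le)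
    exact ⟨j, hj a (by simp), hj b (by simp)⟩
  -- the transported colimit cocone with apex `K₀`
  let ι : ∀ j, P.D.obj j ⟶ K₀ := fun j => P.c.ι.app j ≫ eqToHom P.pt_eq
  have hι : ∀ {i j : P.J} (h : i ≤ j), P.D.map (homOfLE h) ≫ ι j = ι i := by
    intro i j h
    simp only [ι, ← Category.assoc]
    congr 1
    exact P.c.w (homOfLE h)
  let c₀ : Cocone P.D :=
    { pt := K₀
      ι := { app := fun j => ι j
             naturality := fun i j f => by
               have := hι (leOfHom f)
               simpa [Subsingleton.elim f (homOfLE (leOfHom f))] using this } }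
  have hc₀ : IsColimit c₀ :=
    P.isColim.ofIsoColimit (Cocones.ext (eqToIso P.pt_eq) (fun j => rfl))
  -- mapped colimits under Hom(s, -) for presentable `s`
  have key : ∀ (s : K), IsCardinalPresentableObj κ s →
      IsColimit ((coyoneda.obj (op s)).mapCocone c₀) := fun s hs =>
    letI : PreservesColimitsOfShape P.J (coyoneda.obj (op s)) := (hs P.J hdir).some
    isColimitOfPreserves _ hc₀
  -- factorization of maps out of presentable objects
  have factor : ∀ (s : K), IsCardinalPresentableObj κ s → ∀ (g : s ⟶ K₀),
      ∃ (j : P.J) (φ : s ⟶ P.D.obj j), φ ≫ ι j = g := by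
    intro s hs g
    obtain ⟨j, y, hy⟩ := Types.jointly_surjective_of_isColimit (key s hs) g
    exact ⟨j, y, hy⟩
  -- equalization of pairs of maps out of presentable objects
  have equalize : ∀ (s : K), IsCardinalPresentableObj κ s → ∀ (j : P.J)
      (φ ψ : s ⟶ P.D.obj j), φ ≫ ι j = ψ ≫ ι j →
      ∃ (j' : P.J) (h : j ≤ j'),
        φ ≫ P.D.map (homOfLE h) = ψ ≫ P.D.map (homOfLE h) := by
    intro s hs j φ ψ hfg
    have := (Types.FilteredColimit.isColimit_eq_iff (P.D ⋙ coyoneda.obj (op s))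
      (key s hs) (i := j) (j := j) (xi := φ) (xj := ψ)).1 hfg
    obtain ⟨k, f, g, hk⟩ := this
    refine ⟨k, leOfHom f, ?_⟩
    have hfg' : g = f := Subsingleton.elim _ _
    have hf : f = homOfLE (leOfHom f) := Subsingleton.elim _ _
    rw [hf] at hk
    rw [hfg', hf] at hk
    exact hk
  -- choose representatives in S for the objects in the presentation
  have hrep : ∀ j : P.J, ∃ s, ∃ (_ : s ∈ S), Nonempty (P.D.obj j ≅ s) := by
    intro j
    obtain ⟨s, hs, hiso⟩ := hS₂ _ (hS₀pres _ (P.mem j))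
    exact ⟨s, hs, hiso⟩
  choose sObj sMem sIso using hrep
  let e : ∀ j, P.D.obj j ≅ sObj j := fun j => (sIso j).some
  let CJ : ∀ j, CostructuredArrow (ObjectProperty.ι (· ∈ S)) K₀ :=
    fun j => CostructuredArrow.mk (Y := ⟨sObj j, sMem j⟩) ((e j).inv ≫ ι j)
  have hCJhom : ∀ j, (CJ j).hom = (e j).inv ≫ ι j := fun j => rfl
  have hCJleft : ∀ j, ((CJ j).left : ObjectProperty.FullSubcategory (· ∈ S)).obj = sObj j := fun j => rfl
  constructor
  · -- κ-filteredness of the canonical diagram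
    intro A _ hA hAmor F
    have pres : ∀ a : A, IsCardinalPresentableObj κ ((F.obj a).left.obj) :=
      fun a => hS₁ _ (F.obj a).left.property
    choose j₀ φ hφ using fun a => factor _ (pres a) (F.obj a).hom
    obtain ⟨j₁, hj₁⟩ := aux_upper hdir j₀ hA
    let ψ : ∀ a : A, (F.obj a).left.obj ⟶ P.D.obj j₁ :=
      fun a => φ a ≫ P.D.map (homOfLE (hj₁ a))
    have hψ : ∀ a : A, ψ a ≫ ι j₁ = (F.obj a).hom := by
      intro a
      simp only [ψ, Category.assoc, hι, hφ]
    have hmoreq : ∀ σ : Σ a : A, Σ b : A, a ⟶ b,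
        ((ObjectProperty.ι (· ∈ S)).map (F.map σ.2.2).left ≫ ψ σ.2.1) ≫ ι j₁
          = ψ σ.1 ≫ ι j₁ := by
      intro ⟨a, b, f⟩
      rw [Category.assoc, hψ, hψ]
      exact CostructuredArrow.w (F.map f)
    choose j₂ hle₂ heq₂ using fun σ =>
      equalize _ (pres σ.1) j₁ _ _ (hmoreq σ)
    obtain ⟨j₃, h₁₃, hj₃⟩ := aux_upper_insert hκ hdir j₂ j₁ hAmor
    let χ : ∀ a : A, (F.obj a).left.obj ⟶ P.D.obj j₃ :=
      fun a => ψ a ≫ P.D.map (homOfLE h₁₃)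
    have hχ : ∀ a : A, χ a ≫ ι j₃ = (F.obj a).hom := by
      intro a
      simp only [χ, Category.assoc, hι, hψ]
    have hnat : ∀ σ : Σ a : A, Σ b : A, a ⟶ b,
        (ObjectProperty.ι (· ∈ S)).map (F.map σ.2.2).left ≫ χ σ.2.1 = χ σ.1 := by
      intro σ
      have h1 : P.D.map (homOfLE h₁₃)
          = P.D.map (homOfLE (hle₂ σ)) ≫ P.D.map (homOfLE (hj₃ σ)) := by
        rw [← P.D.map_comp, homOfLE_comp]
      show (ObjectProperty.ι (· ∈ S)).map (F.map σ.2.2).left ≫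
          ψ σ.2.1 ≫ P.D.map (homOfLE h₁₃) = ψ σ.1 ≫ P.D.map (homOfLE h₁₃)
      calc (ObjectProperty.ι (· ∈ S)).map (F.map σ.2.2).left ≫
            ψ σ.2.1 ≫ P.D.map (homOfLE h₁₃)
          = (((ObjectProperty.ι (· ∈ S)).map (F.map σ.2.2).left ≫ ψ σ.2.1)
              ≫ P.D.map (homOfLE (hle₂ σ))) ≫ P.D.map (homOfLE (hj₃ σ)) := by
            rw [h1]; simp only [Category.assoc]
        _ = (ψ σ.1 ≫ P.D.map (homOfLE (hle₂ σ))) ≫ P.D.map (homOfLE (hj₃ σ)) := by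
            rw [heq₂ σ]
        _ = ψ σ.1 ≫ P.D.map (homOfLE h₁₃) := by
            rw [h1]; simp only [Category.assoc]
    -- assemble the cocone
    let ηl : ∀ a : A, (F.obj a).left.obj ⟶ ((CJ j₃).left : ObjectProperty.FullSubcategory (· ∈ S)).obj :=
      fun a => χ a ≫ (e j₃).hom
    have hw : ∀ a : A,
        (ObjectProperty.ι (· ∈ S)).map (X := (F.obj a).left) (Y := (CJ j₃).left)
          (ObjectProperty.homMk (ηl a)) ≫ (CJ j₃).hom = (F.obj a).hom := by
      intro a
      show (χ a ≫ (e j₃).hom) ≫ (e j₃).inv ≫ ι j₃ = (F.obj a).hom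
      rw [Category.assoc, Iso.hom_inv_id_assoc, hχ]
    let η : ∀ a : A, F.obj a ⟶ CJ j₃ := fun a => CostructuredArrow.homMk (ObjectProperty.homMk (ηl a)) (hw a)
    have hηnat : ∀ (a b : A) (f : a ⟶ b), F.map f ≫ η b = η a := by
      intro a b f
      apply CostructuredArrow.hom_ext
      rw [CostructuredArrow.comp_left]
      apply InducedCategory.hom_ext
      show (ObjectProperty.ι (· ∈ S)).map (F.map f).left ≫ (χ b ≫ (e j₃).hom)
          = χ a ≫ (e j₃).hom
      rw [← Category.assoc, hnat ⟨a, b, f⟩]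
    exact ⟨{ pt := CJ j₃
             ι := { app := η
                    naturality := fun a b f => by
                      simpa using hηnat a b f } }⟩
  · -- the canonical cocone is a colimit
    have mkleg : ∀ (s : Cocone (CostructuredArrow.proj
          (ObjectProperty.ι (· ∈ S)) K₀ ⋙ ObjectProperty.ι (· ∈ S)))
        (i j : P.J) (f : i ⟶ j),
        P.D.map f ≫ ((e j).hom ≫ s.ι.app (CJ j)) =
          ((e i).hom ≫ s.ι.app (CJ i)) ≫ 𝟙 s.pt := by
      intro s i j f
      have hle : i ≤ j := leOfHom f
      have hfe : f = homOfLE hle := Subsingleton.elim _ _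
      let mleft : ((CJ i).left : ObjectProperty.FullSubcategory (· ∈ S)).obj ⟶
          ((CJ j).left : ObjectProperty.FullSubcategory (· ∈ S)).obj :=
        (e i).inv ≫ P.D.map (homOfLE hle) ≫ (e j).hom
      have hwm : (ObjectProperty.ι (· ∈ S)).map (X := (CJ i).left) (Y := (CJ j).left)
          (ObjectProperty.homMk mleft) ≫ (CJ j).hom = (CJ i).hom := by
        show ((e i).inv ≫ P.D.map (homOfLE hle) ≫ (e j).hom) ≫ (e j).inv ≫ ι j
          = (e i).inv ≫ ι i
        rw [Category.assoc, Category.assoc, Iso.hom_inv_id_assoc, hι hle]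
      have hn := s.ι.naturality (CostructuredArrow.homMk (ObjectProperty.homMk mleft) hwm)
      have hn' : mleft ≫ s.ι.app (CJ j) = s.ι.app (CJ i) := by
        have h := hn; simp at h; exact h
      have hn'' : ((e i).inv ≫ P.D.map (homOfLE hle) ≫ (e j).hom) ≫ s.ι.app (CJ j)
          = s.ι.app (CJ i) := hn'
      rw [hfe]
      calc P.D.map (homOfLE hle) ≫ (e j).hom ≫ s.ι.app (CJ j)
          = (e i).hom ≫ ((e i).inv ≫ P.D.map (homOfLE hle) ≫ (e j).hom) ≫ s.ι.app (CJ j) := by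
            have h := Iso.hom_inv_id_assoc (e i) (P.D.map (homOfLE hle) ≫ (e j).hom ≫ s.ι.app (CJ j))
            exact h.symm.trans (congrArg (fun t => (e i).hom ≫ t)
              ((Category.assoc _ _ _).trans (congrArg ((e i).inv ≫ ·) (Category.assoc _ _ _))).symm)
        _ = (e i).hom ≫ s.ι.app (CJ i) := by rw [hn'']
        _ = ((e i).hom ≫ s.ι.app (CJ i)) ≫ 𝟙 s.pt := by simp
    let mk : ∀ (s : Cocone (CostructuredArrow.proj
          (ObjectProperty.ι (· ∈ S)) K₀ ⋙ ObjectProperty.ι (· ∈ S))),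
        Cocone P.D := fun s =>
      { pt := s.pt
        ι := { app := fun j => (e j).hom ≫ s.ι.app (CJ j)
               naturality := mkleg s } }
    refine ⟨{ desc := fun s => hc₀.desc (mk s), fac := ?_, uniq := ?_ }⟩
    · intro s V
      obtain ⟨j, φ, hφ⟩ := factor _ (hS₁ _ V.left.property) V.hom
      let mleft : (V.left : ObjectProperty.FullSubcategory (· ∈ S)).obj ⟶
          ((CJ j).left : ObjectProperty.FullSubcategory (· ∈ S)).obj := φ ≫ (e j).hom
      have hwm : (ObjectProperty.ι (· ∈ S)).map (X := V.left) (Y := (CJ j).left)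
          (ObjectProperty.homMk mleft) ≫ (CJ j).hom = V.hom := by
        show (φ ≫ (e j).hom) ≫ (e j).inv ≫ ι j = V.hom
        rw [Category.assoc, Iso.hom_inv_id_assoc, hφ]
      have hn₀ : mleft ≫ s.ι.app (CJ j) = s.ι.app V := by
        have h := s.ι.naturality (CostructuredArrow.homMk (ObjectProperty.homMk mleft) hwm)
        simp at h; exact h
      have hn : (φ ≫ (e j).hom) ≫ s.ι.app (CJ j) = s.ι.app V := hn₀
      show V.hom ≫ hc₀.desc (mk s) = s.ι.app V
      rw [← hφ, Category.assoc]
      have hfac : ι j ≫ hc₀.desc (mk s) = (e j).hom ≫ s.ι.app (CJ j) := hc₀.fac (mk s) j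
      rw [hfac, ← hn]
      exact (Category.assoc _ _ _).symm
    · intro s m hm
      refine hc₀.uniq (mk s) m ?_
      intro j
      have h1 : c₀.ι.app j = (e j).hom ≫ ((e j).inv ≫ ι j) := by
        rw [Iso.hom_inv_id_assoc]
      show c₀.ι.app j ≫ m = (e j).hom ≫ s.ι.app (CJ j)
      rw [h1, Category.assoc]
      congr 1
      exact hm (CJ j)
end

section
/- Let κ be a regular cardinal, K a κ-accessible category, and S a set of κ-presentable objects of K. If E is an object of K such that every morphism from a κ-presentable object of K into E factorizes through some object of S, then E is a κ-directed colimit of objects from S. -/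
open CategoryTheory Limits Opposite

universe w v u u₂ v₂

section Aux

variable {K : Type u} [Category.{v} K]
variable (κ : Cardinal.{v})
variable {J₀ : Type v} [Preorder J₀]
variable (D₀ : J₀ ⥤ K) (c₀ : Cocone D₀)
variable (s : J₀ → K) (h : ∀ j, s j ⟶ c₀.pt)

structure Piece : Type v where
  P : Set J₀
  small : Cardinal.mk P < κ
  t : J₀
  n : κ.ord.ToType
  e : ∀ j ∈ P, s j ⟶ s t
  he : ∀ j hj, e j hj ≫ h t = h j

variable {κ D₀ c₀ s h}

instance : Preorder (Piece κ D₀ c₀ s h) where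
  le x y := x = y ∨ ∃ (hP : x.P ⊆ y.P) (ht : x.t ∈ y.P), x.n < y.n ∧
      ∀ j hj, x.e j hj ≫ y.e x.t ht = y.e j (hP hj)
  le_refl x := Or.inl rfl
  le_trans x y z hxy hyz := by
    rcases hxy with rfl | ⟨hP, ht, hn, hco⟩
    · exact hyz
    rcases hyz with rfl | ⟨hP', ht', hn', hco'⟩
    · exact Or.inr ⟨hP, ht, hn, hco⟩
    refine Or.inr ⟨hP.trans hP', hP' ht, hn.trans hn', fun j hj => ?_⟩
    have h1 : x.e j hj ≫ y.e x.t ht ≫ z.e y.t ht' = y.e j (hP hj) ≫ z.e y.t ht' := by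
      rw [← Category.assoc, hco]
    rw [hco' x.t ht] at h1
    rw [h1, hco']

namespace Piece

variable {x y z : Piece κ D₀ c₀ s h}

lemma le_ne (hle : x ≤ y) (hne : x ≠ y) :
    ∃ (hP : x.P ⊆ y.P) (ht : x.t ∈ y.P), x.n < y.n ∧
      ∀ j hj, x.e j hj ≫ y.e x.t ht = y.e j (hP hj) :=
  hle.resolve_left hne

lemma lt_n (hle : x ≤ y) (hne : x ≠ y) : x.n < y.n :=
  (le_ne hle hne).choose_spec.choose_spec.1

lemma t_mem (hle : x ≤ y) (hne : x ≠ y) : x.t ∈ y.P :=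
  (le_ne hle hne).choose_spec.choose

lemma coh (hle : x ≤ y) (hne : x ≠ y) : ∀ j hj,
    x.e j hj ≫ y.e x.t (t_mem hle hne) = y.e j ((le_ne hle hne).choose hj) :=
  (le_ne hle hne).choose_spec.choose_spec.2

lemma e_proof_irrel (j : J₀) (h1 h2 : j ∈ y.P) : y.e j h1 = y.e j h2 := rfl

end Piece

variable (κ D₀ c₀ s h)

open scoped Classical in
noncomputable def Dfun : Piece κ D₀ c₀ s h ⥤ K where
  obj x := s x.t
  map {x y} f :=
    if hxy : x = y then eqToHom (by rw [hxy]) else y.e x.t (Piece.t_mem (leOfHom f) hxy)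
  map_id x := dif_pos rfl
  map_comp {x y z} f g := by
    by_cases hxy : x = y
    · subst hxy
      have : f ≫ g = g := Subsingleton.elim _ _
      rw [this]
      simp
    by_cases hyz : y = z
    · subst hyz
      have : f ≫ g = f := Subsingleton.elim _ _
      rw [this]
      simp [dif_neg hxy]
    have hxz : x ≠ z := by
      intro e
      subst e
      exact absurd ((Piece.lt_n (leOfHom f) hxy).trans (Piece.lt_n (leOfHom g) hyz))
        (lt_irrefl _)
    rw [dif_neg hxy, dif_neg hyz, dif_neg hxz]
    exact (Piece.coh (leOfHom g) hyz x.t (Piece.t_mem (leOfHom f) hxy)).symm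

open scoped Classical in
noncomputable def Dcocone : Cocone (Dfun κ D₀ c₀ s h) where
  pt := c₀.pt
  ι := {
    app := fun x => h x.t
    naturality := fun x y f => by
      dsimp only [Dfun]
      by_cases hxy : x = y
      · subst hxy; simp
      · rw [dif_neg hxy, y.he]; simp }


section lemmas

lemma nonempty_J0 (hκ : κ.IsRegular) (hJ : IsCardinalDirectedPre κ J₀) : Nonempty J₀ :=
  ⟨(hJ ∅ (by simpa using hκ.pos)).choose⟩

lemma directed_J0 (hκ : κ.IsRegular) (hJ : IsCardinalDirectedPre κ J₀) :
    IsDirected J₀ (· ≤ ·) := by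
  constructor
  intro a b
  have hfin : Cardinal.mk ({a, b} : Set J₀) < κ :=
    lt_of_lt_of_le (Set.Finite.lt_aleph0 (Set.toFinite _)) hκ.aleph0_le
  obtain ⟨c, hc⟩ := hJ {a, b} hfin
  exact ⟨c, hc a (by simp), hc b (by simp)⟩

lemma acc_exists_eq (hκ : κ.IsRegular) (hJ : IsCardinalDirectedPre κ J₀) (hc₀ : IsColimit c₀)
    {X : K} (hX : IsCardinalPresentableObj κ X) {j : J₀} (a b : X ⟶ D₀.obj j)
    (hab : a ≫ c₀.ι.app j = b ≫ c₀.ι.app j) :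
    ∃ (k : J₀) (hk : j ≤ k), a ≫ D₀.map (homOfLE hk) = b ≫ D₀.map (homOfLE hk) := by
  haveI : Nonempty J₀ := nonempty_J0 κ hκ hJ
  haveI : IsDirected J₀ (· ≤ ·) := directed_J0 κ hκ hJ
  obtain ⟨G⟩ := hX J₀ hJ
  have hmap : IsColimit ((coyoneda.obj (op X)).mapCocone c₀) :=
    isColimitOfPreserves _ hc₀
  have hh := (Types.FilteredColimit.isColimit_eq_iff (D₀ ⋙ coyoneda.obj (op X)) hmap
      (i := j) (j := j) (xi := a) (xj := b)).1 (by dsimp; rw [hab])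
  obtain ⟨k, f, g', hfg⟩ := hh
  obtain rfl : f = g' := Subsingleton.elim _ _
  refine ⟨k, leOfHom f, ?_⟩
  have h1 : homOfLE (leOfHom f) = f := Subsingleton.elim _ _
  rw [h1]
  exact hfg

lemma acc_exists_factor (hκ : κ.IsRegular) (hJ : IsCardinalDirectedPre κ J₀) (hc₀ : IsColimit c₀)
    {X : K} (hX : IsCardinalPresentableObj κ X) (f : X ⟶ c₀.pt) :
    ∃ (j : J₀) (u : X ⟶ D₀.obj j), u ≫ c₀.ι.app j = f := by
  haveI : Nonempty J₀ := nonempty_J0 κ hκ hJ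
  haveI : IsDirected J₀ (· ≤ ·) := directed_J0 κ hκ hJ
  obtain ⟨G⟩ := hX J₀ hJ
  have hmap : IsColimit ((coyoneda.obj (op X)).mapCocone c₀) :=
    isColimitOfPreserves _ hc₀
  obtain ⟨j, y, hy⟩ := Types.jointly_surjective_of_isColimit hmap f
  exact ⟨j, y, hy⟩


lemma acc_rank_bound (hκ : κ.IsRegular) (T : Set κ.ord.ToType) (hT : Cardinal.mk T < κ) :
    ∃ b, ∀ a ∈ T, a < b := by
  haveI : IsWellOrder κ.ord.ToType ((· < ·) : κ.ord.ToType → κ.ord.ToType → Prop) :=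
    isWellOrder_lt
  have h1 : Cardinal.mk T <
      (Ordinal.type ((· < ·) : κ.ord.ToType → κ.ord.ToType → Prop)).cof := by
    rw [Ordinal.type_toType, hκ.cof_eq]; exact hT
  exact not_isCofinal_iff.1 fun hc => absurd (Order.cof_le hc) (not_le.2 (by rwa [Ordinal.cof_type] at h1))

lemma acc_small_insert {α : Type v} (hκ : κ.IsRegular) {P : Set α} (hP : Cardinal.mk P < κ)
    (a : α) : Cardinal.mk (insert a P : Set α) < κ :=
  lt_of_le_of_lt Cardinal.mk_insert_le
    (Cardinal.add_lt_of_lt hκ.aleph0_le hP (lt_of_lt_of_le Cardinal.one_lt_aleph0 hκ.aleph0_le))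

variable (g : ∀ j, D₀.obj j ⟶ s j) (φ : J₀ → J₀) (uu : ∀ j, s j ⟶ D₀.obj (φ j))

lemma acc_key (hκ : κ.IsRegular) (hJ : IsCardinalDirectedPre κ J₀) (hc₀ : IsColimit c₀)
    (hgh : ∀ j, g j ≫ h j = c₀.ι.app j)
    (huu : ∀ j, uu j ≫ c₀.ι.app (φ j) = h j)
    (P : Set J₀) (hP : Cardinal.mk P < κ)
    (ι : Type v) (hι : Cardinal.mk ι < κ)
    (T : ι → K) (hT : ∀ c, IsCardinalPresentableObj κ (T c))
    (j₁ j₂ : ι → J₀) (hj₁ : ∀ c, j₁ c ∈ P) (hj₂ : ∀ c, j₂ c ∈ P)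
    (p : ∀ c, T c ⟶ s (j₁ c)) (q : ∀ c, T c ⟶ s (j₂ c))
    (hpq : ∀ c, p c ≫ h (j₁ c) = q c ≫ h (j₂ c)) :
    ∃ (k : J₀) (e : ∀ j ∈ P, s j ⟶ s k),
      (∀ j hj, e j hj ≫ h k = h j) ∧
      (∀ c, p c ≫ e (j₁ c) (hj₁ c) = q c ≫ e (j₂ c) (hj₂ c)) := by
  haveI : IsDirected J₀ (· ≤ ·) := directed_J0 κ hκ hJ
  have H : ∀ c : ι, ∃ (k' : J₀) (h1 : φ (j₁ c) ≤ k') (h2 : φ (j₂ c) ≤ k'),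
      (p c ≫ uu (j₁ c)) ≫ D₀.map (homOfLE h1) =
      (q c ≫ uu (j₂ c)) ≫ D₀.map (homOfLE h2) := by
    intro c
    obtain ⟨l, hl1, hl2⟩ := directed_of (· ≤ ·) (φ (j₁ c)) (φ (j₂ c))
    have hab : ((p c ≫ uu (j₁ c)) ≫ D₀.map (homOfLE hl1)) ≫ c₀.ι.app l =
        ((q c ≫ uu (j₂ c)) ≫ D₀.map (homOfLE hl2)) ≫ c₀.ι.app l := by
      simp only [Category.assoc, c₀.w]
      rw [huu, huu]
      exact hpq c
    obtain ⟨k', hk', heq⟩ := acc_exists_eq κ D₀ c₀ hκ hJ hc₀ (hT c) _ _ hab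
    refine ⟨k', hl1.trans hk', hl2.trans hk', ?_⟩
    have e1 : (homOfLE (hl1.trans hk') : φ (j₁ c) ⟶ k') = homOfLE hl1 ≫ homOfLE hk' :=
      Subsingleton.elim _ _
    have e2 : (homOfLE (hl2.trans hk') : φ (j₂ c) ⟶ k') = homOfLE hl2 ≫ homOfLE hk' :=
      Subsingleton.elim _ _
    rw [e1, e2, D₀.map_comp, D₀.map_comp, ← Category.assoc, ← Category.assoc]
    rw [Category.assoc (p c), Category.assoc (q c)] at heq ⊢
    rw [heq]
  choose kc hk1 hk2 heqc using H
  have hBig : Cardinal.mk ((φ '' P) ∪ Set.range kc : Set J₀) < κ := by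
    refine lt_of_le_of_lt (Cardinal.mk_union_le _ _) (Cardinal.add_lt_of_lt hκ.aleph0_le ?_ ?_)
    · exact lt_of_le_of_lt Cardinal.mk_image_le hP
    · exact lt_of_le_of_lt Cardinal.mk_range_le hι
  obtain ⟨k, hk⟩ := hJ _ hBig
  have hφk : ∀ j ∈ P, φ j ≤ k := fun j hj => hk _ (Or.inl ⟨j, hj, rfl⟩)
  have hkck : ∀ c, kc c ≤ k := fun c => hk _ (Or.inr ⟨c, rfl⟩)
  refine ⟨k, fun j hj => uu j ≫ D₀.map (homOfLE (hφk j hj)) ≫ g k, fun j hj => ?_, fun c => ?_⟩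
  · rw [Category.assoc, Category.assoc, hgh, c₀.w, huu]
  · have e1 : D₀.map (homOfLE (hφk _ (hj₁ c))) =
        D₀.map (homOfLE (hk1 c)) ≫ D₀.map (homOfLE (hkck c)) := by
      rw [← D₀.map_comp]; exact congrArg D₀.map (Subsingleton.elim _ _)
    have e2 : D₀.map (homOfLE (hφk _ (hj₂ c))) =
        D₀.map (homOfLE (hk2 c)) ≫ D₀.map (homOfLE (hkck c)) := by
      rw [← D₀.map_comp]; exact congrArg D₀.map (Subsingleton.elim _ _)
    have h3 := congrArg (fun t => t ≫ D₀.map (homOfLE (hkck c)) ≫ g k) (heqc c)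
    simp only [Category.assoc] at h3
    dsimp only
    rw [e1, e2]
    simp only [Category.assoc]
    exact h3


lemma acc_piece_directed (hκ : κ.IsRegular) (hJ : IsCardinalDirectedPre κ J₀)
    (hc₀ : IsColimit c₀) (hgh : ∀ j, g j ≫ h j = c₀.ι.app j)
    (huu : ∀ j, uu j ≫ c₀.ι.app (φ j) = h j)
    (hpres : ∀ j, IsCardinalPresentableObj κ (s j)) :
    IsCardinalDirectedPre κ (Piece κ D₀ c₀ s h) := by
  intro A hA
  have hP : Cardinal.mk (⋃ x : A, insert x.1.t
      x.1.P : Set J₀) < κ := by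
    refine lt_of_le_of_lt Cardinal.mk_iUnion_le_sum_mk
      (Cardinal.sum_lt_of_isRegular hκ hA fun x => ?_)
    exact acc_small_insert κ hκ x.1.small _
  have hι : Cardinal.mk ((x : A) × x.1.P) < κ := by
    rw [Cardinal.mk_sigma]
    exact Cardinal.sum_lt_of_isRegular hκ hA fun x => x.1.small
  obtain ⟨k, e, he, hcon⟩ := acc_key κ D₀ c₀ s h g φ uu hκ hJ hc₀ hgh huu
    (⋃ x : A, insert x.1.t x.1.P) hP
    ((x : A) × x.1.P) hι
    (fun c => s c.2.1) (fun c => hpres _)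
    (fun c => c.1.1.t) (fun c => c.2.1)
    (fun c => Set.mem_iUnion.2 ⟨c.1, Set.mem_insert _ _⟩)
    (fun c => Set.mem_iUnion.2 ⟨c.1, Set.mem_insert_of_mem _ c.2.2⟩)
    (fun c => c.1.1.e c.2.1 c.2.2) (fun c => 𝟙 _)
    (fun c => by rw [Category.id_comp]; exact c.1.1.he _ _)
  obtain ⟨b, hb⟩ := acc_rank_bound κ hκ
    (Set.range (fun x : A => x.1.n))
    (lt_of_le_of_lt Cardinal.mk_range_le hA)
  refine ⟨⟨_, hP, k, b, e, he⟩, fun x hx => Or.inr ⟨?_, ?_, ?_, ?_⟩⟩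
  · exact fun j hj => Set.mem_iUnion.2 ⟨⟨x, hx⟩, Set.mem_insert_of_mem _ hj⟩
  · exact Set.mem_iUnion.2 ⟨⟨x, hx⟩, Set.mem_insert _ _⟩
  · exact hb _ ⟨⟨x, hx⟩, rfl⟩
  · intro j hj
    have hc := hcon ⟨⟨x, hx⟩, ⟨j, hj⟩⟩
    rw [Category.id_comp] at hc
    exact hc

noncomputable def acc_sing (hκ : κ.IsRegular) (n₀ : κ.ord.ToType) (j : J₀) :
    Piece κ D₀ c₀ s h where
  P := {j}
  small := lt_of_lt_of_le (Set.Finite.lt_aleph0 (Set.toFinite _)) hκ.aleph0_le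
  t := j
  n := n₀
  e := fun j' hj' => eqToHom (by rw [show j' = j from hj'])
  he := fun j' hj' => by
    obtain rfl : j' = j := hj'
    simp

lemma acc_sing_t (hκ : κ.IsRegular) (n₀ : κ.ord.ToType) (j : J₀) :
    (acc_sing κ D₀ c₀ s h hκ n₀ j).t = j := rfl

lemma acc_sing_e (hκ : κ.IsRegular) (n₀ : κ.ord.ToType) (j : J₀)
    (hj : j ∈ (acc_sing κ D₀ c₀ s h hκ n₀ j).P) :
    (acc_sing κ D₀ c₀ s h hκ n₀ j).e j hj = 𝟙 (s j) := rfl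

lemma acc_ne_of_lt {x y : Piece κ D₀ c₀ s h} (hlt : x.n < y.n) : x ≠ y :=
  fun hEq => absurd (hEq ▸ hlt) (lt_irrefl _)

open scoped Classical in
lemma Dfun_map_ne {x y : Piece κ D₀ c₀ s h} (f : x ⟶ y) (hne : x ≠ y) :
    (Dfun κ D₀ c₀ s h).map f = y.e x.t (Piece.t_mem (leOfHom f) hne) := dif_neg hne


lemma acc_main (hκ : κ.IsRegular) (hJ : IsCardinalDirectedPre κ J₀) (hc₀ : IsColimit c₀)
    (hgh : ∀ j, g j ≫ h j = c₀.ι.app j) (huu : ∀ j, uu j ≫ c₀.ι.app (φ j) = h j)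
    (hpres : ∀ j, IsCardinalPresentableObj κ (s j))
    (hpresD : ∀ j, IsCardinalPresentableObj κ (D₀.obj j))
    (S : Set K) (hs : ∀ j, s j ∈ S) :
    Nonempty (DirColimPresentation κ S c₀.pt) := by
  have hne0 : Nonempty κ.ord.ToType :=
    Ordinal.toType_nonempty_iff_ne_zero.2 (by
      rw [Ne, Cardinal.ord_eq_zero]; exact hκ.pos.ne')
  obtain ⟨n₀⟩ := hne0
  set sing : J₀ → Piece κ D₀ c₀ s h := acc_sing κ D₀ c₀ s h hκ n₀ with hsing
  -- naturality of the ψ-cocone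
  have key2 : ∀ (b : Cocone (Dfun κ D₀ c₀ s h)) (i j : J₀) (hij : i ≤ j),
      D₀.map (homOfLE hij) ≫ g j ≫ b.ι.app (sing j) = g i ≫ b.ι.app (sing i) := by
    intro b i j hij
    obtain ⟨k, e, he, hcon⟩ := acc_key κ D₀ c₀ s h g φ uu hκ hJ hc₀ hgh huu
      ({i, j}) (lt_of_lt_of_le (Set.Finite.lt_aleph0 (Set.toFinite _)) hκ.aleph0_le)
      PUnit (by simpa using lt_of_lt_of_le Cardinal.one_lt_aleph0 hκ.aleph0_le)
      (fun _ => D₀.obj i) (fun _ => hpresD i)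
      (fun _ => i) (fun _ => j)
      (fun _ => Set.mem_insert _ _) (fun _ => Set.mem_insert_of_mem _ rfl)
      (fun _ => g i) (fun _ => D₀.map (homOfLE hij) ≫ g j)
      (fun _ => by rw [hgh, Category.assoc, hgh, c₀.w])
    obtain ⟨bb, hbb⟩ := acc_rank_bound κ hκ {n₀}
      (lt_of_lt_of_le (Set.Finite.lt_aleph0 (Set.toFinite _)) hκ.aleph0_le)
    have hbn : n₀ < bb := hbb n₀ rfl
    set z : Piece κ D₀ c₀ s h :=
      ⟨{i, j}, lt_of_lt_of_le (Set.Finite.lt_aleph0 (Set.toFinite _)) hκ.aleph0_le,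
        k, bb, e, he⟩ with hz
    have hsi : sing i ≤ z := Or.inr ⟨fun a ha => (show a = i from ha) ▸ Set.mem_insert _ _,
      Set.mem_insert _ _, hbn, fun j' hj' => by
        obtain rfl : j' = i := hj'
        exact Category.id_comp _⟩
    have hsj : sing j ≤ z := Or.inr ⟨fun a ha => (show a = j from ha) ▸
        Set.mem_insert_of_mem _ rfl,
      Set.mem_insert_of_mem _ rfl, hbn, fun j' hj' => by
        obtain rfl : j' = j := hj'
        exact Category.id_comp _⟩
    have w1 := b.w (homOfLE hsi)
    rw [Dfun_map_ne κ D₀ c₀ s h _ (acc_ne_of_lt κ D₀ c₀ s h hbn)] at w1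
    have w2 := b.w (homOfLE hsj)
    rw [Dfun_map_ne κ D₀ c₀ s h _ (acc_ne_of_lt κ D₀ c₀ s h hbn)] at w2
    rw [← w1, ← w2]
    have h5 := hcon PUnit.unit
    have h6 := congrArg (fun t => t ≫ b.ι.app z) h5
    exact ((Category.assoc _ _ _).trans (congrArg (_ ≫ ·) (Category.assoc _ _ _))).symm.trans
      ((congrArg (· ≫ b.ι.app z) (Category.assoc _ _ _).symm).trans
        (h6.symm.trans (Category.assoc _ _ _)))
  -- the ψ-cocone
  let ψ : ∀ b : Cocone (Dfun κ D₀ c₀ s h), Cocone D₀ := fun b =>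
    { pt := b.pt
      ι := { app := fun j => g j ≫ b.ι.app (sing j)
             naturality := fun i j f => by
               have hf : f = homOfLE (leOfHom f) := Subsingleton.elim _ _
               rw [hf]
               simp only [Functor.const_obj_obj, Functor.const_obj_map, Category.comp_id]
               exact key2 b i j (leOfHom f) } }
  have hψapp : ∀ (b : Cocone (Dfun κ D₀ c₀ s h)) (j : J₀),
      (ψ b).ι.app j = g j ≫ b.ι.app (sing j) := fun b j => rfl
  refine ⟨⟨Piece κ D₀ c₀ s h,
    acc_piece_directed κ D₀ c₀ s h g φ uu hκ hJ hc₀ hgh huu hpres,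
    Dfun κ D₀ c₀ s h, fun x => hs x.t, Dcocone κ D₀ c₀ s h, rfl, ?_⟩⟩
  refine IsColimit.mk (fun b => hc₀.desc (ψ b)) (fun b x => ?_) (fun b m hm => ?_)
  · -- fac
    show h x.t ≫ hc₀.desc (ψ b) = b.ι.app x
    have hstep : h x.t ≫ hc₀.desc (ψ b) = uu x.t ≫ g (φ x.t) ≫ b.ι.app (sing (φ x.t)) := by
      rw [← huu x.t, Category.assoc, hc₀.fac, hψapp]
    obtain ⟨k, e, he, hcon⟩ := acc_key κ D₀ c₀ s h g φ uu hκ hJ hc₀ hgh huu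
      (insert x.t (insert (φ x.t) x.P))
      (acc_small_insert κ hκ (acc_small_insert κ hκ x.small _) _)
      (Option x.P)
      (by rw [Cardinal.mk_option]
          exact Cardinal.add_lt_of_lt hκ.aleph0_le x.small
            (lt_of_lt_of_le Cardinal.one_lt_aleph0 hκ.aleph0_le))
      (fun c => Option.casesOn c (s x.t) (fun jj => s jj.1))
      (fun c => Option.casesOn c (hpres x.t) (fun jj => hpres jj.1))
      (fun c => Option.casesOn c (φ x.t) (fun jj => x.t))
      (fun c => Option.casesOn c x.t (fun jj => jj.1))
      (fun c => Option.casesOn c (Set.mem_insert_of_mem _ (Set.mem_insert _ _))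
        (fun jj => Set.mem_insert _ _))
      (fun c => Option.casesOn c (Set.mem_insert _ _)
        (fun jj => Set.mem_insert_of_mem _ (Set.mem_insert_of_mem _ jj.2)))
      (fun c => Option.casesOn c (uu x.t ≫ g (φ x.t)) (fun jj => x.e jj.1 jj.2))
      (fun c => Option.casesOn c (𝟙 (s x.t)) (fun jj => 𝟙 (s jj.1)))
      (fun c => by
        cases c with
        | none =>
          show (uu x.t ≫ g (φ x.t)) ≫ h (φ x.t) = 𝟙 (s x.t) ≫ h x.t
          rw [Category.assoc, hgh, huu, Category.id_comp]
        | some jj =>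
          show x.e jj.1 jj.2 ≫ h x.t = 𝟙 (s jj.1) ≫ h jj.1
          rw [Category.id_comp]; exact x.he _ _)
    obtain ⟨bb, hbb⟩ := acc_rank_bound κ hκ {n₀, x.n}
      (lt_of_lt_of_le (Set.Finite.lt_aleph0 (Set.toFinite _)) hκ.aleph0_le)
    have hbn : n₀ < bb := hbb n₀ (Set.mem_insert _ _)
    have hbx : x.n < bb := hbb x.n (Set.mem_insert_of_mem _ rfl)
    set w : Piece κ D₀ c₀ s h :=
      ⟨insert x.t (insert (φ x.t) x.P),
        acc_small_insert κ hκ (acc_small_insert κ hκ x.small _) _, k, bb, e, he⟩ with hw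
    have hxw : x ≤ w := Or.inr ⟨fun a ha => Set.mem_insert_of_mem _ (Set.mem_insert_of_mem _ ha),
      Set.mem_insert _ _, hbx, fun j hj => by
        have hc := hcon (some ⟨j, hj⟩)
        rw [Category.id_comp] at hc
        exact hc⟩
    have hsw : sing (φ x.t) ≤ w := Or.inr ⟨fun a ha => (show a = φ x.t from ha) ▸
        Set.mem_insert_of_mem _ (Set.mem_insert _ _),
      Set.mem_insert_of_mem _ (Set.mem_insert _ _), hbn, fun j' hj' => by
        obtain rfl : j' = φ x.t := hj'
        exact Category.id_comp _⟩
    have w1 := b.w (homOfLE hxw)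
    rw [Dfun_map_ne κ D₀ c₀ s h _ (acc_ne_of_lt κ D₀ c₀ s h hbx)] at w1
    have w2 := b.w (homOfLE hsw)
    rw [Dfun_map_ne κ D₀ c₀ s h _ (acc_ne_of_lt κ D₀ c₀ s h hbn)] at w2
    rw [hstep, ← w2, ← w1]
    have h7 := hcon none
    rw [Category.id_comp] at h7
    have h8 := congrArg (fun t => t ≫ b.ι.app w) h7
    exact ((Category.assoc _ _ _).trans (congrArg (_ ≫ ·) (Category.assoc _ _ _))).symm.trans
      ((congrArg (· ≫ b.ι.app w) (Category.assoc _ _ _).symm).trans h8)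
  · -- uniq
    refine hc₀.hom_ext fun j => ?_
    have h9 := hm (sing j)
    have h10 : (Dcocone κ D₀ c₀ s h).ι.app (sing j) = h j := rfl
    rw [h10] at h9
    rw [hc₀.fac, hψapp, ← hgh j]
    exact (Category.assoc _ _ _).trans (congrArg (g j ≫ ·) h9)

end lemmas

end Aux

/-- If every morphism from a κ-presentable object into `E` factors through an object of
the set `S` of κ-presentable objects, then `E` is a κ-directed colimit of objects of `S`. -/
theorem colimit_of_factorization
    (κ : Cardinal.{v}) (hκ : κ.IsRegular)
    (K : Type u) [Category.{v} K] (hK : IsCardinalAccessible κ K)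
    (S : Set K) (hS : ∀ X ∈ S, IsCardinalPresentableObj κ X)
    (E : K)
    (hfact : ∀ T : K, IsCardinalPresentableObj κ T → ∀ f : T ⟶ E,
      ∃ s ∈ S, ∃ (g : T ⟶ s) (h : s ⟶ E), g ≫ h = f) :
    Nonempty (DirColimPresentation κ S E) := by
  obtain ⟨hcolim, S₀, hS₀small, hS₀pres, hpresent⟩ := hK
  obtain ⟨pres⟩ := hpresent E
  obtain ⟨J₀, hdir, D₀, hmem, c₀, hpt, hcolimE⟩ := pres
  revert hpt
  intro hpt
  subst E
  have hDpres : ∀ j : J₀, IsCardinalPresentableObj κ (D₀.obj j) :=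
    fun j => hS₀pres _ (hmem j)
  choose s hsS g h hgh using fun j : J₀ => hfact _ (hDpres j) (c₀.ι.app j)
  have hpres_s : ∀ j, IsCardinalPresentableObj κ (s j) := fun j => hS _ (hsS j)
  choose φ uu huu using fun j : J₀ =>
    acc_exists_factor κ D₀ c₀ hκ hdir hcolimE (hpres_s j) (h j)
  exact acc_main κ D₀ c₀ s h g φ uu hκ hdir hcolimE hgh huu hpres_s hDpres S hsS
end

section
/- Let κ be a regular cardinal, K a κ-accessible category, and S a set of κ-presentable objects of K closed under the property of being κ-presentable. Then the full subcategory of K consisting of all κ-directed colimits of objects from S is closed under κ-directed colimits in K, is itself a κ-accessible category, and its κ-presentable objects are precisely the retracts of objects of S. -/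
open CategoryTheory Limits Opposite

universe w v u u₂ v₂

namespace ACCaux

variable {κ : Cardinal.{v}}

lemma dir_nonempty {J : Type v} [Preorder J] (hκ : κ.IsRegular)
    (hJ : IsCardinalDirectedPre κ J) : Nonempty J := by
  obtain ⟨j, -⟩ := hJ ∅ (by
    rw [Cardinal.mk_emptyCollection]
    exact Cardinal.aleph0_pos.trans_le hκ.aleph0_le)
  exact ⟨j⟩

lemma dir_isDirected {J : Type v} [Preorder J] (hκ : κ.IsRegular)
    (hJ : IsCardinalDirectedPre κ J) : IsDirected J (· ≤ ·) := by
  constructor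
  intro a b
  obtain ⟨j, hj⟩ := hJ {a, b} ((Set.toFinite _).lt_aleph0.trans_le hκ.aleph0_le)
  exact ⟨j, hj a (by simp), hj b (by simp)⟩

lemma dir_bound {J : Type v} [Preorder J] (hJ : IsCardinalDirectedPre κ J)
    {ι : Type v} (hι : Cardinal.mk ι < κ) (f : ι → J) : ∃ j, ∀ i, f i ≤ j := by
  obtain ⟨j, hj⟩ := hJ (Set.range f) (lt_of_le_of_lt Cardinal.mk_range_le hι)
  exact ⟨j, fun i => hj _ ⟨i, rfl⟩⟩

section hom
variable {K : Type u} [Category.{v} K]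

/-- factorization through a directed colimit, for a presentable object -/
lemma fac_through {J : Type v} [Preorder J] (hκ : κ.IsRegular) (hJ : IsCardinalDirectedPre κ J)
    {D : J ⥤ K} {c : Cocone D} (hc : IsColimit c) {A : K}
    (hA : IsCardinalPresentableObj κ A) (f : A ⟶ c.pt) :
    ∃ (j : J) (g : A ⟶ D.obj j), g ≫ c.ι.app j = f := by
  obtain ⟨pres⟩ := hA J hJ
  have hc' := isColimitOfPreserves (coyoneda.obj (op A)) hc
  obtain ⟨j, y, hy⟩ := Types.jointly_surjective_of_isColimit hc' f
  exact ⟨j, y, hy⟩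

/-- equalization in a directed colimit, for a presentable object -/
lemma eq_through {J : Type v} [Preorder J] (hκ : κ.IsRegular) (hJ : IsCardinalDirectedPre κ J)
    {D : J ⥤ K} {c : Cocone D} (hc : IsColimit c) {A : K}
    (hA : IsCardinalPresentableObj κ A) {j : J} {g₁ g₂ : A ⟶ D.obj j}
    (h : g₁ ≫ c.ι.app j = g₂ ≫ c.ι.app j) :
    ∃ (j' : J) (hjj' : j ≤ j'), g₁ ≫ D.map hjj'.hom = g₂ ≫ D.map hjj'.hom := by
  obtain ⟨pres⟩ := hA J hJ
  have : Nonempty J := dir_nonempty hκ hJ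
  have : IsDirected J (· ≤ ·) := dir_isDirected hκ hJ
  have hc' := isColimitOfPreserves (coyoneda.obj (op A)) hc
  have h' : (((coyoneda.obj (op A)).mapCocone c).ι.app j) g₁
      = (((coyoneda.obj (op A)).mapCocone c).ι.app j) g₂ := h
  rw [Types.FilteredColimit.isColimit_eq_iff _ hc'] at h'
  obtain ⟨k, f, g, hfg⟩ := h'
  refine ⟨k, f.le, ?_⟩
  have : f = g := Subsingleton.elim f g
  subst this
  have : f = (f.le).hom := Subsingleton.elim _ _
  rw [← this]
  exact hfg

end hom

end ACCaux

namespace ACCaux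
variable {κ : Cardinal.{v}} {K : Type u} [Category.{v} K] {S : Set K}

/-- package a colimit cocone into a presentation, retargeting the point along an iso -/
def mkPres {X : K} {J : Type v} [Preorder J] (dir : IsCardinalDirectedPre κ J)
    (D : J ⥤ K) (mem : ∀ j, D.obj j ∈ S) (c : Cocone D) (hc : IsColimit c) (e : c.pt ≅ X) :
    DirColimPresentation κ S X where
  J := J
  directed := dir
  D := D
  mem := mem
  c := { pt := X
         ι := { app := fun j => c.ι.app j ≫ e.hom
                naturality := fun a b f => by
                  have := c.ι.naturality f
                  dsimp at this ⊢
                  rw [← Category.assoc, this]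
                  simp } }
  pt_eq := rfl
  isColim := IsColimit.ofIsoColimit hc (Cocones.ext e (fun j => rfl))

/-- transport a presentation along an isomorphism -/
noncomputable def presOfIso {X Y : K} (p : DirColimPresentation κ S Y) (e : Y ≅ X) :
    DirColimPresentation κ S X :=
  by letI := p.inst
     exact mkPres p.directed p.D p.mem p.c p.isColim (eqToIso p.pt_eq ≪≫ e)

/-- the trivial presentation of an object of `S` -/
noncomputable def presOfMem (hκ : κ.IsRegular) {X : K} (hX : X ∈ S) :
    DirColimPresentation κ S X where
  J := PUnit.{v+1}
  directed := fun _ _ => ⟨⟨⟩, fun _ _ => le_refl _⟩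
  D := (Functor.const _).obj X
  mem := fun _ => hX
  c := { pt := X, ι := { app := fun _ => 𝟙 X } }
  pt_eq := rfl
  isColim :=
  { desc := fun s => s.ι.app ⟨⟩
    fac := fun s j => by simpa using rfl
    uniq := fun s m hm => by simpa using hm ⟨⟩ }

end ACCaux

namespace ACCaux

section Levels
variable {κ : Cardinal.{v}}

lemma L_nonempty (hκ : κ.IsRegular) : Nonempty κ.ord.ToType := by
  rw [Ordinal.toType_nonempty_iff_ne_zero]
  simpa using (Cardinal.aleph0_pos.trans_le hκ.aleph0_le).ne'

lemma L_strict_bound (hκ : κ.IsRegular) (s : Set κ.ord.ToType) (hs : Cardinal.mk s < κ) :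
    ∃ t, ∀ x ∈ s, x < t := by
  set iso := Ordinal.ToType.mk (o := κ.ord)
  set f : s → Ordinal.{v} := fun x => (iso.symm x.1).1
  have hsup : iSup f < κ.ord :=
    Cardinal.iSup_lt_ord_of_isRegular hκ hs (fun i => (iso.symm i.1).2)
  have hsucc : iSup f + 1 < κ.ord := by
    rw [Ordinal.add_one_eq_succ]; exact (Cardinal.isSuccLimit_ord hκ.aleph0_le).succ_lt hsup
  refine ⟨iso ⟨iSup f + 1, hsucc⟩, fun x hx => ?_⟩
  have : x = iso (iso.symm x) := (iso.apply_symm_apply x).symm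
  rw [this, OrderIso.lt_iff_lt]
  have h1 : f ⟨x, hx⟩ ≤ iSup f := le_ciSup (Ordinal.bddAbove_range f) ⟨x, hx⟩
  exact Subtype.mk_lt_mk.mpr (h1.trans_lt (lt_add_one _))

end Levels

/-- A two-level colimit datum. -/
structure CombData (κ : Cardinal.{v}) (K : Type u) [Category.{v} K] where
  J : Type v
  [instJ : Preorder J]
  D : J ⥤ K
  c : Cocone D
  I : J → Type v
  [instI : ∀ j, Preorder (I j)]
  A : ∀ j, (I j) ⥤ K
  lg : ∀ j, A j ⟶ (Functor.const (I j)).obj (D.obj j)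

attribute [instance] CombData.instJ CombData.instI

namespace CombData
variable {κ : Cardinal.{v}} {K : Type u} [Category.{v} K] (T : CombData κ K)

/-- the inner cocones -/
@[simps] def E (j : T.J) : Cocone (T.A j) := ⟨T.D.obj j, T.lg j⟩

/-- vertices of the combined diagram -/
structure Vert (T : CombData κ K) : Type v where
  j : T.J
  i : T.I j
  l : κ.ord.ToType

/-- leg of a vertex into the total colimit -/
def legC (v : T.Vert) : (T.A v.j).obj v.i ⟶ T.c.pt :=
  (T.lg v.j).app v.i ≫ T.c.ι.app v.j

instance : Category.{v} T.Vert where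
  Hom a b := {g : (T.A a.j).obj a.i ⟶ (T.A b.j).obj b.i // g ≫ T.legC b = T.legC a ∧ a.l ≤ b.l}
  id a := ⟨𝟙 _, by simp, le_refl _⟩
  comp f g := ⟨f.1 ≫ g.1, by rw [Category.assoc, g.2.1, f.2.1], le_trans f.2.2 g.2.2⟩

@[simp] lemma id_coe (a : T.Vert) : (𝟙 a : a ⟶ a).1 = 𝟙 _ := rfl
@[simp] lemma comp_coe {a b c' : T.Vert} (f : a ⟶ b) (g : b ⟶ c') :
    (f ≫ g).1 = f.1 ≫ g.1 := rfl
lemma hom_w {a b : T.Vert} (f : a ⟶ b) : f.1 ≫ T.legC b = T.legC a := f.2.1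
lemma hom_le {a b : T.Vert} (f : a ⟶ b) : a.l ≤ b.l := f.2.2
lemma hom_ext' {a b : T.Vert} (f g : a ⟶ b) (h : f.1 = g.1) : f = g := Subtype.ext h

/-- the combined diagram -/
@[simps] def U : T.Vert ⥤ K where
  obj v := (T.A v.j).obj v.i
  map f := f.1

/-- the combined cocone -/
@[simps] def cX : Cocone T.U where
  pt := T.c.pt
  ι := { app := fun v => T.legC v
         naturality := fun a b f => by
           dsimp
           exact (T.hom_w f).trans (Category.comp_id _).symm }

end CombData
end ACCaux

namespace ACCaux
namespace CombData
variable {κ : Cardinal.{v}} {K : Type u} [Category.{v} K] (T : CombData κ K)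

lemma level_const (k : Cocone T.U) {j : T.J} {i : T.I j} (l l' : κ.ord.ToType) :
    k.ι.app ⟨j,i,l⟩ = k.ι.app ⟨j,i,l'⟩ := by
  have key : ∀ (l l' : κ.ord.ToType), l ≤ l' →
      k.ι.app (⟨j,i,l⟩ : T.Vert) = k.ι.app ⟨j,i,l'⟩ := by
    intro l l' hll
    let m : (⟨j,i,l⟩ : T.Vert) ⟶ ⟨j,i,l'⟩ := ⟨𝟙 _, by exact (Category.id_comp _).trans rfl, hll⟩
    have h2 := k.ι.naturality m
    dsimp at h2
    rw [Category.comp_id] at h2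
    rw [← h2]
    exact Category.id_comp _
  rcases le_total l l' with h | h
  · exact key _ _ h
  · exact (key _ _ h).symm

/-- restriction of a cocone on the combined diagram to an inner diagram -/
@[simps] def kCocone (k : Cocone T.U) (l₀ : κ.ord.ToType) (j : T.J) : Cocone (T.A j) where
  pt := k.pt
  ι := { app := fun i => k.ι.app ⟨j,i,l₀⟩
         naturality := fun i i' h => by
           have cond : (T.A j).map h ≫ T.legC ⟨j,i',l₀⟩ = T.legC ⟨j,i,l₀⟩ := by
             dsimp [legC]
             rw [← Category.assoc]
             have := (T.lg j).naturality h
             dsimp at this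
             rw [Category.comp_id] at this
             rw [this]
           let m : (⟨j,i,l₀⟩ : T.Vert) ⟶ ⟨j,i',l₀⟩ := ⟨(T.A j).map h, cond, le_refl _⟩
           have h2 := k.ι.naturality m
           dsimp at h2
           rw [Category.comp_id] at h2
           dsimp
           exact h2.trans (Category.comp_id _).symm }

section IsColim

/-- the outer legs of a cocone on the combined diagram -/
noncomputable def fj (hE : ∀ j, IsColimit (T.E j)) (k : Cocone T.U) (l₀ : κ.ord.ToType) (j : T.J) :
    T.D.obj j ⟶ k.pt := (hE j).desc (T.kCocone k l₀ j)

lemma fj_fac (hE : ∀ j, IsColimit (T.E j)) (k : Cocone T.U) (l₀ : κ.ord.ToType) (j : T.J) (i : T.I j) :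
    (T.lg j).app i ≫ fj T hE k l₀ j = k.ι.app ⟨j,i,l₀⟩ := (hE j).fac _ i

lemma fj_nat (hκ : κ.IsRegular) (hdirI : ∀ j, IsCardinalDirectedPre κ (T.I j))
    (hE : ∀ j, IsColimit (T.E j))
    (hpres : ∀ j i, IsCardinalPresentableObj κ ((T.A j).obj i))
    (k : Cocone T.U) (l₀ : κ.ord.ToType) {j j' : T.J} (h : j ⟶ j') :
    T.D.map h ≫ fj T hE k l₀ j' = fj T hE k l₀ j := by
  refine (hE j).hom_ext (fun i => ?_)
  have hfac := fj_fac T hE k l₀ j i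
  -- factor (lg j).app i ≫ D.map h through the colimit E j'
  obtain ⟨i₀, q, hq⟩ := fac_through hκ (hdirI j') (hE j') (hpres j i)
    ((T.lg j).app i ≫ T.D.map h)
  -- q : (A j).obj i ⟶ (A j').obj i₀,  hq : q ≫ (lg j').app i₀ = (lg j).app i ≫ D.map h
  have cond : q ≫ T.legC ⟨j',i₀,l₀⟩ = T.legC ⟨j,i,l₀⟩ := by
    dsimp [legC]
    rw [← Category.assoc]
    have hq' : q ≫ (T.lg j').app i₀ = (T.lg j).app i ≫ T.D.map h := hq
    rw [hq', Category.assoc, T.c.w h]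
  let m : (⟨j,i,l₀⟩ : T.Vert) ⟶ ⟨j',i₀,l₀⟩ := ⟨q, cond, le_refl _⟩
  have hnat' := k.ι.naturality m
  dsimp at hnat'
  rw [Category.comp_id] at hnat'
  have hnat : q ≫ k.ι.app ⟨j',i₀,l₀⟩ = k.ι.app ⟨j,i,l₀⟩ := hnat'
  have hq' : q ≫ (T.lg j').app i₀ = (T.lg j).app i ≫ T.D.map h := hq
  calc (T.E j).ι.app i ≫ T.D.map h ≫ fj T hE k l₀ j'
      = ((T.lg j).app i ≫ T.D.map h) ≫ fj T hE k l₀ j' := by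
        dsimp [E]; rw [Category.assoc]
    _ = q ≫ (T.lg j').app i₀ ≫ fj T hE k l₀ j' := by rw [← hq', Category.assoc]
    _ = q ≫ k.ι.app ⟨j',i₀,l₀⟩ := by rw [fj_fac T hE k l₀ j' i₀]
    _ = (T.lg j).app i ≫ fj T hE k l₀ j := hnat.trans (fj_fac T hE k l₀ j i).symm
    _ = (T.E j).ι.app i ≫ fj T hE k l₀ j := rfl

/-- the combined cocone is a colimit -/
noncomputable def cXIsColimit (hκ : κ.IsRegular) (hdirI : ∀ j, IsCardinalDirectedPre κ (T.I j))
    (hc : IsColimit T.c) (hE : ∀ j, IsColimit (T.E j))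
    (hpres : ∀ j i, IsCardinalPresentableObj κ ((T.A j).obj i)) : IsColimit T.cX := by
  let l₀ : κ.ord.ToType := Classical.choice (L_nonempty hκ)
  exact
  { desc := fun k => hc.desc
      { pt := k.pt
        ι := { app := fun j => fj T hE k l₀ j
               naturality := fun j j' h => by
                 dsimp
                 rw [Category.comp_id]
                 exact fj_nat T hκ hdirI hE hpres k l₀ h } }
    fac := fun k v => by
      obtain ⟨j, i, l⟩ := v
      have h1 : T.cX.ι.app ⟨j,i,l⟩ = (T.lg j).app i ≫ T.c.ι.app j := rfl
      exact (Category.assoc ((T.lg j).app i) (T.c.ι.app j) _).trans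
        ((congrArg (fun z => (T.lg j).app i ≫ z) (hc.fac _ j)).trans
          ((fj_fac T hE k l₀ j i).trans (T.level_const k l₀ l)))
    uniq := fun k m hm => by
      refine hc.hom_ext (fun j => ?_)
      rw [hc.fac]
      dsimp
      refine (hE j).hom_ext (fun i => ?_)
      have h3 : (T.E j).ι.app i ≫ T.c.ι.app j ≫ m = k.ι.app ⟨j,i,l₀⟩ := by
        have h4 := hm ⟨j,i,l₀⟩
        have h5 : T.cX.ι.app ⟨j,i,l₀⟩ ≫ m
            = (T.E j).ι.app i ≫ T.c.ι.app j ≫ m := by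
          dsimp [cX, legC, E]
          exact Category.assoc _ _ _
        rw [← h4, h5]
      calc (T.E j).ι.app i ≫ T.c.ι.app j ≫ m
          = (T.lg j).app i ≫ fj T hE k l₀ j := h3.trans (fj_fac T hE k l₀ j i).symm
        _ = (T.E j).ι.app i ≫ fj T hE k l₀ j := rfl }

end IsColim
end CombData
end ACCaux

namespace ACCaux
namespace CombData
variable {κ : Cardinal.{v}} {K : Type u} [Category.{v} K] (T : CombData κ K)

lemma map_trans {J' : Type v} [Preorder J'] (F : J' ⥤ K) {a b c' : J'}
    (h1 : a ≤ b) (h2 : b ≤ c') :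
    F.map h1.hom ≫ F.map h2.hom = F.map (h1.trans h2).hom := by
  rw [← F.map_comp]
  congr 1

lemma lg_w (j : T.J) {i i' : T.I j} (h : i ≤ i') :
    (T.A j).map h.hom ≫ (T.lg j).app i' = (T.lg j).app i := by
  have := (T.lg j).naturality h.hom
  dsimp at this
  rw [Category.comp_id] at this
  exact this

/-- Every `< κ`-sized graph in the combined diagram admits a strictly fresh cocone. -/
lemma graph_cocone (hκ : κ.IsRegular) (hJdir : IsCardinalDirectedPre κ T.J)
    (hdirI : ∀ j, IsCardinalDirectedPre κ (T.I j))
    (hc : IsColimit T.c) (hE : ∀ j, IsColimit (T.E j))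
    (hpres : ∀ j i, IsCardinalPresentableObj κ ((T.A j).obj i))
    (O : Set T.Vert) (M : Set (Σ a : T.Vert, Σ b : T.Vert, a ⟶ b))
    (hO : Cardinal.mk O < κ) (hM : Cardinal.mk M < κ)
    (hMO : ∀ m ∈ M, m.1 ∈ O ∧ m.2.1 ∈ O) :
    ∃ (t : T.Vert) (ℓ : (o : T.Vert) → o ∈ O → (o ⟶ t)),
      (∀ o (_ : o ∈ O), o.l < t.l) ∧
      (∀ m (hm : m ∈ M), m.2.2 ≫ ℓ m.2.1 (hMO m hm).2 = ℓ m.1 (hMO m hm).1) := by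
  classical
  letI : IsDirected T.J (· ≤ ·) := dir_isDirected hκ hJdir
  -- step 1 : bound the outer indices
  obtain ⟨j₁, hj₁⟩ := dir_bound hJdir hO (fun o : O => o.1.j)
  set φ : (o : O) → ((T.A o.1.j).obj o.1.i ⟶ T.D.obj j₁) :=
    fun o => (T.lg o.1.j).app o.1.i ≫ T.D.map (hj₁ o).hom with hφ
  have hφc : ∀ o : O, φ o ≫ T.c.ι.app j₁ = T.legC o.1 := by
    intro o
    dsimp [φ, legC]
    rw [Category.assoc, T.c.w]
  -- step 2 : factor through the inner colimit at j₁
  have fac1 : ∀ o : O, ∃ (i' : T.I j₁) (g : (T.A o.1.j).obj o.1.i ⟶ (T.A j₁).obj i'),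
      g ≫ (T.lg j₁).app i' = φ o := by
    intro o
    obtain ⟨i'', g, hg⟩ := fac_through hκ (hdirI j₁) (hE j₁) (hpres o.1.j o.1.i) (φ o)
    exact ⟨i'', g, hg⟩
  choose i' g hg using fac1
  obtain ⟨i₂, hi₂⟩ := dir_bound (hdirI j₁) hO i'
  set G : (o : O) → ((T.A o.1.j).obj o.1.i ⟶ (T.A j₁).obj i₂) :=
    fun o => g o ≫ (T.A j₁).map (hi₂ o).hom with hGdef
  have hG : ∀ o : O, G o ≫ (T.lg j₁).app i₂ = φ o := by
    intro o
    dsimp [G]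
    rw [Category.assoc, T.lg_w j₁ (hi₂ o), hg]
  have hGc : ∀ o : O, G o ≫ (T.lg j₁).app i₂ ≫ T.c.ι.app j₁ = T.legC o.1 := by
    intro o
    rw [← Category.assoc, hG, hφc]
  -- step 3 : equalize the edges in the outer colimit
  have eq1 : ∀ m : M, ∃ (j' : T.J) (h : j₁ ≤ j'),
      (m.1.2.2.1 ≫ G ⟨m.1.2.1, (hMO m.1 m.2).2⟩ ≫ (T.lg j₁).app i₂) ≫ T.D.map h.hom
      = (G ⟨m.1.1, (hMO m.1 m.2).1⟩ ≫ (T.lg j₁).app i₂) ≫ T.D.map h.hom := by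
    intro m
    refine eq_through hκ hJdir hc (hpres m.1.1.j m.1.1.i) ?_
    simp only [Category.assoc]
    rw [hGc ⟨m.1.2.1, (hMO m.1 m.2).2⟩, hGc ⟨m.1.1, (hMO m.1 m.2).1⟩]
    exact T.hom_w m.1.2.2
  choose jm hjm heqm using eq1
  obtain ⟨j₂', hj₂'⟩ := dir_bound hJdir hM jm
  obtain ⟨j₂, hj₂a, hj₂b⟩ := directed_of (· ≤ ·) j₂' j₁
  have hj₁₂ : j₁ ≤ j₂ := hj₂b
  have eq2 : ∀ m : M,
      (m.1.2.2.1 ≫ G ⟨m.1.2.1, (hMO m.1 m.2).2⟩ ≫ (T.lg j₁).app i₂) ≫ T.D.map hj₁₂.hom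
      = (G ⟨m.1.1, (hMO m.1 m.2).1⟩ ≫ (T.lg j₁).app i₂) ≫ T.D.map hj₁₂.hom := by
    intro m
    have h1 : jm m ≤ j₂ := (hj₂' m).trans hj₂a
    have h2 : T.D.map (hjm m).hom ≫ T.D.map h1.hom = T.D.map hj₁₂.hom :=
      (map_trans T.D _ _).trans (by congr 1)
    rw [← h2]
    have hm' := heqm m
    simp only [← Category.assoc] at hm' ⊢
    rw [hm']
  -- step 4 : factor into the inner colimit at j₂ and equalize edges there
  set ψ : (T.A j₁).obj i₂ ⟶ T.D.obj j₂ := (T.lg j₁).app i₂ ≫ T.D.map hj₁₂.hom with hψ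
  obtain ⟨i₃, h0, hh0⟩ := fac_through hκ (hdirI j₂) (hE j₂) (hpres j₁ i₂) ψ
  have hh0' : h0 ≫ (T.lg j₂).app i₃ = ψ := hh0
  have eq3 : ∀ m : M, ∃ (i'' : T.I j₂) (h : i₃ ≤ i''),
      (m.1.2.2.1 ≫ G ⟨m.1.2.1, (hMO m.1 m.2).2⟩ ≫ h0) ≫ (T.A j₂).map h.hom
      = (G ⟨m.1.1, (hMO m.1 m.2).1⟩ ≫ h0) ≫ (T.A j₂).map h.hom := by
    intro m
    refine eq_through hκ (hdirI j₂) (hE j₂) (hpres m.1.1.j m.1.1.i) ?_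
    have := eq2 m
    have e : h0 ≫ (T.E j₂).ι.app i₃ = (T.lg j₁).app i₂ ≫ T.D.map hj₁₂.hom := hh0'
    simp only [Category.assoc] at this ⊢
    rw [e]
    exact this
  choose im him heqim using eq3
  obtain ⟨i₄', hi₄'⟩ := dir_bound (hdirI j₂) hM im
  letI : IsDirected (T.I j₂) (· ≤ ·) := dir_isDirected hκ (hdirI j₂)
  obtain ⟨i₄, hi₄a, hi₄b⟩ := directed_of (· ≤ ·) i₄' i₃
  -- step 5 : fresh level
  obtain ⟨l', hl'⟩ := L_strict_bound hκ (Set.range (fun o : O => o.1.l))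
    (lt_of_le_of_lt Cardinal.mk_range_le (by simpa using hO))
  have hlevel : ∀ o (ho : o ∈ O), o.l < l' := by
    intro o ho
    exact hl' o.l ⟨⟨o, ho⟩, rfl⟩
  have legok : ∀ o (ho : o ∈ O),
      (G ⟨o, ho⟩ ≫ h0 ≫ (T.A j₂).map hi₄b.hom) ≫ T.legC ⟨j₂, i₄, l'⟩ = T.legC o := by
    intro o ho
    have e2 : T.legC (⟨j₂, i₄, l'⟩ : T.Vert) = (T.lg j₂).app i₄ ≫ T.c.ι.app j₂ := rfl
    rw [e2]
    simp only [Category.assoc]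
    rw [reassoc_of% (T.lg_w j₂ hi₄b), reassoc_of% hh0', hψ]
    simp only [Category.assoc]
    rw [T.c.w hj₁₂.hom]
    exact hGc ⟨o, ho⟩
  refine ⟨⟨j₂, i₄, l'⟩,
    fun o ho => ⟨G ⟨o, ho⟩ ≫ h0 ≫ (T.A j₂).map hi₄b.hom, legok o ho,
      le_of_lt (hlevel o ho)⟩, hlevel, ?_⟩
  intro m hm
  apply T.hom_ext'
  dsimp
  have h1 : i₃ ≤ im ⟨m, hm⟩ := him ⟨m, hm⟩
  have h2 : im ⟨m, hm⟩ ≤ i₄ := (hi₄' ⟨m, hm⟩).trans hi₄a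
  have e5 : (T.A j₂).map h1.hom ≫ (T.A j₂).map h2.hom = (T.A j₂).map hi₄b.hom :=
    (map_trans _ _ _).trans (by congr 1)
  have hkey := heqim ⟨m, hm⟩
  simp only [Category.assoc] at hkey
  calc m.2.2.1 ≫ G ⟨m.2.1, _⟩ ≫ h0 ≫ (T.A j₂).map hi₄b.hom
      = m.2.2.1 ≫ G ⟨m.2.1, _⟩ ≫ h0 ≫ (T.A j₂).map h1.hom ≫ (T.A j₂).map h2.hom := by
        rw [e5]
    _ = (G ⟨m.1, _⟩ ≫ h0 ≫ (T.A j₂).map h1.hom) ≫ (T.A j₂).map h2.hom := by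
        simp only [← Category.assoc] at hkey ⊢
        rw [hkey]
    _ = G ⟨m.1, _⟩ ≫ h0 ≫ (T.A j₂).map hi₄b.hom := by
        simp only [Category.assoc]
        rw [e5]

end CombData
end ACCaux

namespace ACCaux
namespace CombData
variable {κ : Cardinal.{v}} {K : Type u} [Category.{v} K] (T : CombData κ K)

/-- triples recording a morphism of the combined diagram -/
abbrev Mor := Σ a : T.Vert, Σ b : T.Vert, a ⟶ b

@[simp] lemma mor_fst (a b : T.Vert) (g : a ⟶ b) : (⟨a, b, g⟩ : T.Mor).1 = a := rfl

lemma mk3_fst {a b a' b' : T.Vert} {g : a ⟶ b} {g' : a' ⟶ b'}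
    (h : (⟨a, b, g⟩ : T.Mor) = ⟨a', b', g'⟩) : a = a' := congrArg Sigma.fst h

lemma mk3_snd {a b a' b' : T.Vert} {g : a ⟶ b} {g' : a' ⟶ b'}
    (h : (⟨a, b, g⟩ : T.Mor) = ⟨a', b', g'⟩) : b = b' := by
  have := congrArg (fun x : T.Mor => x.2.1) h
  simpa using this

lemma mk3_inj {a b : T.Vert} {g g' : a ⟶ b}
    (h : (⟨a, b, g⟩ : T.Mor) = ⟨a, b, g'⟩) : g = g' := by
  simpa using h

/-- a `<κ`-small marked subgraph of the combined diagram with a strict terminal vertex -/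
structure Elt (T : CombData κ K) : Type v where
  O : Set T.Vert
  M : Set T.Mor
  t : T.Vert
  ht : t ∈ O
  hO : Cardinal.mk O < κ
  hM : Cardinal.mk M < κ
  hMO : ∀ m ∈ M, m.1 ∈ O ∧ m.2.1 ∈ O
  hid : (⟨t, t, 𝟙 t⟩ : T.Mor) ∈ M
  huniq : ∀ o ∈ O, ∃! g : o ⟶ t, (⟨o, t, g⟩ : T.Mor) ∈ M
  hcomp : ∀ (a b : T.Vert) (g : a ⟶ b) (h : b ⟶ t),
    (⟨a, b, g⟩ : T.Mor) ∈ M → (⟨b, t, h⟩ : T.Mor) ∈ M → (⟨a, t, g ≫ h⟩ : T.Mor) ∈ M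

instance : Preorder (T.Elt) where
  le p q := p.O ⊆ q.O ∧ p.M ⊆ q.M
  le_refl p := ⟨subset_rfl, subset_rfl⟩
  le_trans p q r h h' := ⟨h.1.trans h'.1, h.2.trans h'.2⟩

/-- the canonical morphism to the top -/
noncomputable def toTop (p : T.Elt) {o : T.Vert} (ho : o ∈ p.O) : o ⟶ p.t :=
  (p.huniq o ho).choose

lemma toTop_mem (p : T.Elt) {o : T.Vert} (ho : o ∈ p.O) :
    (⟨o, p.t, T.toTop p ho⟩ : T.Mor) ∈ p.M := (p.huniq o ho).choose_spec.1

lemma toTop_eq (p : T.Elt) {o : T.Vert} (ho : o ∈ p.O) (g : o ⟶ p.t)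
    (hg : (⟨o, p.t, g⟩ : T.Mor) ∈ p.M) : g = T.toTop p ho :=
  (p.huniq o ho).choose_spec.2 g hg

/-- the cofinal functor from the poset of marked subgraphs -/
noncomputable def Fc : T.Elt ⥤ T.Vert where
  obj p := p.t
  map {p q} f := T.toTop q ((leOfHom f).1 p.ht)
  map_id p := by
    symm
    exact T.toTop_eq p p.ht (𝟙 p.t) p.hid
  map_comp {p q r} f g := by
    symm
    refine T.toTop_eq r ((leOfHom (f ≫ g)).1 p.ht) _ ?_
    exact r.hcomp _ _ _ _ ((leOfHom g).2 (T.toTop_mem q ((leOfHom f).1 p.ht)))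
      (T.toTop_mem r ((leOfHom g).1 q.ht))

/-- the master bound construction -/
lemma master (hκ : κ.IsRegular) (hJdir : IsCardinalDirectedPre κ T.J)
    (hdirI : ∀ j, IsCardinalDirectedPre κ (T.I j))
    (hc : IsColimit T.c) (hE : ∀ j, IsColimit (T.E j))
    (hpres : ∀ j i, IsCardinalPresentableObj κ ((T.A j).obj i))
    (O₀ : Set T.Vert) (M₀ : Set T.Mor)
    (hO₀ : Cardinal.mk O₀ < κ) (hM₀ : Cardinal.mk M₀ < κ)
    (hMO₀ : ∀ m ∈ M₀, m.1 ∈ O₀ ∧ m.2.1 ∈ O₀) :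
    ∃ (q : T.Elt) (ℓ : (o : T.Vert) → o ∈ O₀ → (o ⟶ q.t)),
      O₀ ⊆ q.O ∧ M₀ ⊆ q.M ∧
      (∀ o (ho : o ∈ O₀), (⟨o, q.t, ℓ o ho⟩ : T.Mor) ∈ q.M) ∧
      (∀ m (hm : m ∈ M₀), m.2.2 ≫ ℓ m.2.1 (hMO₀ m hm).2 = ℓ m.1 (hMO₀ m hm).1) := by
  classical
  obtain ⟨t, ℓ, hfresh, hcompat⟩ :=
    T.graph_cocone hκ hJdir hdirI hc hE hpres O₀ M₀ hO₀ hM₀ hMO₀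
  have htO₀ : t ∉ O₀ := fun h => lt_irrefl _ (hfresh t h)
  set legs : Set T.Mor := Set.range (fun o : O₀ => (⟨o.1, t, ℓ o.1 o.2⟩ : T.Mor)) with hlegs
  have hlegmem : ∀ o (ho : o ∈ O₀), (⟨o, t, ℓ o ho⟩ : T.Mor) ∈ legs :=
    fun o ho => ⟨⟨o, ho⟩, rfl⟩
  set M' : Set T.Mor := (M₀ ∪ legs) ∪ {(⟨t, t, 𝟙 t⟩ : T.Mor)} with hM'
  have hsmallM' : Cardinal.mk M' < κ := by
    refine lt_of_le_of_lt (Cardinal.mk_union_le _ _) (Cardinal.add_lt_of_lt hκ.aleph0_le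
      (lt_of_le_of_lt (Cardinal.mk_union_le _ _) (Cardinal.add_lt_of_lt hκ.aleph0_le hM₀
        (lt_of_le_of_lt Cardinal.mk_range_le (by simpa using hO₀)))) ?_)
    simpa using (Cardinal.one_lt_aleph0.trans_le hκ.aleph0_le)
  have hsmallO' : Cardinal.mk (insert t O₀ : Set T.Vert) < κ := by
    rw [Set.insert_eq]
    refine lt_of_le_of_lt (Cardinal.mk_union_le _ _) (Cardinal.add_lt_of_lt hκ.aleph0_le ?_ hO₀)
    simpa using (Cardinal.one_lt_aleph0.trans_le hκ.aleph0_le)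
  -- analyze morphisms into `t` inside `M'`
  have target_t : ∀ (o : T.Vert) (g : o ⟶ t), (⟨o, t, g⟩ : T.Mor) ∈ M' →
      (∃ (ho : o ∈ O₀), g = ℓ o ho) ∨ (∃ (h : o = t), HEq g (𝟙 t)) := by
    intro o g hg
    rcases hg with (h | h) | h
    · exact absurd (hMO₀ _ h).2 htO₀
    · obtain ⟨o₀, h₀⟩ := h
      have h1 : o₀.1 = o := T.mk3_fst h₀
      left
      refine ⟨h1 ▸ o₀.2, ?_⟩
      subst h1
      exact (T.mk3_inj h₀).symm
    · have h1 : o = t := T.mk3_fst h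
      subst h1
      exact Or.inr ⟨rfl, heq_of_eq (T.mk3_inj h)⟩
  refine ⟨{ O := insert t O₀
            M := M'
            t := t
            ht := Set.mem_insert _ _
            hO := hsmallO'
            hM := hsmallM'
            hMO := ?_
            hid := Or.inr rfl
            huniq := ?_
            hcomp := ?_ }, ℓ, Set.subset_insert _ _, fun m hm => Or.inl (Or.inl hm),
      fun o ho => Or.inl (Or.inr (hlegmem o ho)), hcompat⟩
  · rintro m ((h | h) | h)
    · exact ⟨Set.mem_insert_of_mem _ (hMO₀ _ h).1, Set.mem_insert_of_mem _ (hMO₀ _ h).2⟩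
    · obtain ⟨o₀, h₀⟩ := h
      constructor
      · rw [← T.mk3_fst h₀]
        exact Set.mem_insert_of_mem _ o₀.2
      · rw [← T.mk3_snd h₀]
        exact Set.mem_insert _ _
    · rw [Set.mem_singleton_iff] at h
      subst h
      exact ⟨Set.mem_insert _ _, Set.mem_insert _ _⟩
  · rintro o (rfl | ho)
    · refine ⟨𝟙 o, Or.inr rfl, ?_⟩
      intro g' hg'
      rcases target_t o g' hg' with ⟨ho, _⟩ | ⟨_, hh⟩
      · exact absurd ho htO₀
      · exact eq_of_heq hh
    · refine ⟨ℓ o ho, Or.inl (Or.inr (hlegmem o ho)), ?_⟩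
      intro g' hg'
      rcases target_t o g' hg' with ⟨ho', he⟩ | ⟨he, _⟩
      · exact he
      · exact absurd (he ▸ ho) htO₀
  · rintro a b g h hg hh
    rcases target_t b h hh with ⟨hb, rfl⟩ | ⟨rfl, hh'⟩
    · -- h is the leg of b
      rcases hg with (hg | hg) | hg
      · have := hcompat ⟨a, b, g⟩ hg
        dsimp at this
        have he : g ≫ ℓ b hb = ℓ a (hMO₀ ⟨a,b,g⟩ hg).1 := by
          convert this using 3
        rw [he]
        exact Or.inl (Or.inr (hlegmem _ _))
      · obtain ⟨o₀, h₀⟩ := hg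
        exact absurd ((T.mk3_snd h₀) ▸ hb) htO₀
      · rw [Set.mem_singleton_iff] at hg
        have hb' : b = t := by
          have := T.mk3_snd hg
          simpa using this
        exact absurd (hb' ▸ hb) htO₀
    · -- h is the identity of t
      have : g ≫ h = g := by rw [eq_of_heq hh', Category.comp_id]
      rw [this]
      exact hg

end CombData
end ACCaux

namespace ACCaux
namespace CombData
variable {κ : Cardinal.{v}} {K : Type u} [Category.{v} K] (T : CombData κ K)

section Main
variable (hκ : κ.IsRegular) (hJdir : IsCardinalDirectedPre κ T.J)
    (hdirI : ∀ j, IsCardinalDirectedPre κ (T.I j))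
    (hc : IsColimit T.c) (hE : ∀ j, IsColimit (T.E j))
    (hpres : ∀ j i, IsCardinalPresentableObj κ ((T.A j).obj i))

/-- the singleton element -/
lemma singleton_elt (hκ : κ.IsRegular) (d : T.Vert) :
    ∃ p : T.Elt, p.t = d ∧ p.O = {d} := by
  have h1 : (1 : Cardinal.{v}) < κ := Cardinal.one_lt_aleph0.trans_le hκ.aleph0_le
  refine ⟨{ O := {d}
            M := {(⟨d, d, 𝟙 d⟩ : T.Mor)}
            t := d
            ht := rfl
            hO := by simpa using h1
            hM := by simpa using h1
            hMO := by rintro m rfl; exact ⟨rfl, rfl⟩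
            hid := rfl
            huniq := ?_
            hcomp := ?_ }, rfl, rfl⟩
  · rintro o rfl
    refine ⟨𝟙 o, rfl, ?_⟩
    intro g' hg'
    rw [Set.mem_singleton_iff] at hg'
    exact T.mk3_inj hg'
  · rintro a b g h hg hh
    rw [Set.mem_singleton_iff] at hg hh
    obtain rfl := T.mk3_fst hg
    obtain rfl := T.mk3_fst hh
    obtain rfl := T.mk3_inj hg
    obtain rfl := T.mk3_inj hh
    simpa using rfl

include hκ hJdir hdirI hc hE hpres

lemma elt_directed : IsCardinalDirectedPre κ T.Elt := by
  intro Q hQ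
  set O₀ : Set T.Vert := ⋃ p : Q, p.1.O with hO₀def
  set M₀ : Set T.Mor := ⋃ p : Q, p.1.M with hM₀def
  have hO₀ : Cardinal.mk O₀ < κ :=
    lt_of_le_of_lt Cardinal.mk_iUnion_le_sum_mk
      (Cardinal.sum_lt_of_isRegular hκ (by simpa using hQ) (fun p => p.1.hO))
  have hM₀ : Cardinal.mk M₀ < κ :=
    lt_of_le_of_lt Cardinal.mk_iUnion_le_sum_mk
      (Cardinal.sum_lt_of_isRegular hκ (by simpa using hQ) (fun p => p.1.hM))
  have hMO₀ : ∀ m ∈ M₀, m.1 ∈ O₀ ∧ m.2.1 ∈ O₀ := by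
    rintro m hm
    obtain ⟨s, ⟨p, rfl⟩, hms⟩ := hm
    exact ⟨Set.mem_iUnion.2 ⟨p, (p.1.hMO m hms).1⟩, Set.mem_iUnion.2 ⟨p, (p.1.hMO m hms).2⟩⟩
  obtain ⟨q, ℓ, hOq, hMq, -, -⟩ :=
    T.master hκ hJdir hdirI hc hE hpres O₀ M₀ hO₀ hM₀ hMO₀
  refine ⟨q, fun p hp => ⟨?_, ?_⟩⟩
  · exact (Set.subset_iUnion (fun p : Q => p.1.O) ⟨p, hp⟩).trans hOq
  · exact (Set.subset_iUnion (fun p : Q => p.1.M) ⟨p, hp⟩).trans hMq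

lemma Fc_final : T.Fc.Final := by
  constructor
  intro d
  have hne : Nonempty (StructuredArrow d T.Fc) := by
    obtain ⟨p, hpt, -⟩ := T.singleton_elt hκ d
    exact ⟨StructuredArrow.mk (Y := p) (eqToHom (show d = T.Fc.obj p from hpt.symm))⟩
  refine CategoryTheory.isConnected_of_zigzag ?_
  intro x y
  -- build a common refinement
  set px := x.right with hpx
  set py := y.right with hpy
  set O₀ : Set T.Vert := (px.O ∪ py.O) ∪ {d} with hO₀def
  have hdO : d ∈ O₀ := Or.inr rfl
  have hxO : px.t ∈ O₀ := Or.inl (Or.inl px.ht)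
  have hyO : py.t ∈ O₀ := Or.inl (Or.inr py.ht)
  set M₀ : Set T.Mor :=
    (px.M ∪ py.M) ∪ {(⟨d, px.t, x.hom⟩ : T.Mor), (⟨d, py.t, y.hom⟩ : T.Mor)} with hM₀def
  have hsmall2 : ∀ {a b : T.Vert} {g : a ⟶ b},
      Cardinal.mk ({(⟨a,b,g⟩ : T.Mor)} : Set T.Mor) < κ := by
    intro a b g
    simpa using (Cardinal.one_lt_aleph0.trans_le hκ.aleph0_le)
  have hO₀ : Cardinal.mk O₀ < κ := by
    refine lt_of_le_of_lt (Cardinal.mk_union_le _ _) (Cardinal.add_lt_of_lt hκ.aleph0_le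
      (lt_of_le_of_lt (Cardinal.mk_union_le _ _)
        (Cardinal.add_lt_of_lt hκ.aleph0_le px.hO py.hO)) ?_)
    simpa using (Cardinal.one_lt_aleph0.trans_le hκ.aleph0_le)
  have hM₀ : Cardinal.mk M₀ < κ := by
    refine lt_of_le_of_lt (Cardinal.mk_union_le _ _) (Cardinal.add_lt_of_lt hκ.aleph0_le
      (lt_of_le_of_lt (Cardinal.mk_union_le _ _)
        (Cardinal.add_lt_of_lt hκ.aleph0_le px.hM py.hM)) ?_)
    refine lt_of_le_of_lt (Cardinal.mk_insert_le) ?_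
    exact Cardinal.add_lt_of_lt hκ.aleph0_le hsmall2
      (Cardinal.one_lt_aleph0.trans_le hκ.aleph0_le)
  have hMO₀ : ∀ m ∈ M₀, m.1 ∈ O₀ ∧ m.2.1 ∈ O₀ := by
    rintro m ((h | h) | h)
    · exact ⟨Or.inl (Or.inl (px.hMO m h).1), Or.inl (Or.inl (px.hMO m h).2)⟩
    · exact ⟨Or.inl (Or.inr (py.hMO m h).1), Or.inl (Or.inr (py.hMO m h).2)⟩
    · rcases h with h | h
      · subst h; exact ⟨hdO, hxO⟩
      · rw [Set.mem_singleton_iff] at h; subst h; exact ⟨hdO, hyO⟩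
  obtain ⟨q, ℓ, hOq, hMq, hlegq, hcompatq⟩ :=
    T.master hκ hJdir hdirI hc hE hpres O₀ M₀ hO₀ hM₀ hMO₀
  have hpxq : px ≤ q := ⟨(Set.subset_union_left.trans Set.subset_union_left).trans hOq,
    (Set.subset_union_left.trans Set.subset_union_left).trans hMq⟩
  have hpyq : py ≤ q := ⟨(Set.subset_union_right.trans Set.subset_union_left).trans hOq,
    (Set.subset_union_right.trans Set.subset_union_left).trans hMq⟩
  -- the maps to the top of q are the legs
  have hFx : T.Fc.map hpxq.hom = ℓ px.t hxO :=
    (T.toTop_eq q (hpxq.1 px.ht) _ (hlegq px.t hxO)).symm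
  have hFy : T.Fc.map hpyq.hom = ℓ py.t hyO :=
    (T.toTop_eq q (hpyq.1 py.ht) _ (hlegq py.t hyO)).symm
  have hx_edge : (⟨d, px.t, x.hom⟩ : T.Mor) ∈ M₀ := Or.inr (Or.inl rfl)
  have hy_edge : (⟨d, py.t, y.hom⟩ : T.Mor) ∈ M₀ := Or.inr (Or.inr rfl)
  have hcx : x.hom ≫ ℓ px.t hxO = ℓ d hdO := by
    have := hcompatq _ hx_edge
    exact this
  have hcy : y.hom ≫ ℓ py.t hyO = ℓ d hdO := by
    have := hcompatq _ hy_edge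
    exact this
  set z : StructuredArrow d T.Fc := StructuredArrow.mk (Y := q) (ℓ d hdO) with hz
  have mx : x ⟶ z := StructuredArrow.homMk hpxq.hom (by
    dsimp [z]
    rw [hFx]; exact hcx)
  have my : y ⟶ z := StructuredArrow.homMk hpyq.hom (by
    dsimp [z]
    rw [hFy]; exact hcy)
  refine ⟨[z, y], ?_, by simp⟩
  constructor
  · exact Or.inl ⟨mx⟩
  · constructor
    · exact Or.inr ⟨my⟩
    · constructor

end Main
end CombData
end ACCaux

namespace ACCaux

/-- Conjunct 1: the class of `κ`-directed colimits of objects of `S` is closed under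
`κ`-directed colimits. -/
lemma combine {κ : Cardinal.{v}} (hκ : κ.IsRegular) {K : Type u} [Category.{v} K] (S : Set K)
    (hS : ∀ X ∈ S, IsCardinalPresentableObj κ X)
    {J : Type v} [Preorder J] (hJ : IsCardinalDirectedPre κ J)
    (D : J ⥤ K) (c : Cocone D) (hc : IsColimit c)
    (hP : ∀ j, Nonempty (DirColimPresentation κ S (D.obj j))) :
    Nonempty (DirColimPresentation κ S c.pt) := by
  classical
  have P : ∀ j, DirColimPresentation κ S (D.obj j) := fun j => (hP j).some
  letI instI : ∀ j, Preorder (P j).J := fun j => (P j).inst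
  let T : CombData κ K :=
  { J := J
    D := D
    c := c
    I := fun j => (P j).J
    A := fun j => (P j).D
    lg := fun j =>
      { app := fun i => (P j).c.ι.app i ≫ eqToHom (P j).pt_eq
        naturality := fun a b f => by
          have := (P j).c.ι.naturality f
          dsimp at this ⊢
          rw [← Category.assoc, this]
          simp } }
  have hdirI : ∀ j, IsCardinalDirectedPre κ (T.I j) := fun j => (P j).directed
  have hpres : ∀ j i, IsCardinalPresentableObj κ ((T.A j).obj i) :=
    fun j i => hS _ ((P j).mem i)
  have hE : ∀ j, IsColimit (T.E j) := fun j =>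
    IsColimit.ofIsoColimit (P j).isColim (Cocones.ext (eqToIso (P j).pt_eq) (fun i => by
      dsimp [CombData.E]))
  letI : T.Fc.Final := T.Fc_final hκ hJ hdirI hc hE hpres
  exact ⟨{ J := T.Elt
           directed := T.elt_directed hκ hJ hdirI hc hE hpres
           D := T.Fc ⋙ T.U
           mem := fun p => (P p.t.j).mem p.t.i
           c := T.cX.whisker T.Fc
           pt_eq := rfl
           isColim := (Functor.Final.isColimitWhiskerEquiv T.Fc T.cX).symm
             (T.cXIsColimit hκ hdirI hc hE hpres) }⟩

end ACCaux

namespace ACCaux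

section Sub
variable {κ : Cardinal.{v}} {K : Type u} [Category.{v} K] {S : Set K}

/-- reflection of colimits along the fully faithful inclusion -/
def isColimitOfMapped {J : Type v} [Preorder J]
    {D : J ⥤ ObjectProperty.FullSubcategory (fun X : K => Nonempty (DirColimPresentation κ S X))}
    (k : Cocone D)
    (hk : IsColimit ((ObjectProperty.ι _).mapCocone k)) : IsColimit k where
  desc s := ⟨hk.desc ((ObjectProperty.ι _).mapCocone s)⟩
  fac s j := ObjectProperty.hom_ext _ (hk.fac ((ObjectProperty.ι _).mapCocone s) j)
  uniq s m hm := ObjectProperty.hom_ext _ (hk.uniq ((ObjectProperty.ι _).mapCocone s) m.hom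
    (fun j => congrArg InducedCategory.Hom.hom (hm j)))

structure LiftedCC {J : Type v} [Preorder J]
    (D : J ⥤ ObjectProperty.FullSubcategory (fun X : K => Nonempty (DirColimPresentation κ S X))) where
  cocone : Cocone D
  mapIsColimit : IsColimit ((ObjectProperty.ι _).mapCocone cocone)

noncomputable def liftedCC (hκ : κ.IsRegular) (hS : ∀ X ∈ S, IsCardinalPresentableObj κ X)
    (h1 : HasCardinalDirectedColimits κ K) {J : Type v} [Preorder J]
    (hJ : IsCardinalDirectedPre κ J)
    (D : J ⥤ ObjectProperty.FullSubcategory (fun X : K => Nonempty (DirColimPresentation κ S X))) :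
    LiftedCC D := by
  have hcol : HasColimit (D ⋙ ObjectProperty.ι _) := h1 J hJ _
  let c := colimit.cocone (D ⋙ ObjectProperty.ι _)
  have hc : IsColimit c := colimit.isColimit _
  have hmem : Nonempty (DirColimPresentation κ S c.pt) :=
    combine hκ S hS hJ _ c hc (fun j => (D.obj j).2)
  refine { cocone := { pt := ⟨c.pt, hmem⟩,
                       ι := { app := fun j => ⟨c.ι.app j⟩,
                              naturality := fun a b f => ObjectProperty.hom_ext _
                                (c.ι.naturality f) } },
           mapIsColimit := IsColimit.ofIsoColimit hc (Cocones.ext (Iso.refl _) (fun j => ?_)) }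
  simp

/-- the inclusion sends colimit cocones of directed shape to colimit cocones -/
noncomputable def mapIsColimit' (hκ : κ.IsRegular) (hS : ∀ X ∈ S, IsCardinalPresentableObj κ X)
    (h1 : HasCardinalDirectedColimits κ K) {J : Type v} [Preorder J]
    (hJ : IsCardinalDirectedPre κ J)
    {D : J ⥤ ObjectProperty.FullSubcategory (fun X : K => Nonempty (DirColimPresentation κ S X))}
    (k : Cocone D) (hk : IsColimit k) :
    IsColimit ((ObjectProperty.ι _).mapCocone k) := by
  let L := liftedCC hκ hS h1 hJ D
  have hL : IsColimit L.cocone := isColimitOfMapped L.cocone L.mapIsColimit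
  exact IsColimit.ofIsoColimit L.mapIsColimit
    ((Cocones.functoriality D (ObjectProperty.ι _)).mapIso
      (IsColimit.uniqueUpToIso hL hk))

lemma map_trans' {C : Type u₂} [Category.{v₂} C] {J' : Type v} [Preorder J'] (F : J' ⥤ C)
    {a b c' : J'} (h1 : a ≤ b) (h2 : b ≤ c') :
    F.map h1.hom ≫ F.map h2.hom = F.map (h1.trans h2).hom := by
  rw [← F.map_comp]
  congr 1

/-- presentability in `K` gives presentability in the full subcategory -/
lemma presSub (hκ : κ.IsRegular) (hS : ∀ X ∈ S, IsCardinalPresentableObj κ X)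
    (h1 : HasCardinalDirectedColimits κ K)
    {X : ObjectProperty.FullSubcategory (fun X : K => Nonempty (DirColimPresentation κ S X))}
    (hX : IsCardinalPresentableObj κ X.obj) : IsCardinalPresentableObj κ X := by
  intro J inst hJ
  letI : IsDirected J (· ≤ ·) := dir_isDirected hκ hJ
  refine ⟨⟨fun {D} => ⟨fun {k} hk => ⟨?_⟩⟩⟩⟩
  have h2 := mapIsColimit' hκ hS h1 hJ k hk
  refine Types.FilteredColimit.isColimitOf _ _ ?_ ?_
  · intro x
    obtain ⟨j, g, hg⟩ := fac_through hκ hJ h2 hX x.hom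
    exact ⟨j, ⟨g⟩, ObjectProperty.hom_ext _ hg.symm⟩
  · intro i j xi xj h
    obtain ⟨j₀, hij₀, hjj₀⟩ := directed_of (· ≤ ·) i j
    have h' : xi ≫ k.ι.app i = xj ≫ k.ι.app j := h
    have hw1 : (xi ≫ D.map hij₀.hom) ≫ k.ι.app j₀
        = (xj ≫ D.map hjj₀.hom) ≫ k.ι.app j₀ := by
      rw [Category.assoc, k.w, Category.assoc, k.w]
      exact h'
    obtain ⟨j₁, hj₁, heq⟩ := eq_through hκ hJ h2 hX (congrArg InducedCategory.Hom.hom hw1)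
    refine ⟨j₁, (hij₀.trans hj₁).hom, (hjj₀.trans hj₁).hom, ?_⟩
    show xi ≫ D.map (hij₀.trans hj₁).hom = xj ≫ D.map (hjj₀.trans hj₁).hom
    have heq' : (xi ≫ D.map hij₀.hom) ≫ D.map hj₁.hom
        = (xj ≫ D.map hjj₀.hom) ≫ D.map hj₁.hom := ObjectProperty.hom_ext _ heq
    rw [Category.assoc, Category.assoc, map_trans' D hij₀ hj₁, map_trans' D hjj₀ hj₁] at heq'
    exact heq'

/-- retracts of presentable objects are presentable -/
lemma pres_of_retract (hκ : κ.IsRegular) {X s : K}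
    (hs : IsCardinalPresentableObj κ s) (i : X ⟶ s) (r : s ⟶ X)
    (hir : i ≫ r = 𝟙 X) : IsCardinalPresentableObj κ X := by
  intro J inst hJ
  letI : IsDirected J (· ≤ ·) := dir_isDirected hκ hJ
  refine ⟨⟨fun {D} => ⟨fun {k} hk => ⟨?_⟩⟩⟩⟩
  refine Types.FilteredColimit.isColimitOf _ _ ?_ ?_
  · intro x
    obtain ⟨j, g, hg⟩ := fac_through hκ hJ hk hs (r ≫ x)
    refine ⟨j, i ≫ g, ?_⟩
    have : (i ≫ g) ≫ k.ι.app j = x := by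
      rw [Category.assoc, hg, ← Category.assoc, hir, Category.id_comp]
    exact this.symm
  · intro a b xa xb h
    obtain ⟨j₀, ha₀, hb₀⟩ := directed_of (· ≤ ·) a b
    have h' : xa ≫ k.ι.app a = xb ≫ k.ι.app b := h
    have hw1 : ((r ≫ xa) ≫ D.map ha₀.hom) ≫ k.ι.app j₀
        = ((r ≫ xb) ≫ D.map hb₀.hom) ≫ k.ι.app j₀ := by
      simp only [Category.assoc, Cocone.w]
      exact congrArg (fun z => r ≫ z) h'
    obtain ⟨j₁, hj₁, heq⟩ := eq_through hκ hJ hk hs hw1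
    refine ⟨j₁, (ha₀.trans hj₁).hom, (hb₀.trans hj₁).hom, ?_⟩
    show xa ≫ D.map (ha₀.trans hj₁).hom = xb ≫ D.map (hb₀.trans hj₁).hom
    calc xa ≫ D.map (ha₀.trans hj₁).hom
        = (i ≫ r) ≫ xa ≫ D.map (ha₀.trans hj₁).hom := by
          rw [hir, Category.id_comp]
      _ = i ≫ ((r ≫ xa) ≫ D.map ha₀.hom) ≫ D.map hj₁.hom := by
          rw [← map_trans' D ha₀ hj₁]
          simp only [Category.assoc]
      _ = i ≫ ((r ≫ xb) ≫ D.map hb₀.hom) ≫ D.map hj₁.hom := by rw [heq]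
      _ = (i ≫ r) ≫ xb ≫ D.map (hb₀.trans hj₁).hom := by
          rw [← map_trans' D hb₀ hj₁]
          simp only [Category.assoc]
      _ = xb ≫ D.map (hb₀.trans hj₁).hom := by
          rw [hir, Category.id_comp]

end Sub
end ACCaux

namespace ACCaux

section Retract
variable {κ : Cardinal.{v}} {K : Type u} [Category.{v} K]

/-- a presentable object which is a directed colimit of objects of `S'` is a retract
of an object of `S'` -/
lemma retract_of_pres (hκ : κ.IsRegular) {S' : Set K} {X : K}
    (p : DirColimPresentation κ S' X) (hX : IsCardinalPresentableObj κ X) :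
    ∃ s ∈ S', ∃ (i : X ⟶ s) (r : s ⟶ X), i ≫ r = 𝟙 X := by
  classical
  let q := presOfIso p (Iso.refl X)
  letI := q.inst
  obtain ⟨pres⟩ := hX q.J q.directed
  have h3 := isColimitOfPreserves (coyoneda.obj (op X)) q.isColim
  have hpt : q.c.pt = X := q.pt_eq
  obtain ⟨j, y, hy⟩ := Types.jointly_surjective_of_isColimit h3
    (show ((coyoneda.obj (op X)).mapCocone q.c).pt from eqToHom hpt.symm)
  refine ⟨q.D.obj j, q.mem j, y, q.c.ι.app j ≫ eqToHom hpt, ?_⟩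
  have hy' : y ≫ q.c.ι.app j = eqToHom hpt.symm := hy
  rw [← Category.assoc, hy']
  simp

/-- two splittings of the same idempotent are isomorphic -/
lemma split_iso {X Y tX tY : K} (iX : X ⟶ tX) (rX : tX ⟶ X) (hX : iX ≫ rX = 𝟙 X)
    (iY : Y ⟶ tY) (rY : tY ⟶ Y) (hY : iY ≫ rY = 𝟙 Y)
    (ht : tX = tY) (he : HEq (rX ≫ iX) (rY ≫ iY)) : Nonempty (X ≅ Y) := by
  subst ht
  have he' : rX ≫ iX = rY ≫ iY := eq_of_heq he
  refine ⟨{ hom := iX ≫ rY, inv := iY ≫ rX, hom_inv_id := ?_, inv_hom_id := ?_ }⟩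
  · rw [Category.assoc, ← Category.assoc rY, ← he', Category.assoc, hX, Category.comp_id, hX]
  · rw [Category.assoc, ← Category.assoc rX, he', Category.assoc, hY, Category.comp_id, hY]

/-- a small set of representatives of `S` up to isomorphism -/
lemma exists_small_reps (hκ : κ.IsRegular) (hK : IsCardinalAccessible κ K)
    (S : Set K) (hS : ∀ X ∈ S, IsCardinalPresentableObj κ X) :
    ∃ S₀ : Set K, S₀ ⊆ S ∧ Small.{v} S₀ ∧ ∀ s ∈ S, ∃ s₀ ∈ S₀, Nonempty (s ≅ s₀) := by
  classical
  obtain ⟨h1, T₀, hsmall, hpresT, hdense⟩ := hK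
  have hret : ∀ s : S, ∃ (t : K) (_ : t ∈ T₀) (i : s.1 ⟶ t) (r : t ⟶ s.1),
      i ≫ r = 𝟙 s.1 := by
    intro s
    obtain ⟨p⟩ := hdense s.1
    obtain ⟨t, htm, i, r, hir⟩ := retract_of_pres hκ p (hS s.1 s.2)
    exact ⟨t, htm, i, r, hir⟩
  choose t ht iS rS hir using hret
  let C := Σ t' : T₀, (t'.1 ⟶ t'.1)
  let code : S → C := fun s => ⟨⟨t s, ht s⟩, rS s ≫ iS s⟩
  haveI : Small.{v} T₀ := hsmall
  haveI : Small.{v} C := small_sigma _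
  haveI : Small.{v} (Set.range code) := small_subtype _ _
  let pick : Set.range code → S := fun v => v.2.choose
  have hpick : ∀ v : Set.range code, code (pick v) = v.1 := fun v => v.2.choose_spec
  refine ⟨Set.range (fun v : Set.range code => (pick v).1), ?_, small_range _, ?_⟩
  · rintro x ⟨v, rfl⟩
    exact (pick v).2
  · intro s hs
    let v : Set.range code := ⟨code ⟨s, hs⟩, ⟨_, rfl⟩⟩
    refine ⟨(pick v).1, ⟨v, rfl⟩, ?_⟩
    have hcode : code (pick v) = code ⟨s, hs⟩ := hpick v
    have hcode' : (⟨⟨t (pick v), ht (pick v)⟩, rS (pick v) ≫ iS (pick v)⟩ : C)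
        = ⟨⟨t ⟨s, hs⟩, ht ⟨s, hs⟩⟩, rS ⟨s, hs⟩ ≫ iS ⟨s, hs⟩⟩ := hcode
    obtain ⟨hfst, hsnd⟩ := Sigma.ext_iff.mp hcode'
    obtain ⟨e⟩ := split_iso (iS ⟨s, hs⟩) (rS ⟨s, hs⟩) (hir ⟨s, hs⟩)
      (iS (pick v)) (rS (pick v)) (hir (pick v))
      (congrArg Subtype.val hfst).symm (by
        refine HEq.symm ?_
        exact hsnd)
    exact ⟨e⟩

end Retract
end ACCaux

namespace ACCaux

section Lift
variable {κ : Cardinal.{v}} {K : Type u} [Category.{v} K] {S : Set K}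

/-- every object of the subcategory is a directed colimit (in the subcategory) of
objects isomorphic to representatives -/
lemma presSubRep (hκ : κ.IsRegular) (S₀ : Set K) (hsub : S₀ ⊆ S)
    (hrep : ∀ s ∈ S, ∃ s₀ ∈ S₀, Nonempty (s ≅ s₀))
    (X : ObjectProperty.FullSubcategory (fun X : K => Nonempty (DirColimPresentation κ S X))) :
    Nonempty (DirColimPresentation κ
      {Y : ObjectProperty.FullSubcategory (fun X : K => Nonempty (DirColimPresentation κ S X)) | Y.obj ∈ S₀}
      X) := by
  classical
  obtain ⟨p0⟩ := X.2
  let p := presOfIso p0 (Iso.refl X.obj)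
  letI := p.inst
  have hpt : p.c.pt = X.obj := p.pt_eq
  -- normalized legs
  let lg : ∀ j, p.D.obj j ⟶ X.obj := fun j => p.c.ι.app j ≫ eqToHom hpt
  have lgw : ∀ {a b : p.J} (f : a ⟶ b), p.D.map f ≫ lg b = lg a := by
    intro a b f
    dsimp [lg]
    rw [← Category.assoc]
    have := p.c.ι.naturality f
    dsimp at this
    rw [Category.comp_id] at this
    rw [this]
  let cX0 : Cocone p.D :=
  { pt := X.obj
    ι := { app := lg
           naturality := fun a b f => by
             dsimp
             rw [Category.comp_id]
             exact lgw f } }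
  have hcolim : IsColimit cX0 :=
    IsColimit.ofIsoColimit p.isColim (Cocones.ext (eqToIso hpt) (fun j => rfl))
  -- choose representatives
  have hch : ∀ j, ∃ s₀ ∈ S₀, Nonempty (p.D.obj j ≅ s₀) := fun j => hrep _ (p.mem j)
  choose rep hrepS₀ hiso using hch
  have u : ∀ j, p.D.obj j ≅ rep j := fun j => (hiso j).some
  -- the conjugated diagram, lifted to the subcategory
  let D₀ : p.J ⥤ ObjectProperty.FullSubcategory (fun X : K => Nonempty (DirColimPresentation κ S X)) :=
  { obj := fun j => ⟨rep j, ⟨presOfMem hκ (hsub (hrepS₀ j))⟩⟩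
    map := fun {a b} f => ⟨((u a).inv ≫ p.D.map f ≫ (u b).hom :
      rep a ⟶ rep b)⟩
    map_id := fun j => by
      ext
      simp
    map_comp := fun {a b c'} f g => by
      ext
      dsimp
      have : ((u a).inv ≫ p.D.map f ≫ (u b).hom) ≫ (u b).inv ≫ p.D.map g ≫ (u c').hom
          = (u a).inv ≫ p.D.map (f ≫ g) ≫ (u c').hom := by
        rw [p.D.map_comp]
        simp
      exact this.symm }
  let k : Cocone D₀ :=
  { pt := X
    ι := { app := fun j => ⟨((u j).inv ≫ lg j : rep j ⟶ X.obj)⟩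
           naturality := fun a b f => by
             have : (((u a).inv ≫ p.D.map f ≫ (u b).hom) ≫ (u b).inv ≫ lg b :
                 rep a ⟶ X.obj) = (u a).inv ≫ lg a := by
               rw [← lgw f]
               simp
             exact ObjectProperty.hom_ext _ (this.trans (Category.comp_id _).symm) } }
  let tr : Cocone (D₀ ⋙ ObjectProperty.ι _) → Cocone p.D := fun s =>
  { pt := s.pt
    ι := { app := fun j => (u j).hom ≫ s.ι.app j
           naturality := fun a b f => by
             have hnat := s.ι.naturality f
             dsimp at hnat ⊢
             rw [Category.comp_id] at hnat
             rw [Category.comp_id, ← hnat]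
             simp [D₀] } }
  have hmap : IsColimit ((ObjectProperty.ι _).mapCocone k) :=
  { desc := fun s => hcolim.desc (tr s)
    fac := fun s j => by
      have hfac := hcolim.fac (tr s) j
      dsimp [tr] at hfac ⊢
      rw [Category.assoc, hfac, ← Category.assoc, Iso.inv_hom_id, Category.id_comp]
    uniq := fun s m hm => by
      refine hcolim.uniq (tr s) m (fun j => ?_)
      have := hm j
      dsimp [tr] at this ⊢
      rw [← this, ← Category.assoc, ← Category.assoc, Iso.hom_inv_id, Category.id_comp] }
  exact ⟨{ J := p.J
           directed := p.directed
           D := D₀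
           mem := fun j => hrepS₀ j
           c := k
           pt_eq := rfl
           isColim := isColimitOfMapped k hmap }⟩

end Lift
end ACCaux

/-- The full subcategory of all κ-directed colimits of objects from a set `S` of
κ-presentable objects of a κ-accessible category is closed under κ-directed colimits,
is itself κ-accessible, and its κ-presentable objects are the retracts of objects of `S`. -/
theorem accessible_colimit_closure
    (κ : Cardinal.{v}) (hκ : κ.IsRegular)
    (K : Type u) [Category.{v} K] (hK : IsCardinalAccessible κ K)
    (S : Set K) (hS : ∀ X ∈ S, IsCardinalPresentableObj κ X) :
    (∀ (J : Type v) [Preorder J], IsCardinalDirectedPre κ J →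
      ∀ (D : J ⥤ K) (c : Cocone D), IsColimit c →
        (∀ j, Nonempty (DirColimPresentation κ S (D.obj j))) →
        Nonempty (DirColimPresentation κ S c.pt)) ∧
    IsCardinalAccessible κ
      (ObjectProperty.FullSubcategory (fun X : K => Nonempty (DirColimPresentation κ S X))) ∧
    (∀ X : ObjectProperty.FullSubcategory (fun X : K => Nonempty (DirColimPresentation κ S X)),
      IsCardinalPresentableObj κ X ↔
        ∃ s ∈ S, ∃ (i : X.obj ⟶ s) (r : s ⟶ X.obj), i ≫ r = 𝟙 X.obj) := by
  classical
  have h1 : HasCardinalDirectedColimits κ K := hK.1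
  refine ⟨?_, ⟨?_, ?_⟩, ?_⟩
  · intro J inst hJ D c hc hP
    exact ACCaux.combine hκ S hS hJ D c hc hP
  · -- the subcategory has κ-directed colimits
    intro J inst hJ D
    let L := ACCaux.liftedCC hκ hS h1 hJ D
    exact HasColimit.mk ⟨L.cocone, ACCaux.isColimitOfMapped L.cocone L.mapIsColimit⟩
  · -- a small dense set of presentable objects
    obtain ⟨S₀, hsub, hsmall, hrep⟩ := ACCaux.exists_small_reps hκ hK S hS
    haveI : Small.{v} S₀ := hsmall
    refine ⟨{Y | Y.obj ∈ S₀}, ?_, ?_, ?_⟩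
    · refine small_of_injective
        (f := fun Y : {Y : ObjectProperty.FullSubcategory
            (fun X : K => Nonempty (DirColimPresentation κ S X)) | Y.obj ∈ S₀} =>
          (⟨Y.1.obj, Y.2⟩ : S₀)) ?_
      intro a b hab
      have hobj : a.1.obj = b.1.obj := congrArg Subtype.val hab
      apply Subtype.ext
      obtain ⟨⟨ao, ap⟩, ha⟩ := a
      obtain ⟨⟨bo, bp⟩, hb⟩ := b
      cases hobj
      rfl
    · intro Y hY
      exact ACCaux.presSub hκ hS h1 (hS Y.obj (hsub hY))
    · intro Y
      exact ACCaux.presSubRep hκ S₀ hsub hrep Y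
  · intro X
    constructor
    · intro hX
      obtain ⟨p⟩ := ACCaux.presSubRep hκ S (fun _ h => h)
        (fun s hs => ⟨s, hs, ⟨Iso.refl s⟩⟩) X
      obtain ⟨s', hs', i, r, hir⟩ := ACCaux.retract_of_pres hκ p hX
      exact ⟨s'.obj, hs', i.hom, r.hom, congrArg InducedCategory.Hom.hom hir⟩
    · rintro ⟨s, hsS, i, r, hir⟩
      have hobj : IsCardinalPresentableObj κ X.obj :=
        ACCaux.pres_of_retract hκ (hS s hsS) i r hir
      exact ACCaux.presSub hκ hS h1 hobj
end

section
/- Let κ be a regular cardinal and (K_i)_{i∈I} a family of κ-accessible categories with the cardinality of I smaller than κ. Then the product category ∏_{i∈I} K_i is κ-accessible, and an object (S_i)_{i∈I} of the product is κ-presentable if and only if each component S_i is κ-presentable in K_i. -/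
open CategoryTheory Limits Opposite

universe w v u u₂ v₂

section AuxiliaryLemmas

variable {κ : Cardinal.{v}}

lemma aux_nonempty (hκ : Cardinal.aleph0 ≤ κ) {J : Type v} [Preorder J]
    (hJ : IsCardinalDirectedPre κ J) : Nonempty J := by
  obtain ⟨j, -⟩ := hJ ∅ (by
    rw [Cardinal.mk_emptyCollection]
    exact lt_of_lt_of_le Cardinal.aleph0_pos hκ)
  exact ⟨j⟩

lemma aux_directed (hκ : Cardinal.aleph0 ≤ κ) {J : Type v} [Preorder J]
    (hJ : IsCardinalDirectedPre κ J) : IsDirected J (· ≤ ·) := by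
  refine ⟨fun a b => ?_⟩
  obtain ⟨j, hj⟩ := hJ {a, b} (lt_of_lt_of_le ((Set.toFinite ({a, b} : Set J)).lt_aleph0) hκ)
  exact ⟨j, hj a (by simp), hj b (by simp)⟩

lemma aux_bdd {J : Type v} [Preorder J] (hJ : IsCardinalDirectedPre κ J)
    {α : Type v} (hα : Cardinal.mk α < κ) (f : α → J) : ∃ j, ∀ a, f a ≤ j := by
  obtain ⟨j, hj⟩ := hJ (Set.range f) (lt_of_le_of_lt Cardinal.mk_range_le hα)
  exact ⟨j, fun a => hj _ ⟨a, rfl⟩⟩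

/-- A retract of a `κ`-presentable object is `κ`-presentable. -/
lemma presentable_of_retract {K : Type u} [Category.{v} K] {P X : K}
    (s : X ⟶ P) (r : P ⟶ X) (hsr : s ≫ r = 𝟙 X)
    (hκ : Cardinal.aleph0 ≤ κ)
    (hP : IsCardinalPresentableObj κ P) : IsCardinalPresentableObj κ X := by
  intro J _ hJ
  haveI := aux_directed hκ hJ
  haveI := aux_nonempty hκ hJ
  refine ⟨{ preservesColimit := fun {D} => { preserves := fun {c} hc => ⟨?_⟩ } }⟩
  letI := (hP J hJ).some
  have pc : IsColimit ((coyoneda.obj (op P)).mapCocone c) :=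
    isColimitOfPreserves _ hc
  apply Types.FilteredColimit.isColimitOf
  · intro x
    obtain ⟨j, y, hy⟩ := Types.jointly_surjective_of_isColimit pc (r ≫ x)
    refine ⟨j, s ≫ y, ?_⟩
    show x = (s ≫ y) ≫ c.ι.app j
    have hy' : y ≫ c.ι.app j = r ≫ x := hy
    rw [Category.assoc, hy', ← Category.assoc, hsr, Category.id_comp]
  · intro j j' xi xj h
    have h' : (r ≫ xi) ≫ c.ι.app j = (r ≫ xj) ≫ c.ι.app j' := by
      have hh : xi ≫ c.ι.app j = xj ≫ c.ι.app j' := h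
      rw [Category.assoc, Category.assoc, hh]
    obtain ⟨k, f, g, hk⟩ := (Types.FilteredColimit.isColimit_eq_iff _ pc).1 h'
    refine ⟨k, f, g, ?_⟩
    have hk' : (r ≫ xi) ≫ D.map f = (r ≫ xj) ≫ D.map g := hk
    show xi ≫ D.map f = xj ≫ D.map g
    calc xi ≫ D.map f = (s ≫ r) ≫ xi ≫ D.map f := by rw [hsr, Category.id_comp]
    _ = s ≫ (r ≫ xi) ≫ D.map f := by simp only [Category.assoc]
    _ = s ≫ (r ≫ xj) ≫ D.map g := by rw [hk']
    _ = (s ≫ r) ≫ xj ≫ D.map g := by simp only [Category.assoc]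
    _ = xj ≫ D.map g := by rw [hsr, Category.id_comp]

/-- A colimit cocone in a product category has colimit component cocones, provided pointwise
colimits exist. -/
noncomputable def isColimit_coconeCompEval {I : Type v} {K : I → Type u} [∀ i, Category.{v} (K i)]
    {J : Type v} [SmallCategory J] {D : J ⥤ ∀ i, K i}
    [∀ i, HasColimit (D ⋙ Pi.eval K i)]
    {c : Cocone D} (hc : IsColimit c) (i : I) :
    IsColimit (pi.coconeCompEval c i) := by
  have hcs : IsColimit (pi.coconeOfCoconeCompEval fun i => colimit.cocone (D ⋙ Pi.eval K i)) :=
    pi.coconeOfCoconeEvalIsColimit fun i => colimit.isColimit _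
  let e := IsColimit.uniqueUpToIso hcs hc
  refine (colimit.isColimit (D ⋙ Pi.eval K i)).ofIsoColimit
    (Cocones.ext ⟨e.hom.hom i, e.inv.hom i, ?_, ?_⟩ fun j => ?_)
  · exact congr_fun (congrArg CoconeMorphism.hom e.hom_inv_id) i
  · exact congr_fun (congrArg CoconeMorphism.hom e.inv_hom_id) i
  · exact congr_fun (e.hom.w j) i

/-- If all components of an object of a product category are `κ`-presentable, so is the object. -/
lemma presentable_pi {I : Type v} (hκ : κ.IsRegular) (hI : Cardinal.mk I < κ)
    {K : I → Type u} [∀ i, Category.{v} (K i)]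
    (hcolim : ∀ i, HasCardinalDirectedColimits κ (K i))
    (X : ∀ i, K i) (hX : ∀ i, IsCardinalPresentableObj κ (X i)) :
    IsCardinalPresentableObj κ X := by
  intro J _ hJ
  haveI := aux_directed hκ.aleph0_le hJ
  haveI := aux_nonempty hκ.aleph0_le hJ
  refine ⟨{ preservesColimit := fun {D} => { preserves := fun {c} hc => ⟨?_⟩ } }⟩
  haveI : ∀ i, HasColimit (D ⋙ Pi.eval K i) := fun i => hcolim i J hJ _
  have hci : ∀ i, IsColimit (pi.coconeCompEval c i) := fun i => isColimit_coconeCompEval hc i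
  have pc : ∀ i, IsColimit ((coyoneda.obj (op (X i))).mapCocone (pi.coconeCompEval c i)) :=
    fun i => letI := (hX i J hJ).some; isColimitOfPreserves _ (hci i)
  apply Types.FilteredColimit.isColimitOf
  · intro x
    have hx : ∀ i, ∃ p : Σ j : J, X i ⟶ (D.obj j) i, p.2 ≫ c.ι.app p.1 i = x i := by
      intro i
      obtain ⟨j, y, hy⟩ := Types.jointly_surjective_of_isColimit (pc i) (x i)
      exact ⟨⟨j, y⟩, hy⟩
    choose p hp using hx
    obtain ⟨j, hj⟩ := aux_bdd hJ hI (fun i => (p i).1)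
    refine ⟨j, fun i => (p i).2 ≫ (D.map (homOfLE (hj i))) i, ?_⟩
    show x = (fun i => (p i).2 ≫ (D.map (homOfLE (hj i))) i) ≫ c.ι.app j
    funext i
    have hw := congr_fun (c.w (homOfLE (hj i))) i
    rw [CategoryTheory.Pi.comp_apply] at hw
    show x i = ((p i).2 ≫ (D.map (homOfLE (hj i))) i) ≫ c.ι.app j i
    rw [Category.assoc, hw, hp]
  · intro j j' xi xj h
    have h' : ∀ i, xi i ≫ c.ι.app j i = xj i ≫ c.ι.app j' i := by
      intro i
      have := congr_fun (h :
        ((coyoneda.obj (op X)).mapCocone c).ι.app j xi =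
          ((coyoneda.obj (op X)).mapCocone c).ι.app j' xj) i
      exact this
    have key : ∀ i, ∃ q : Σ k : J, (j ⟶ k) × (j' ⟶ k),
        xi i ≫ (D.map q.2.1) i = xj i ≫ (D.map q.2.2) i := by
      intro i
      obtain ⟨k, f, g, hk⟩ := (Types.FilteredColimit.isColimit_eq_iff _ (pc i)).1
        (h' i : ((coyoneda.obj (op (X i))).mapCocone (pi.coconeCompEval c i)).ι.app j (xi i) =
          ((coyoneda.obj (op (X i))).mapCocone (pi.coconeCompEval c i)).ι.app j' (xj i))
      exact ⟨⟨k, f, g⟩, hk⟩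
    choose q hq using key
    obtain ⟨k0, hk0⟩ := aux_bdd hJ hI (fun i => (q i).1)
    obtain ⟨k1, hjk1, hj'k1⟩ := directed_of (· ≤ ·) j j'
    obtain ⟨k2, hk02, hk12⟩ := directed_of (· ≤ ·) k0 k1
    have hjk2 : j ≤ k2 := le_trans hjk1 hk12
    have hj'k2 : j' ≤ k2 := le_trans hj'k1 hk12
    refine ⟨k2, homOfLE hjk2, homOfLE hj'k2, ?_⟩
    show xi ≫ D.map (homOfLE hjk2) = xj ≫ D.map (homOfLE hj'k2)
    funext i
    have e1 : (homOfLE hjk2 : j ⟶ k2) = (q i).2.1 ≫ homOfLE (le_trans (hk0 i) hk02) :=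
      Subsingleton.elim _ _
    have e2 : (homOfLE hj'k2 : j' ⟶ k2) = (q i).2.2 ≫ homOfLE (le_trans (hk0 i) hk02) :=
      Subsingleton.elim _ _
    show xi i ≫ (D.map (homOfLE hjk2)) i = xj i ≫ (D.map (homOfLE hj'k2)) i
    rw [e1, e2, D.map_comp, D.map_comp, CategoryTheory.Pi.comp_apply,
      CategoryTheory.Pi.comp_apply, ← Category.assoc, ← Category.assoc, hq]

/-- A presentation of an object of a product category from presentations of its components. -/
noncomputable def presentation_pi {I : Type v} (hκ : κ.IsRegular) (hI : Cardinal.mk I < κ)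
    {K : I → Type u} [∀ i, Category.{v} (K i)]
    {S : ∀ i, Set (K i)} (X : ∀ i, K i)
    (P : ∀ i, DirColimPresentation κ (S i) (X i)) :
    DirColimPresentation κ {Y : ∀ i, K i | ∀ i, Y i ∈ S i} X := by
  classical
  letI instJ : ∀ i, Preorder (P i).J := fun i => (P i).inst
  haveI hdir : ∀ i, IsDirected (P i).J (· ≤ ·) := fun i => aux_directed hκ.aleph0_le (P i).directed
  haveI hne : ∀ i, Nonempty (P i).J := fun i => aux_nonempty hκ.aleph0_le (P i).directed
  haveI : Nonempty (∀ i, (P i).J) := ⟨fun i => Classical.arbitrary _⟩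
  letI : Category.{v} (∀ i, (P i).J) := Preorder.smallCategory _
  have hJdir : IsCardinalDirectedPre κ (∀ i, (P i).J) := by
    intro T hT
    have h : ∀ i, ∃ b, ∀ t ∈ T, (t : ∀ i, (P i).J) i ≤ b := by
      intro i
      obtain ⟨b, hb⟩ := (P i).directed ((fun f : ∀ i, (P i).J => f i) '' T)
        (lt_of_le_of_lt Cardinal.mk_image_le hT)
      exact ⟨b, fun t ht => hb _ ⟨t, ht, rfl⟩⟩
    choose b hb using h
    exact ⟨b, fun t ht i => hb i t ht⟩
  haveI := aux_directed hκ.aleph0_le hJdir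
  let D : (∀ i, (P i).J) ⥤ ∀ i, K i :=
    { obj := fun f i => (P i).D.obj (f i)
      map := fun {f g} h i => (P i).D.map (homOfLE (leOfHom h i))
      map_id := by
        intro f
        funext i
        show (P i).D.map _ = 𝟙 ((P i).D.obj (f i))
        rw [Subsingleton.elim (homOfLE _) (𝟙 (f i)), (P i).D.map_id]
      map_comp := by
        intro f g h a b
        funext i
        show (P i).D.map _ = (P i).D.map _ ≫ (P i).D.map _
        rw [← (P i).D.map_comp, Subsingleton.elim (homOfLE _) (homOfLE _ ≫ homOfLE _)] }
  let c : Cocone D :=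
    { pt := X
      ι :=
        { app := fun f i => (P i).c.ι.app (f i) ≫ eqToHom ((P i).pt_eq)
          naturality := by
            intro f g h
            funext i
            show (P i).D.map _ ≫ ((P i).c.ι.app (g i) ≫ eqToHom ((P i).pt_eq)) =
              ((P i).c.ι.app (f i) ≫ eqToHom ((P i).pt_eq)) ≫ 𝟙 (X i)
            rw [Category.comp_id, ← Category.assoc, (P i).c.w] } }
  let proj : ∀ i, (∀ i', (P i').J) ⥤ (P i).J := fun i =>
    { obj := fun f => f i
      map := fun {f g} h => homOfLE (leOfHom h i)
      map_id := fun _ => Subsingleton.elim _ _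
      map_comp := fun _ _ => Subsingleton.elim _ _ }
  have hfinal : ∀ i, (proj i).Final := by
    intro i
    apply Functor.final_of_exists_of_isFiltered
    · intro d
      let b0 : ∀ i', (P i').J := Classical.arbitrary _
      obtain ⟨u, hu1, hu2⟩ := directed_of (· ≤ ·) d (b0 i)
      refine ⟨fun i' => if h : i' = i then cast (congrArg (fun t => (P t).J) h).symm u
        else b0 i', ?_⟩
      have hc : (fun i' => if h : i' = i then cast (congrArg (fun t => (P t).J) h).symm u
        else b0 i') i = u := dif_pos rfl
      exact ⟨homOfLE (le_trans hu1 (le_of_eq hc.symm))⟩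
    · intro d cc ss ss'
      exact ⟨cc, 𝟙 cc, Subsingleton.elim _ _⟩
  have compColim : ∀ i, IsColimit (pi.coconeCompEval c i) := by
    intro i
    haveI := hfinal i
    have wcolim : IsColimit ((P i).c.whisker (proj i)) :=
      (Functor.Final.isColimitWhiskerEquiv (proj i) (P i).c).symm (P i).isColim
    exact IsColimit.ofIsoColimit wcolim
      (Cocones.ext (eqToIso (P i).pt_eq) (fun f => rfl))
  exact
    { J := ∀ i, (P i).J
      directed := hJdir
      D := D
      mem := fun f i => (P i).mem (f i)
      c := c
      pt_eq := rfl
      isColim := pi.coconeOfCoconeEvalIsColimit compColim }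

end AuxiliaryLemmas

/-- A product of fewer than κ many κ-accessible categories is κ-accessible, and an object
of the product is κ-presentable iff all its components are. -/
theorem product_accessible
    (κ : Cardinal.{v}) (hκ : κ.IsRegular)
    (I : Type v) (hI : Cardinal.mk I < κ)
    (K : I → Type u) [∀ i, Category.{v} (K i)]
    (hK : ∀ i, IsCardinalAccessible κ (K i)) :
    IsCardinalAccessible κ (∀ i, K i) ∧
    ∀ X : ∀ i, K i,
      (IsCardinalPresentableObj κ X ↔ ∀ i, IsCardinalPresentableObj κ (X i)) := by
  classical
  choose Si hstuff using fun i => (hK i).2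
  set S : Set (∀ i, K i) := {Y | ∀ i, Y i ∈ Si i} with hS
  have hcolim : HasCardinalDirectedColimits κ (∀ i, K i) := by
    intro J _ hJ D
    haveI : ∀ i, HasColimit (D ⋙ Pi.eval K i) := fun i => (hK i).1 J hJ _
    exact pi.hasColimit_of_hasColimit_comp_eval
  have hsmall : Small.{v} ↥S := by
    haveI : ∀ i, Small.{v} ↥(Si i) := fun i => (hstuff i).1
    refine small_of_injective (f := fun (Y : ↥S) (i : I) => (⟨Y.1 i, Y.2 i⟩ : ↥(Si i))) ?_
    intro Y Z h
    exact Subtype.ext (funext fun i => congrArg Subtype.val (congr_fun h i))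
  have hpres_back : ∀ X : ∀ i, K i, (∀ i, IsCardinalPresentableObj κ (X i)) →
      IsCardinalPresentableObj κ X :=
    fun X hX => presentable_pi hκ hI (fun i => (hK i).1) X hX
  have hSpres : ∀ X ∈ S, IsCardinalPresentableObj κ X := fun X hX =>
    hpres_back X (fun i => (hstuff i).2.1 _ (hX i))
  have hpresn : ∀ X : ∀ i, K i, Nonempty (DirColimPresentation κ S X) := fun X =>
    ⟨presentation_pi hκ hI X (fun i => ((hstuff i).2.2 (X i)).some)⟩
  refine ⟨⟨hcolim, S, hsmall, hSpres, hpresn⟩, fun X => ⟨?_, hpres_back X⟩⟩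
  intro hX i
  obtain ⟨pres⟩ := hpresn X
  letI : Preorder pres.J := pres.inst
  haveI := aux_directed hκ.aleph0_le pres.directed
  haveI := aux_nonempty hκ.aleph0_le pres.directed
  letI := (hX pres.J pres.directed).some
  have pc : IsColimit ((coyoneda.obj (op X)).mapCocone pres.c) :=
    isColimitOfPreserves _ pres.isColim
  obtain ⟨j, g, hg⟩ := Types.jointly_surjective_of_isColimit pc (eqToHom pres.pt_eq.symm)
  have hg' : g ≫ pres.c.ι.app j = eqToHom pres.pt_eq.symm := hg
  have hsr : g ≫ (pres.c.ι.app j ≫ eqToHom pres.pt_eq) = 𝟙 X := by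
    rw [← Category.assoc, hg', eqToHom_trans, eqToHom_refl]
  refine presentable_of_retract (g i) ((pres.c.ι.app j ≫ eqToHom pres.pt_eq) i) ?_ hκ.aleph0_le
    ((hstuff i).2.1 _ (pres.mem j i))
  have hcomp := congr_fun hsr i
  rw [CategoryTheory.Pi.comp_apply, CategoryTheory.Pi.id_apply] at hcomp
  exact hcomp
end

section
/- Let κ be a regular cardinal and λ < κ an infinite cardinal. Let K and L be κ-accessible categories with colimits of λ-indexed chains, let F, G : K → L be parallel functors preserving κ-directed colimits and colimits of λ-indexed chains, with F preserving κ-presentable objects, and let φ, ψ : F → G be natural transformations. Then for any object E of K with φ_E = ψ_E and any κ-presentable object S of K, every morphism S → E factorizes through an object U of K that is κ-presentable and satisfies φ_U = ψ_U. -/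
open CategoryTheory Limits Opposite

universe w v u u₂ v₂

namespace EquifierAux

section
variable {κ : Cardinal.{w}}

theorem isDirected (hκ : κ.IsRegular) {J : Type w} [Preorder J]
    (hJ : IsCardinalDirectedPre κ J) : IsDirected J (· ≤ ·) := by
  constructor
  intro a b
  obtain ⟨j, hj⟩ := hJ {a, b}
    (((Set.finite_singleton b).insert a).lt_aleph0.trans_le hκ.aleph0_le)
  exact ⟨j, hj a (by simp), hj b (by simp)⟩

theorem nonempty (hκ : κ.IsRegular) {J : Type w} [Preorder J]
    (hJ : IsCardinalDirectedPre κ J) : Nonempty J := by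
  obtain ⟨j, -⟩ := hJ ∅ (by
    rw [Cardinal.mk_emptyCollection]
    exact Cardinal.aleph0_pos.trans_le hκ.aleph0_le)
  exact ⟨j⟩

theorem bound_insert (hκ : κ.IsRegular) {J : Type w} [Preorder J]
    (hJ : IsCardinalDirectedPre κ J) (a : J) {ι : Type w} (f : ι → J)
    (hι : Cardinal.mk ι < κ) : ∃ j, a ≤ j ∧ ∀ i, f i ≤ j := by
  obtain ⟨j, hj⟩ := hJ (insert a (Set.range f))
    (lt_of_le_of_lt Cardinal.mk_insert_le
      (Cardinal.add_lt_of_lt hκ.aleph0_le (Cardinal.mk_range_le.trans_lt hι)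
        (Cardinal.one_lt_aleph0.trans_le hκ.aleph0_le)))
  exact ⟨j, hj a (Set.mem_insert _ _), fun i => hj _ (Set.mem_insert_of_mem _ ⟨i, rfl⟩)⟩

end

variable {κ : Cardinal.{v}}

theorem factor_through {K : Type u} [Category.{v} K] {P : K}
    (hP : IsCardinalPresentableObj κ P) {J : Type v} [Preorder J]
    (hJ : IsCardinalDirectedPre κ J) {D : J ⥤ K} {c : Cocone D} (hc : IsColimit c)
    (u : P ⟶ c.pt) : ∃ (j : J) (y : P ⟶ D.obj j), y ≫ c.ι.app j = u := by
  haveI := (hP J hJ).some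
  have hc' := isColimitOfPreserves (coyoneda.obj (op P)) hc
  obtain ⟨j, y, hy⟩ := Types.jointly_surjective _ hc' u
  exact ⟨j, y, by simpa using hy⟩

theorem equalize (hκ : κ.IsRegular) {K : Type u} [Category.{v} K] {P : K}
    (hP : IsCardinalPresentableObj κ P) {J : Type v} [Preorder J]
    (hJ : IsCardinalDirectedPre κ J) {D : J ⥤ K} {c : Cocone D} (hc : IsColimit c)
    {j : J} (u v : P ⟶ D.obj j) (huv : u ≫ c.ι.app j = v ≫ c.ι.app j) :
    ∃ (k : J) (h : j ≤ k), u ≫ D.map (homOfLE h) = v ≫ D.map (homOfLE h) := by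
  haveI : IsDirected J (· ≤ ·) := isDirected hκ hJ
  haveI : Nonempty J := ⟨j⟩
  haveI := (hP J hJ).some
  have hc' := isColimitOfPreserves (coyoneda.obj (op P)) hc
  have h0 : ((coyoneda.obj (op P)).mapCocone c).ι.app j u
      = ((coyoneda.obj (op P)).mapCocone c).ι.app j v := by simpa using huv
  obtain ⟨k, fk, gk, hk⟩ := (Types.FilteredColimit.isColimit_eq_iff _ hc').1 h0
  refine ⟨k, leOfHom fk, ?_⟩
  have hfg : fk = gk := Subsingleton.elim _ _
  have hfk : homOfLE (leOfHom fk) = fk := Subsingleton.elim _ _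
  rw [hfk]
  conv_rhs => rw [hfg]
  simpa using hk

theorem chain_colimit_presentable {lam : Cardinal.{v}} (hκ : κ.IsRegular)
    (hlam : Cardinal.aleph0 ≤ lam) (hlt : lam < κ)
    {K : Type u} [Category.{v} K] (C : lam.ord.ToType ⥤ K)
    (hpres : ∀ α, IsCardinalPresentableObj κ (C.obj α))
    {cU : Cocone C} (hU : IsColimit cU) : IsCardinalPresentableObj κ cU.pt := by
  intro J _ hJ
  haveI : IsDirected J (· ≤ ·) := isDirected hκ hJ
  haveI : Nonempty J := nonempty hκ hJ
  set T := lam.ord.ToType with hT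
  have hTcard : Cardinal.mk T = lam := Cardinal.mk_ord_toType lam
  refine ⟨⟨fun {D'} => ⟨fun {c'} hc' => ⟨?_⟩⟩⟩⟩
  apply Types.FilteredColimit.isColimitOf
  · -- surjectivity
    intro x
    have h1 : ∀ α : T, ∃ (k : J) (y : C.obj α ⟶ D'.obj k),
        y ≫ c'.ι.app k = cU.ι.app α ≫ x := fun α => factor_through (hpres α) hJ hc' _
    choose k y hy using h1
    obtain ⟨k0, hk0⟩ := hJ (Set.range k)
      (Cardinal.mk_range_le.trans_lt (by rw [hTcard]; exact hlt))
    have hk0' : ∀ α, k α ≤ k0 := fun α => hk0 _ ⟨α, rfl⟩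
    set z : ∀ α : T, C.obj α ⟶ D'.obj k0 :=
      fun α => y α ≫ D'.map (homOfLE (hk0' α)) with hzdef
    have hz : ∀ α, z α ≫ c'.ι.app k0 = cU.ι.app α ≫ x := by
      intro α
      rw [hzdef]; dsimp only
      rw [Category.assoc, c'.w (homOfLE (hk0' α)), hy α]
    have h2 : ∀ p : T × T, ∃ (m : J) (hm : k0 ≤ m), ∀ h : p.1 ≤ p.2,
        C.map (homOfLE h) ≫ z p.2 ≫ D'.map (homOfLE hm) = z p.1 ≫ D'.map (homOfLE hm) := by
      rintro ⟨α, β⟩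
      by_cases h : α ≤ β
      · have he : (C.map (homOfLE h) ≫ z β) ≫ c'.ι.app k0 = z α ≫ c'.ι.app k0 := by
          rw [Category.assoc, hz β, hz α, ← Category.assoc, cU.w (homOfLE h)]
        obtain ⟨m, hm, heq⟩ := equalize hκ (hpres α) hJ hc' _ _ he
        exact ⟨m, hm, fun _ => by
          rw [← Category.assoc, heq, Category.assoc]⟩
      · exact ⟨k0, le_refl _, fun h' => absurd h' h⟩
    choose m hm hmeq using h2
    have hTT : Cardinal.mk (T × T) < κ := by
      rw [Cardinal.mk_prod, Cardinal.lift_id, hTcard, Cardinal.mul_eq_self hlam]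
      exact hlt
    obtain ⟨m0, hm0k0, hm0⟩ := bound_insert hκ hJ k0 m hTT
    set w : ∀ α : T, C.obj α ⟶ D'.obj m0 :=
      fun α => z α ≫ D'.map (homOfLE hm0k0) with hwdef
    have hwnat : ∀ {α β : T} (h : α ≤ β), C.map (homOfLE h) ≫ w β = w α := by
      intro α β h
      have h1 : homOfLE hm0k0 = homOfLE (hm (α, β)) ≫ homOfLE (hm0 (α, β)) :=
        Subsingleton.elim _ _
      have hh := hmeq (α, β) h
      dsimp only at hh
      simp only [← Category.assoc] at hh
      rw [hwdef]; dsimp only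
      rw [h1, D'.map_comp]
      simp only [← Category.assoc]
      rw [hh]
    let s : Cocone C :=
      { pt := D'.obj m0
        ι :=
          { app := w
            naturality := fun α β ff => by
              have : ff = homOfLE (leOfHom ff) := Subsingleton.elim _ _
              rw [this]
              simpa using hwnat (leOfHom ff) } }
    refine ⟨m0, hU.desc s, ?_⟩
    refine hU.hom_ext fun α => ?_
    have hfac : cU.ι.app α ≫ hU.desc s = w α := hU.fac s α
    show cU.ι.app α ≫ x = cU.ι.app α ≫ (hU.desc s ≫ c'.ι.app m0)
    rw [← Category.assoc, hfac, hwdef]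
    dsimp only
    rw [Category.assoc, c'.w (homOfLE hm0k0), hz α]
  · -- injectivity
    intro i j xi xj hij
    obtain ⟨n, hin, hjn⟩ := directed_of (· ≤ ·) i j
    have hxy : (xi ≫ D'.map (homOfLE hin)) ≫ c'.ι.app n
        = (xj ≫ D'.map (homOfLE hjn)) ≫ c'.ι.app n := by
      rw [Category.assoc, Category.assoc, c'.w (homOfLE hin), c'.w (homOfLE hjn)]
      exact hij
    have h3 : ∀ α : T, ∃ (n' : J) (hn' : n ≤ n'),
        (cU.ι.app α ≫ xi ≫ D'.map (homOfLE hin)) ≫ D'.map (homOfLE hn')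
        = (cU.ι.app α ≫ xj ≫ D'.map (homOfLE hjn)) ≫ D'.map (homOfLE hn') := by
      intro α
      apply equalize hκ (hpres α) hJ hc'
      have hxy' := hxy
      simp only [Category.assoc] at hxy' ⊢
      rw [hxy']
    choose n' hn' hneq using h3
    obtain ⟨n0, hn0n, hn0⟩ := bound_insert hκ hJ n n'
      (by rw [hTcard]; exact hlt)
    refine ⟨n0, homOfLE (hin.trans hn0n), homOfLE (hjn.trans hn0n), ?_⟩
    show xi ≫ D'.map (homOfLE (hin.trans hn0n)) = xj ≫ D'.map (homOfLE (hjn.trans hn0n))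
    refine hU.hom_ext fun α => ?_
    have e1 : homOfLE (hin.trans hn0n)
        = homOfLE hin ≫ homOfLE (hn' α) ≫ homOfLE (hn0 α) := Subsingleton.elim _ _
    have e2 : homOfLE (hjn.trans hn0n)
        = homOfLE hjn ≫ homOfLE (hn' α) ≫ homOfLE (hn0 α) := Subsingleton.elim _ _
    rw [e1, e2]
    simp only [Functor.map_comp]
    have hh := hneq α
    simp only [← Category.assoc] at hh ⊢
    rw [hh]
end EquifierAux



theorem EquifierAux.main
    (κ lam : Cardinal.{v}) (hκ : κ.IsRegular) (hlam : Cardinal.aleph0 ≤ lam) (hlt : lam < κ)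
    (K : Type u) [Category.{v} K] (L : Type u₂) [Category.{v} L]
    (hKch : HasColimitsOfShape lam.ord.ToType K)
    (F G : K ⥤ L)
    (hF₂ : Nonempty (PreservesColimitsOfShape lam.ord.ToType F))
    (hG₁ : ∀ (J : Type v) [Preorder J], IsCardinalDirectedPre κ J →
      Nonempty (PreservesColimitsOfShape J G))
    (hFp : ∀ X : K, IsCardinalPresentableObj κ X → IsCardinalPresentableObj κ (F.obj X))
    (φ ψ : F ⟶ G)
    (J : Type v) [Preorder J] (dir : IsCardinalDirectedPre κ J)
    (D : J ⥤ K) (hDp : ∀ j, IsCardinalPresentableObj κ (D.obj j))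
    (c : Cocone D) (hcolim : IsColimit c)
    (hE : φ.app c.pt = ψ.app c.pt)
    (S : K) (hS : IsCardinalPresentableObj κ S) (f : S ⟶ c.pt) :
    ∃ U : K, IsCardinalPresentableObj κ U ∧ φ.app U = ψ.app U ∧
      ∃ (g : S ⟶ U) (h : U ⟶ c.pt), g ≫ h = f := by
  haveI : IsDirected J (· ≤ ·) := EquifierAux.isDirected hκ dir
  haveI : Nonempty J := EquifierAux.nonempty hκ dir
  obtain ⟨j₀, g₀, hg₀⟩ := EquifierAux.factor_through hS dir hcolim f
  haveI := (hG₁ J dir).some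
  have hGc : IsColimit (G.mapCocone c) := isColimitOfPreserves G hcolim
  have step : ∀ j : J, ∃ (k : J) (h : j ≤ k),
      φ.app (D.obj j) ≫ G.map (D.map (homOfLE h))
        = ψ.app (D.obj j) ≫ G.map (D.map (homOfLE h)) := by
    intro j
    have huv : φ.app (D.obj j) ≫ (G.mapCocone c).ι.app j
        = ψ.app (D.obj j) ≫ (G.mapCocone c).ι.app j := by
      simp only [Functor.mapCocone_ι_app]
      rw [← φ.naturality, ← ψ.naturality, hE]
    obtain ⟨k, h, heq⟩ := EquifierAux.equalize hκ (hFp _ (hDp j)) dir hGc _ _ huv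
    exact ⟨k, h, heq⟩
  set T := lam.ord.ToType with hT
  have key : ∀ (α : T) (g : ∀ β : T, β < α → J), ∃ j' : J, j₀ ≤ j' ∧
      ∀ (β : T) (h : β < α), ∃ hle : g β h ≤ j',
        φ.app (D.obj (g β h)) ≫ G.map (D.map (homOfLE hle))
          = ψ.app (D.obj (g β h)) ≫ G.map (D.map (homOfLE hle)) := by
    intro α g
    have h4 : ∀ p : Set.Iio α, ∃ (k : J) (h : g p.1 p.2 ≤ k),
        φ.app (D.obj (g p.1 p.2)) ≫ G.map (D.map (homOfLE h))
          = ψ.app (D.obj (g p.1 p.2)) ≫ G.map (D.map (homOfLE h)) := fun p => step _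
    choose k hk hkeq using h4
    obtain ⟨j', hj'0, hj'⟩ := EquifierAux.bound_insert hκ dir j₀ k
      ((Cardinal.mk_Iio_ord_toType α).trans hlt)
    refine ⟨j', hj'0, fun β h => ?_⟩
    have hle : g β h ≤ j' := (hk ⟨β, h⟩).trans (hj' ⟨β, h⟩)
    refine ⟨hle, ?_⟩
    have e1 : homOfLE hle = homOfLE (hk ⟨β, h⟩) ≫ homOfLE (hj' ⟨β, h⟩) :=
      Subsingleton.elim _ _
    rw [e1]
    simp only [Functor.map_comp]
    simp only [← Category.assoc]
    rw [hkeq ⟨β, h⟩]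
  have wf : WellFounded ((· < ·) : T → T → Prop) := wellFounded_lt
  let jf : T → J := wf.fix (fun α IH => (key α IH).choose)
  have hjf : ∀ α, jf α = (key α (fun β _ => jf β)).choose := fun α =>
    wf.fix_eq _ α
  have spec : ∀ α : T, j₀ ≤ jf α ∧ ∀ (β : T) (h : β < α), ∃ hle : jf β ≤ jf α,
      φ.app (D.obj (jf β)) ≫ G.map (D.map (homOfLE hle))
        = ψ.app (D.obj (jf β)) ≫ G.map (D.map (homOfLE hle)) := by
    intro α
    have h := (key α (fun β _ => jf β)).choose_spec
    rw [← hjf α] at h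
    exact h
  have mono : Monotone jf := by
    intro α β h
    rcases lt_or_eq_of_le h with h' | h'
    · exact ((spec β).2 α h').choose
    · exact h' ▸ le_rfl
  let Cn : T ⥤ K := mono.functor ⋙ D
  haveI : HasColimitsOfShape T K := hKch
  haveI : HasColimit Cn := HasColimitsOfShape.has_colimit Cn
  have hUcolim := colimit.isColimit Cn
  have hUp : IsCardinalPresentableObj κ (colimit Cn) :=
    EquifierAux.chain_colimit_presentable hκ hlam hlt Cn (fun α => hDp _) hUcolim
  haveI : Nonempty T := Ordinal.toType_nonempty_iff_ne_zero.2
    (by rw [Ne, Cardinal.ord_eq_zero]; exact (Cardinal.aleph0_pos.trans_le hlam).ne')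
  haveI : NoMaxOrder T := Cardinal.noMaxOrder hlam
  let α₀ : T := Classical.arbitrary T
  let sE : Cocone Cn :=
    { pt := c.pt
      ι :=
        { app := fun α => c.ι.app (jf α)
          naturality := fun α β ff => by
            dsimp
            refine Eq.trans ?_ (Category.comp_id _).symm
            exact c.w (mono.functor.map ff) } }
  refine ⟨colimit Cn, hUp, ?_, g₀ ≫ D.map (homOfLE (spec α₀).1) ≫ colimit.ι Cn α₀,
    colimit.desc Cn sE, ?_⟩
  · haveI := hF₂.some
    have hFU : IsColimit (F.mapCocone (colimit.cocone Cn)) :=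
      isColimitOfPreserves F hUcolim
    refine hFU.hom_ext fun α => ?_
    obtain ⟨β, hβ⟩ := exists_gt α
    obtain ⟨hle, heqz⟩ := (spec β).2 α hβ
    have heqz' : φ.app (Cn.obj α) ≫ G.map (Cn.map (homOfLE hβ.le))
        = ψ.app (Cn.obj α) ≫ G.map (Cn.map (homOfLE hβ.le)) := heqz
    have e0 : colimit.ι Cn α = Cn.map (homOfLE hβ.le) ≫ colimit.ι Cn β :=
      (colimit.w Cn (homOfLE hβ.le)).symm
    simp only [Functor.mapCocone_ι_app]
    show F.map (colimit.ι Cn α) ≫ φ.app (colimit Cn)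
        = F.map (colimit.ι Cn α) ≫ ψ.app (colimit Cn)
    rw [φ.naturality, ψ.naturality, e0, Functor.map_comp]
    simp only [← Category.assoc]
    rw [heqz']
  · simp only [Category.assoc, colimit.ι_desc]
    have hι : colimit.ι Cn α₀ ≫ colimit.desc Cn sE = c.ι.app (jf α₀) := colimit.ι_desc sE α₀
    have e : (D.map (homOfLE (spec α₀).1) ≫ colimit.ι Cn α₀) ≫ colimit.desc Cn sE
        = D.map (homOfLE (spec α₀).1) ≫ c.ι.app (jf α₀) :=
      (Category.assoc _ _ _).trans (congrArg _ hι)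
    refine (congrArg (fun t => g₀ ≫ t) e).trans ?_
    show g₀ ≫ D.map (homOfLE (spec α₀).1) ≫ c.ι.app (jf α₀) = f
    rw [c.w (homOfLE (spec α₀).1)]
    exact hg₀

/-- Equifier factorization: if `φ_E = ψ_E`, then any morphism from a κ-presentable object
`S` to `E` factors through a κ-presentable object `U` with `φ_U = ψ_U`. -/
theorem equifier_factorization
    (κ lam : Cardinal.{v}) (hκ : κ.IsRegular) (hlam : Cardinal.aleph0 ≤ lam) (hlt : lam < κ)
    (K : Type u) (L : Type u₂) [Category.{v} K] [Category.{v} L]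
    (hK : IsCardinalAccessible κ K) (hL : IsCardinalAccessible κ L)
    (hKch : HasChainColimits lam K) (hLch : HasChainColimits lam L)
    (F G : K ⥤ L)
    (hF₁ : PreservesCardinalDirectedColimits κ F) (hF₂ : PreservesChainColimits lam F)
    (hG₁ : PreservesCardinalDirectedColimits κ G) (hG₂ : PreservesChainColimits lam G)
    (hFp : ∀ X : K, IsCardinalPresentableObj κ X → IsCardinalPresentableObj κ (F.obj X))
    (φ ψ : F ⟶ G)
    (E : K) (hE : φ.app E = ψ.app E)
    (S : K) (hS : IsCardinalPresentableObj κ S) (f : S ⟶ E) :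
    ∃ U : K, IsCardinalPresentableObj κ U ∧ φ.app U = ψ.app U ∧
      ∃ (g : S ⟶ U) (h : U ⟶ E), g ≫ h = f := by
  obtain ⟨hKcol, Sset, hsmall, hSpres, hpresent⟩ := hK
  obtain ⟨pres⟩ := hpresent E
  obtain ⟨J, dir, D, mem, c, rfl, hcolim⟩ := pres
  have hDp : ∀ j, IsCardinalPresentableObj κ (D.obj j) := fun j => hSpres _ (mem j)
  haveI : HasColimitsOfShape lam.ord.ToType K := hKch
  exact EquifierAux.main κ lam hκ hlam hlt K L inferInstance F G hF₂ hG₁ hFp φ ψ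
    J dir D hDp c hcolim hE S hS f
end

section
/- Let κ be a regular cardinal and λ < κ an infinite cardinal. Let K and L be κ-accessible categories with colimits of λ-indexed chains, and F, G : K → L parallel functors preserving κ-directed colimits and colimits of λ-indexed chains, with F preserving κ-presentable objects. If (S, ψ) is an object of the inserter category (S ∈ K, ψ : F(S) → G(S)) with S κ-presentable in K, then (S, ψ) is a κ-presentable object of the inserter category. -/
open CategoryTheory Limits Opposite

universe w v u u₂ v₂

/-- The inserter category of a parallel pair of functors. -/
structure Inserter {K : Type u} {L : Type u₂} [Category.{v} K] [Category.{v₂} L]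
    (F G : K ⥤ L) where
  pt : K
  hom : F.obj pt ⟶ G.obj pt

@[ext]
structure InserterHom {K : Type u} {L : Type u₂} [Category.{v} K] [Category.{v₂} L]
    {F G : K ⥤ L} (X Y : Inserter F G) where
  f : X.pt ⟶ Y.pt
  comm : F.map f ≫ Y.hom = X.hom ≫ G.map f

instance {K : Type u} {L : Type u₂} [Category.{v} K] [Category.{v₂} L] (F G : K ⥤ L) :
    Category (Inserter F G) where
  Hom := InserterHom
  id X := ⟨𝟙 X.pt, by simp⟩
  comp {X Y Z} f g := ⟨f.f ≫ g.f, by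
    rw [F.map_comp, G.map_comp, Category.assoc, g.comm, ← Category.assoc, f.comm,
      Category.assoc]⟩
  id_comp f := by apply InserterHom.ext; simp [CategoryStruct.id, CategoryStruct.comp]
  comp_id f := by apply InserterHom.ext; simp [CategoryStruct.id, CategoryStruct.comp]
  assoc f g h := by apply InserterHom.ext; simp [CategoryStruct.comp]

/-- An object `(S, ψ)` of the inserter category with `S` κ-presentable is κ-presentable
in the inserter category. -/
theorem inserter_presentable_of_presentable
    (κ lam : Cardinal.{v}) (hκ : κ.IsRegular) (hlam : Cardinal.aleph0 ≤ lam) (hlt : lam < κ)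
    (K : Type u) (L : Type u₂) [Category.{v} K] [Category.{v} L]
    (hK : IsCardinalAccessible κ K) (hL : IsCardinalAccessible κ L)
    (hKch : HasChainColimits lam K) (hLch : HasChainColimits lam L)
    (F G : K ⥤ L)
    (hF₁ : PreservesCardinalDirectedColimits κ F) (hF₂ : PreservesChainColimits lam F)
    (hG₁ : PreservesCardinalDirectedColimits κ G) (hG₂ : PreservesChainColimits lam G)
    (hFp : ∀ X : K, IsCardinalPresentableObj κ X → IsCardinalPresentableObj κ (F.obj X))
    (S : K) (hS : IsCardinalPresentableObj κ S) (ψ : F.obj S ⟶ G.obj S) :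
    IsCardinalPresentableObj κ (⟨S, ψ⟩ : Inserter F G) := by
  intro J _ hJ
  -- J is nonempty and directed, hence filtered
  have hne : Nonempty J := by
    obtain ⟨j, -⟩ := hJ ∅ (by
      simpa using (Cardinal.aleph0_pos.trans_le hκ.aleph0_le))
    exact ⟨j⟩
  have hdir : IsDirected J (· ≤ ·) := ⟨fun a b => by
    obtain ⟨j, hj⟩ := hJ {a, b}
      ((Set.toFinite _).lt_aleph0.trans_le hκ.aleph0_le)
    exact ⟨j, hj a (by simp), hj b (by simp)⟩⟩
  -- instances from the hypotheses
  obtain ⟨hFJ⟩ := hF₁ J hJ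
  obtain ⟨hGJ⟩ := hG₁ J hJ
  obtain ⟨hSJ⟩ := hS J hJ
  obtain ⟨hFSJ⟩ := hFp S hS J hJ
  constructor
  constructor
  intro D
  -- the forgetful functor
  let P : Inserter F G ⥤ K :=
    { obj := fun X => X.pt
      map := fun f => f.f
      map_id := fun X => rfl
      map_comp := fun f g => rfl }
  have hcomm : ∀ {X Y : Inserter F G} (f : X ⟶ Y),
      F.map f.f ≫ Y.hom = X.hom ≫ G.map f.f := fun f => f.comm
  let Dp : J ⥤ K := D ⋙ P
  haveI : HasColimit Dp := hK.1 J hJ Dp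
  let c : Cocone Dp := colimit.cocone Dp
  have hc : IsColimit c := colimit.isColimit Dp
  have hw : ∀ {j j' : J} (f : j ⟶ j'), (D.map f).f ≫ c.ι.app j' = c.ι.app j :=
    fun f => c.w f
  have hcF : IsColimit (F.mapCocone c) := isColimitOfPreserves F hc
  have hcG : IsColimit (G.mapCocone c) := isColimitOfPreserves G hc
  -- the structure map on the colimit
  let ccF : Cocone (Dp ⋙ F) :=
    { pt := G.obj c.pt
      ι :=
        { app := fun j => (D.obj j).hom ≫ G.map (c.ι.app j)
          naturality := fun j j' f => by
            dsimp
            rw [Category.comp_id, ← Category.assoc]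
            show (F.map ((D.map f).f) ≫ (D.obj j').hom) ≫ G.map (c.ι.app j') = _
            rw [hcomm (D.map f), Category.assoc, ← G.map_comp, hw f] } }
  let ψ' : F.obj c.pt ⟶ G.obj c.pt := hcF.desc ccF
  have hψ : ∀ j, F.map (c.ι.app j) ≫ ψ' = (D.obj j).hom ≫ G.map (c.ι.app j) :=
    fun j => hcF.fac ccF j
  -- the colimit cocone in the inserter category
  let cc : Cocone D :=
    { pt := ⟨c.pt, ψ'⟩
      ι :=
        { app := fun j => ⟨c.ι.app j, hψ j⟩
          naturality := fun j j' f => by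
            apply InserterHom.ext
            show (D.map f).f ≫ c.ι.app j' = c.ι.app j ≫ 𝟙 _
            rw [Category.comp_id]; exact hw f } }
  have hcc : IsColimit cc := by
    refine
      { desc := fun s => ⟨hc.desc (P.mapCocone s), ?_⟩
        fac := fun s j => ?_
        uniq := fun s m hm => ?_ }
    · apply hcF.hom_ext
      intro j
      have h1 : c.ι.app j ≫ hc.desc (P.mapCocone s) = (s.ι.app j).f := hc.fac _ j
      have h2 := hcomm (s.ι.app j)
      dsimp at h2 ⊢
      rw [← Category.assoc, ← F.map_comp, h1, h2, ← Category.assoc, hψ j,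
        Category.assoc, ← G.map_comp, h1]
    · apply InserterHom.ext
      exact hc.fac (P.mapCocone s) j
    · apply InserterHom.ext
      exact hc.uniq (P.mapCocone s) m.f (fun j => congrArg InserterHom.f (hm j))
  -- the hom-functor cocones
  have hcS : IsColimit ((coyoneda.obj (op S)).mapCocone c) :=
    isColimitOfPreserves _ hc
  have hcFS : IsColimit ((coyoneda.obj (op (F.obj S))).mapCocone (G.mapCocone c)) :=
    isColimitOfPreserves _ hcG
  -- the mapped cocone is a colimit of types
  have htypes : IsColimit ((coyoneda.obj (op (⟨S, ψ⟩ : Inserter F G))).mapCocone cc) := by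
    apply Types.FilteredColimit.isColimitOf
    · -- joint surjectivity
      intro x
      obtain ⟨j, y, hy⟩ := Types.jointly_surjective (Dp ⋙ coyoneda.obj (op S)) hcS x.f
      have hy : y ≫ c.ι.app j = x.f := hy
      -- two maps F S ⟶ G (Dp.obj j) that agree in the colimit
      have key : ((coyoneda.obj (op (F.obj S))).mapCocone (G.mapCocone c)).ι.app j
            (F.map y ≫ (D.obj j).hom) =
          ((coyoneda.obj (op (F.obj S))).mapCocone (G.mapCocone c)).ι.app j
            (ψ ≫ G.map y) := by
        show (F.map y ≫ (D.obj j).hom) ≫ G.map (c.ι.app j) =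
          (ψ ≫ G.map y) ≫ G.map (c.ι.app j)
        rw [Category.assoc, ← hψ j, ← Category.assoc, ← F.map_comp, hy, x.comm,
          Category.assoc, ← G.map_comp, hy]
      rw [Types.FilteredColimit.isColimit_eq_iff _ hcFS] at key
      obtain ⟨k, f, g, hfg⟩ := key
      have hfg' : (F.map y ≫ (D.obj j).hom) ≫ G.map ((D.map f).f) =
          (ψ ≫ G.map y) ≫ G.map ((D.map f).f) := by
        have hfge : f = g := Subsingleton.elim f g
        subst hfge
        exact hfg
      refine ⟨k, ⟨y ≫ Dp.map f, ?_⟩, ?_⟩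
      · show F.map (y ≫ (D.map f).f) ≫ (D.obj k).hom = ψ ≫ G.map (y ≫ (D.map f).f)
        rw [F.map_comp, G.map_comp, Category.assoc, hcomm (D.map f)]
        simp only [Category.assoc] at hfg' ⊢
        exact hfg'
      · apply InserterHom.ext
        show x.f = (y ≫ (D.map f).f) ≫ c.ι.app k
        rw [Category.assoc, hw f, hy]
    · -- "injectivity"
      intro i j xi xj h
      have h' : ((coyoneda.obj (op S)).mapCocone c).ι.app i xi.f =
          ((coyoneda.obj (op S)).mapCocone c).ι.app j xj.f := by
        show xi.f ≫ c.ι.app i = xj.f ≫ c.ι.app j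
        exact congrArg InserterHom.f h
      rw [Types.FilteredColimit.isColimit_eq_iff _ hcS] at h'
      obtain ⟨k, f, g, hfg⟩ := h'
      refine ⟨k, f, g, ?_⟩
      apply InserterHom.ext
      exact hfg
  exact preservesColimit_of_preserves_colimit_cocone hcc htypes
end

section
/- Let κ be a regular cardinal, λ < κ an infinite cardinal, K and L κ-accessible categories with colimits of λ-indexed chains, and F, G : K → L functors preserving κ-directed colimits and colimits of λ-indexed chains, with F preserving κ-presentable objects. Let (K₀, φ) be an object of the inserter category, S and T κ-presentable objects of K, σ : F(S) → G(T) a morphism in L, and S → T, T → K₀ morphisms in K such that φ ∘ F(T→K₀) ∘ F(S→T) = G(T→K₀) ∘ σ. Then there exists a κ-presentable object U of K, a morphism ψ : F(U) → G(U), a morphism (U, ψ) → (K₀, φ) in the inserter category, and a morphism T → U in K such that the composite T → U → K₀ equals T → K₀ and ψ ∘ F(T→U) ∘ F(S→T) = G(T→U) ∘ σ. -/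
open CategoryTheory Limits Opposite

universe w v u u₂ v₂

section Helpers
variable {κ : Cardinal.{v}} {J : Type v} [Preorder J]

lemma IsCardinalDirectedPre.upperBound (hd : IsCardinalDirectedPre κ J)
    {I : Type v} (hI : Cardinal.mk I < κ) (f : I → J) : ∃ j, ∀ i, f i ≤ j := by
  obtain ⟨j, hj⟩ := hd (Set.range f) (lt_of_le_of_lt (Cardinal.mk_range_le) hI)
  exact ⟨j, fun i => hj _ ⟨i, rfl⟩⟩

lemma IsCardinalDirectedPre.nonempty (hκ : κ.IsRegular) (hd : IsCardinalDirectedPre κ J) :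
    Nonempty J := by
  obtain ⟨j, -⟩ := hd ∅ (by simpa using hκ.pos)
  exact ⟨j⟩

lemma IsCardinalDirectedPre.directed (hκ : κ.IsRegular) (hd : IsCardinalDirectedPre κ J) :
    IsDirected J (· ≤ ·) := by
  constructor
  intro a b
  obtain ⟨j, hj⟩ := hd.upperBound (I := ULift Bool)
    (lt_of_lt_of_le (by simp [Cardinal.mk_fintype]) hκ.aleph0_le)
    (fun x => bif x.down then a else b)
  exact ⟨j, hj ⟨true⟩, hj ⟨false⟩⟩

lemma IsCardinalDirectedPre.isFiltered (hκ : κ.IsRegular) (hd : IsCardinalDirectedPre κ J) :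
    IsFiltered J := by
  have := hd.nonempty hκ
  have := hd.directed hκ
  infer_instance

variable {L : Type u₂} [Category.{v} L]

lemma factor_through_colimit {D' : J ⥤ L} {cc : Cocone D'} (hcc : IsColimit cc)
    {X : L} (hX : Nonempty (PreservesColimitsOfShape J (coyoneda.obj (op X))))
    (f : X ⟶ cc.pt) : ∃ (i : J) (g : X ⟶ D'.obj i), g ≫ cc.ι.app i = f := by
  obtain ⟨h⟩ := hX
  have hcol : IsColimit ((coyoneda.obj (op X)).mapCocone cc) :=
    isColimitOfPreserves _ hcc
  obtain ⟨i, g, hg⟩ := Types.jointly_surjective_of_isColimit hcol f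
  exact ⟨i, g, hg⟩

lemma equalize_in_colimit (hκ : κ.IsRegular) (hd : IsCardinalDirectedPre κ J)
    {D' : J ⥤ L} {cc : Cocone D'} (hcc : IsColimit cc)
    {X : L} (hX : Nonempty (PreservesColimitsOfShape J (coyoneda.obj (op X))))
    {i₁ i₂ : J} (g₁ : X ⟶ D'.obj i₁) (g₂ : X ⟶ D'.obj i₂)
    (h : g₁ ≫ cc.ι.app i₁ = g₂ ≫ cc.ι.app i₂) :
    ∃ (k : J) (h₁ : i₁ ≤ k) (h₂ : i₂ ≤ k),
      g₁ ≫ D'.map (homOfLE h₁) = g₂ ≫ D'.map (homOfLE h₂) := by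
  have : IsFiltered J := hd.isFiltered hκ
  obtain ⟨hps⟩ := hX
  have hcol : IsColimit ((coyoneda.obj (op X)).mapCocone cc) :=
    isColimitOfPreserves _ hcc
  obtain ⟨k, f₁, f₂, hk⟩ := (Types.FilteredColimit.isColimit_eq_iff
    (D' ⋙ coyoneda.obj (op X)) hcol (i := i₁) (j := i₂) (xi := g₁) (xj := g₂)).mp h
  refine ⟨k, f₁.le, f₂.le, ?_⟩
  have e1 : f₁ = homOfLE f₁.le := rfl
  have e2 : f₂ = homOfLE f₂.le := rfl
  rw [e1, e2] at hk
  exact hk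

/-- The colimit of a `< κ`-sized chain of `κ`-presentable objects is `κ`-presentable. -/
lemma colimit_presentable {K : Type u} [Category.{v} K] (hκ : κ.IsRegular)
    {O : Type v} [Preorder O] (E : O ⥤ K) {dc : Cocone E} (hdc : IsColimit dc)
    (hO : Cardinal.mk O < κ)
    (hpres : ∀ β : O, IsCardinalPresentableObj κ (E.obj β)) :
    IsCardinalPresentableObj κ dc.pt := by
  intro J' _ hd'
  constructor
  constructor
  intro D'
  constructor
  intro s hs
  have hOO : Cardinal.mk (O × O) < κ :=
    (Cardinal.mk_prod O O).symm ▸ by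
      simpa using Cardinal.mul_lt_of_lt hκ.aleph0_le hO hO
  have Dco : ∀ {a b c' : J'} (h1 : a ≤ b) (h2 : b ≤ c') (h3 : a ≤ c'),
      D'.map (homOfLE h1) ≫ D'.map (homOfLE h2) = D'.map (homOfLE h3) := by
    intro a b c' h1 h2 h3
    rw [← D'.map_comp, homOfLE_comp]
  constructor
  apply Types.FilteredColimit.isColimitOf
  · -- surjectivity
    intro f
    show ∃ (i : J') (g : dc.pt ⟶ D'.obj i), f = g ≫ s.ι.app i
    have hfac : ∀ β : O, ∃ (i : J') (g : E.obj β ⟶ D'.obj i),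
        g ≫ s.ι.app i = dc.ι.app β ≫ f :=
      fun β => factor_through_colimit hs (hpres β J' hd') _
    choose i g hg using hfac
    obtain ⟨ip, hip⟩ := hd'.upperBound hO i
    have hgb' : ∀ β, (g β ≫ D'.map (homOfLE (hip β))) ≫ s.ι.app ip = dc.ι.app β ≫ f := by
      intro β
      rw [Category.assoc, s.w]
      exact hg β
    have hq : ∀ x : O × O, ∃ (k : J') (h : ip ≤ k), ∀ hle : x.1 ≤ x.2,
        E.map (homOfLE hle) ≫ (g x.2 ≫ D'.map (homOfLE (hip x.2))) ≫ D'.map (homOfLE h)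
          = (g x.1 ≫ D'.map (homOfLE (hip x.1))) ≫ D'.map (homOfLE h) := by
      rintro ⟨β, γ⟩
      by_cases hle : β ≤ γ
      · obtain ⟨k, h₁, h₂, hk⟩ := equalize_in_colimit hκ hd' hs (hpres β J' hd')
          (g₁ := E.map (homOfLE hle) ≫ (g γ ≫ D'.map (homOfLE (hip γ))))
          (g₂ := g β ≫ D'.map (homOfLE (hip β)))
          (by rw [Category.assoc, hgb' γ, hgb' β, ← Category.assoc, ← dc.w (homOfLE hle),
                Category.assoc])
        exact ⟨k, h₂, fun _ => by
          simp only [Category.assoc] at hk ⊢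
          exact hk⟩
      · exact ⟨ip, le_rfl, fun h => absurd h hle⟩
    choose q hq1 hq2 using hq
    obtain ⟨istar, histar⟩ := hd'.upperBound hOO q
    have hii : ∀ β : O, ip ≤ istar := fun β => (hq1 (β, β)).trans (histar (β, β))
    have hcoc : ∀ {β γ : O} (ff : β ⟶ γ),
        E.map ff ≫ ((g γ ≫ D'.map (homOfLE (hip γ))) ≫ D'.map (homOfLE (hii γ)))
          = (g β ≫ D'.map (homOfLE (hip β))) ≫ D'.map (homOfLE (hii β)) := by
      intro β γ ff
      have h2 := hq2 (β, γ) ff.le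
      have h3 := congrArg (fun z => z ≫ D'.map (homOfLE (histar (β, γ)))) h2
      simp only [Category.assoc] at h3 ⊢
      rw [Dco (hq1 (β, γ)) (histar (β, γ)) (hii γ)] at h3
      have hE : E.map ff = E.map (homOfLE ff.le) := rfl
      rw [hE]
      exact h3
    let cstar : Cocone E := ⟨D'.obj istar,
      { app := fun β => (g β ≫ D'.map (homOfLE (hip β))) ≫ D'.map (homOfLE (hii β)),
        naturality := fun β γ ff => by simpa using hcoc ff }⟩
    refine ⟨istar, hdc.desc cstar, (hdc.hom_ext fun β => ?_).symm⟩
    rw [← Category.assoc, hdc.fac]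
    show ((g β ≫ D'.map (homOfLE (hip β))) ≫ D'.map (homOfLE (hii β))) ≫ s.ι.app istar
      = dc.ι.app β ≫ f
    rw [Category.assoc, s.w]
    exact hgb' β
  · -- injectivity
    intro i₁ i₂ x y hxy
    replace hxy : x ≫ s.ι.app i₁ = y ≫ s.ι.app i₂ := hxy
    obtain ⟨i₀, h1, h2⟩ := (hd'.directed hκ).directed i₁ i₂
    have hr : ∀ β : O, ∃ (k : J') (h : i₀ ≤ k),
        (dc.ι.app β ≫ x ≫ D'.map (homOfLE h1)) ≫ D'.map (homOfLE h)
          = (dc.ι.app β ≫ y ≫ D'.map (homOfLE h2)) ≫ D'.map (homOfLE h) := by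
      intro β
      obtain ⟨k, hk1, hk2, hk⟩ := equalize_in_colimit hκ hd' hs (hpres β J' hd')
        (g₁ := dc.ι.app β ≫ x ≫ D'.map (homOfLE h1))
        (g₂ := dc.ι.app β ≫ y ≫ D'.map (homOfLE h2))
        (by
          have h4 := congrArg (fun z => dc.ι.app β ≫ z) hxy
          simp only [Category.assoc] at h4 ⊢
          rw [s.w, s.w]
          exact h4)
      exact ⟨k, hk1, hk⟩
    choose r hr1 hr2 using hr
    have hOP : Cardinal.mk (O ⊕ PUnit.{v+1} : Type v) < κ := by
      simp only [Cardinal.mk_sum, Cardinal.lift_id, Cardinal.mk_punit]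
      exact Cardinal.add_lt_of_lt hκ.aleph0_le hO
        (lt_of_lt_of_le Cardinal.one_lt_aleph0 hκ.aleph0_le)
    obtain ⟨rstar, hrstar⟩ := hd'.upperBound hOP
      (fun z => match z with | .inl β => r β | .inr _ => i₀)
    have hi0r : i₀ ≤ rstar := hrstar (.inr ⟨⟩)
    have hmain : (x ≫ D'.map (homOfLE h1)) ≫ D'.map (homOfLE hi0r)
        = (y ≫ D'.map (homOfLE h2)) ≫ D'.map (homOfLE hi0r) := by
      refine hdc.hom_ext fun β => ?_
      have h3 := congrArg (fun z => z ≫ D'.map (homOfLE (hrstar (.inl β)))) (hr2 β)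
      simp only [Category.assoc] at h3 ⊢
      rw [Dco (hr1 β) (hrstar (.inl β)) hi0r] at h3
      exact h3
    refine ⟨rstar, homOfLE (h1.trans hi0r), homOfLE (h2.trans hi0r), ?_⟩
    show x ≫ D'.map (homOfLE (h1.trans hi0r)) = y ≫ D'.map (homOfLE (h2.trans hi0r))
    rw [← Dco h1 hi0r (h1.trans hi0r), ← Dco h2 hi0r (h2.trans hi0r)]
    simp only [Category.assoc] at hmain ⊢
    exact hmain

lemma exists_chain_fun {κ : Cardinal.{v}} {J : Type v} [Preorder J]
    {O : Type v} [LinearOrder O] [WellFoundedLT O]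
    (hκ : κ.IsRegular) (hd : IsCardinalDirectedPre κ J) (hO : Cardinal.mk O < κ)
    (M : J → J → J) (p₀ : J) :
    ∃ j : O → J, Monotone j ∧ (∀ γ, p₀ ≤ j γ) ∧
      (∀ β β' γ : O, β < γ → β' < γ → M (j β) (j β') ≤ j γ) := by
  have hIio : ∀ γ : O, Cardinal.mk (Set.Iio γ) < κ :=
    fun γ => lt_of_le_of_lt (Cardinal.mk_set_le _) hO
  have hcard : ∀ γ : O,
      Cardinal.mk ((Set.Iio γ ⊕ ((Set.Iio γ) × (Set.Iio γ)) ⊕ PUnit.{v+1} : Type v)) < κ := by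
    intro γ
    simp only [Cardinal.mk_sum, Cardinal.mk_prod, Cardinal.lift_id, Cardinal.mk_punit]
    refine Cardinal.add_lt_of_lt hκ.aleph0_le (hIio γ)
      (Cardinal.add_lt_of_lt hκ.aleph0_le
        (Cardinal.mul_lt_of_lt hκ.aleph0_le (hIio γ) (hIio γ))
        (lt_of_lt_of_le Cardinal.one_lt_aleph0 hκ.aleph0_le))
  let fam : ∀ γ : O, (∀ β, β < γ → J) →
      (Set.Iio γ ⊕ ((Set.Iio γ) × (Set.Iio γ)) ⊕ PUnit.{v+1}) → J := fun γ ih x =>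
    match x with
    | .inl β => ih β.1 β.2
    | .inr (.inl (β, β')) => M (ih β.1 β.2) (ih β'.1 β'.2)
    | .inr (.inr _) => p₀
  have H : ∀ γ : O, ∀ ih : (∀ β, β < γ → J), ∃ j, ∀ i, fam γ ih i ≤ j :=
    fun γ ih => hd.upperBound (hcard γ) (fam γ ih)
  have wf : WellFounded ((· < ·) : O → O → Prop) := IsWellFounded.wf
  let j : O → J := wf.fix (C := fun _ => J) (fun γ ih => (H γ ih).choose)
  have hfix : ∀ γ, j γ = (H γ (fun β _ => j β)).choose := fun γ => wf.fix_eq _ γ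
  have key : ∀ γ : O, ∀ i, fam γ (fun β _ => j β) i ≤ j γ := by
    intro γ i
    rw [hfix γ]
    exact (H γ (fun β _ => j β)).choose_spec i
  have hmono : Monotone j := by
    intro β γ hβγ
    rcases eq_or_lt_of_le hβγ with rfl | h
    · exact le_rfl
    · exact key γ (.inl ⟨β, h⟩)
  exact ⟨j, hmono, fun γ => key γ (.inr (.inr ⟨⟩)),
    fun β β' γ h h' => key γ (.inr (.inl (⟨β, h⟩, ⟨β', h'⟩)))⟩

/-- The main lemma for the inserter theorem: a compatible pentagon through κ-presentable
objects `S`, `T` over an inserter object `(K₀, φ)` factors through a κ-presentable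
inserter object `(U, ψ)`. -/
theorem inserter_main_lemma
    (κ lam : Cardinal.{v}) (hκ : κ.IsRegular) (hlam : Cardinal.aleph0 ≤ lam) (hlt : lam < κ)
    (K : Type u) (L : Type u₂) [Category.{v} K] [Category.{v} L]
    (hK : IsCardinalAccessible κ K) (hL : IsCardinalAccessible κ L)
    (hKch : HasChainColimits lam K) (hLch : HasChainColimits lam L)
    (F G : K ⥤ L)
    (hF₁ : PreservesCardinalDirectedColimits κ F) (hF₂ : PreservesChainColimits lam F)
    (hG₁ : PreservesCardinalDirectedColimits κ G) (hG₂ : PreservesChainColimits lam G)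
    (hFp : ∀ X : K, IsCardinalPresentableObj κ X → IsCardinalPresentableObj κ (F.obj X))
    (K₀ : K) (φ : F.obj K₀ ⟶ G.obj K₀)
    (S T : K) (hS : IsCardinalPresentableObj κ S) (hT : IsCardinalPresentableObj κ T)
    (σ : F.obj S ⟶ G.obj T) (s : S ⟶ T) (t : T ⟶ K₀)
    (hpent : F.map s ≫ F.map t ≫ φ = σ ≫ G.map t) :
    ∃ (U : K) (ψ : F.obj U ⟶ G.obj U) (u : T ⟶ U) (h : U ⟶ K₀),
      IsCardinalPresentableObj κ U ∧
      u ≫ h = t ∧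
      F.map h ≫ φ = ψ ≫ G.map h ∧
      F.map s ≫ F.map u ≫ ψ = σ ≫ G.map u := by
  obtain ⟨hdirK, S₀, -, hS₀pres, hS₀gen⟩ := hK
  obtain ⟨P⟩ := hS₀gen K₀
  obtain ⟨J, hdJ, D, hmem, c, hpt, hcolim⟩ := P
  subst hpt
  -- basic presentability facts
  have presD : ∀ k : J, IsCardinalPresentableObj κ (D.obj k) := fun k => hS₀pres _ (hmem k)
  have presFD : ∀ k : J,
      Nonempty (PreservesColimitsOfShape J (coyoneda.obj (op (F.obj (D.obj k))))) :=
    fun k => hFp _ (presD k) J hdJ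
  letI instGc : PreservesColimitsOfShape J G := (hG₁ J hdJ).some
  have hGc : IsColimit (G.mapCocone c) := isColimitOfPreserves G hcolim
  -- choice of factorizations χ k of F.map (c.ι.app k) ≫ φ
  have hχex : ∀ k : J, ∃ (i : J) (g : F.obj (D.obj k) ⟶ (D ⋙ G).obj i),
      g ≫ (G.mapCocone c).ι.app i = F.map (c.ι.app k) ≫ φ :=
    fun k => factor_through_colimit hGc (presFD k) _
  choose e χ hχ using hχex
  have hχ' : ∀ k : J, χ k ≫ G.map (c.ι.app (e k)) = F.map (c.ι.app k) ≫ φ := by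
    intro k
    have := hχ k
    rwa [Functor.mapCocone_ι_app] at this
  -- collapsing helpers
  have Gco : ∀ {a b c2 : J} (h1 : a ≤ b) (h2 : b ≤ c2) (h3 : a ≤ c2),
      G.map (D.map (homOfLE h1)) ≫ G.map (D.map (homOfLE h2))
        = G.map (D.map (homOfLE h3)) := by
    intro a b c2 h1 h2 h3
    rw [← G.map_comp, ← D.map_comp, homOfLE_comp]
  have Gco' : ∀ {a b c2 : J} (h1 : a ≤ b) (h2 : b ≤ c2) (h3 : a ≤ c2)
      {Z : L} (tl : G.obj (D.obj c2) ⟶ Z),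
      G.map (D.map (homOfLE h1)) ≫ G.map (D.map (homOfLE h2)) ≫ tl
        = G.map (D.map (homOfLE h3)) ≫ tl := by
    intro a b c2 h1 h2 h3 Z tl
    rw [← Category.assoc, Gco h1 h2 h3]
  -- choice of equalizing stages m k k'
  have hmex : ∀ k k' : J, ∃ (mm : J) (hmm1 : e k ≤ mm) (hmm2 : e k' ≤ mm),
      ∀ h : k ≤ k', χ k ≫ G.map (D.map (homOfLE hmm1))
        = F.map (D.map (homOfLE h)) ≫ χ k' ≫ G.map (D.map (homOfLE hmm2)) := by
    intro k k'
    by_cases h : k ≤ k'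
    · obtain ⟨mm, hm1, hm2, hmk⟩ := equalize_in_colimit hκ hdJ hGc (presFD k)
        (g₁ := χ k) (g₂ := F.map (D.map (homOfLE h)) ≫ χ k')
        (by
          rw [hχ k, Category.assoc, hχ k', ← Category.assoc, ← F.map_comp, c.w])
      refine ⟨mm, hm1, hm2, fun h' => ?_⟩
      simp only [Category.assoc] at hmk
      exact hmk
    · obtain ⟨mm, hm1, hm2⟩ := (hdJ.directed hκ).directed (e k) (e k')
      exact ⟨mm, hm1, hm2, fun h' => absurd h' h⟩
  choose m hm1 hm2 hm3 using hmex
  -- factor t through the presentation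
  obtain ⟨j₀, t₀, ht₀⟩ := factor_through_colimit hcolim (hT J hdJ) t
  -- equalize the pentagon at a stage p
  obtain ⟨p, hp1, hp2, hp3⟩ := equalize_in_colimit hκ hdJ hGc (hFp S hS J hdJ)
    (g₁ := F.map s ≫ F.map t₀ ≫ χ j₀) (g₂ := σ ≫ G.map t₀)
    (by
      have e1 : F.map t₀ ≫ F.map (c.ι.app j₀) ≫ φ = F.map t ≫ φ := by
        rw [← Category.assoc, ← F.map_comp, ht₀]
      have e2 : G.map t₀ ≫ (G.mapCocone c).ι.app j₀ = G.map t := by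
        rw [Functor.mapCocone_ι_app, ← G.map_comp, ht₀]
      simp only [Category.assoc]
      rw [hχ j₀, e1, e2]
      exact hpent)
  obtain ⟨p₀, hp₀1, hp₀2⟩ := (hdJ.directed hκ).directed p j₀
  have hMex : ∀ k k' : J, ∃ MM, m k k' ≤ MM ∧ m j₀ k' ≤ MM := fun k k' => by
    obtain ⟨MM, a, b⟩ := (hdJ.directed hκ).directed (m k k') (m j₀ k')
    exact ⟨MM, a, b⟩
  choose M hM1 hM2 using hMex
  -- the chain index
  have hO : Cardinal.mk lam.ord.ToType < κ := by
    rw [Cardinal.mk_toType, Cardinal.card_ord]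
    exact hlt
  haveI : Nonempty lam.ord.ToType := Ordinal.toType_nonempty_iff_ne_zero.mpr
    (fun hz => by
      have := Cardinal.ord_eq_zero.mp hz
      rw [this] at hlam
      exact (Cardinal.aleph0_pos.not_ge (le_of_le_of_eq hlam rfl)).elim)
  haveI : NoMaxOrder lam.ord.ToType := Cardinal.noMaxOrder hlam
  obtain ⟨j, jmono, hjp₀, hjM⟩ :=
    exists_chain_fun (O := lam.ord.ToType) hκ hdJ hO M p₀
  have hpj : ∀ γ : lam.ord.ToType, p ≤ j γ := fun γ => hp₀1.trans (hjp₀ γ)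
  have hj₀j : ∀ γ : lam.ord.ToType, j₀ ≤ j γ := fun γ => hp₀2.trans (hjp₀ γ)
  have hmj : ∀ β β' γ : lam.ord.ToType, β < γ → β' < γ → m (j β) (j β') ≤ j γ :=
    fun β β' γ hh hh' => (hM1 _ _).trans (hjM β β' γ hh hh')
  have hmj0 : ∀ β' γ : lam.ord.ToType, β' < γ → m j₀ (j β') ≤ j γ :=
    fun β' γ hh => (hM2 (j β') (j β')).trans (hjM β' β' γ hh hh)
  have he : ∀ β γ : lam.ord.ToType, β < γ → e (j β) ≤ j γ :=
    fun β γ hh => (hm1 (j β) (j β)).trans (hmj β β γ hh hh)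
  have hej₀ : ∀ δ : lam.ord.ToType, e j₀ ≤ j δ := fun δ => hp1.trans (hpj δ)
  have hsucc : ∀ β : lam.ord.ToType, ∃ γ, β < γ := fun β => exists_gt β
  choose sσ hsσ using hsucc
  -- the chain
  haveI : HasColimitsOfShape lam.ord.ToType K := hKch
  set E : lam.ord.ToType ⥤ K :=
    { obj := fun β => D.obj (j β), map := fun ff => D.map (homOfLE (jmono ff.le)),
      map_id := fun β => D.map_id (j β), map_comp := fun f g => D.map_comp _ _ } with hEdef
  have hEobj : ∀ β, E.obj β = D.obj (j β) := fun _ => rfl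
  have hEmap : ∀ {β γ : lam.ord.ToType} (ff : β ⟶ γ),
      E.map ff = D.map (homOfLE (jmono ff.le)) := fun _ => rfl
  -- the map to c.pt
  have cKnat : ∀ {β γ : lam.ord.ToType} (ff : β ⟶ γ),
      E.map ff ≫ c.ι.app (j γ) = c.ι.app (j β) := by
    intro β γ ff
    rw [hEmap ff]
    exact c.w (homOfLE (jmono ff.le))
  let cK : Cocone E := ⟨c.pt,
    { app := fun β => c.ι.app (j β),
      naturality := fun β γ ff => by
        simpa using cKnat ff }⟩
  set h : colimit E ⟶ c.pt := colimit.desc E cK with hhdef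
  have hιh : ∀ β, colimit.ι E β ≫ h = c.ι.app (j β) := fun β => colimit.ι_desc cK β
  -- key coherence step
  have step : ∀ (β γ δ : lam.ord.ToType) (hβγ : β ≤ γ) (hγδ : γ < δ),
      χ (j β) ≫ G.map (D.map (homOfLE (he β δ (lt_of_le_of_lt hβγ hγδ)))) =
      F.map (D.map (homOfLE (jmono hβγ))) ≫ χ (j γ)
        ≫ G.map (D.map (homOfLE (he γ δ hγδ))) := by
    intro β γ δ hβγ hγδ
    have hkey := hm3 (j β) (j γ) (jmono hβγ)
    have hmle : m (j β) (j γ) ≤ j δ := hmj β γ δ (lt_of_le_of_lt hβγ hγδ) hγδ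
    have h3 := congrArg (fun z => z ≫ G.map (D.map (homOfLE hmle))) hkey
    simp only [Category.assoc] at h3
    rw [Gco (hm1 (j β) (j γ)) hmle (he β δ (lt_of_le_of_lt hβγ hγδ)),
      Gco (hm2 (j β) (j γ)) hmle (he γ δ hγδ)] at h3
    exact h3
  have step0 : ∀ (β δ : lam.ord.ToType) (hβδ : β < δ),
      χ j₀ ≫ G.map (D.map (homOfLE (hej₀ δ))) =
      F.map (D.map (homOfLE (hj₀j β))) ≫ χ (j β)
        ≫ G.map (D.map (homOfLE (he β δ hβδ))) := by
    intro β δ hβδ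
    have hkey := hm3 j₀ (j β) (hj₀j β)
    have hmle : m j₀ (j β) ≤ j δ := hmj0 β δ hβδ
    have h3 := congrArg (fun z => z ≫ G.map (D.map (homOfLE hmle))) hkey
    simp only [Category.assoc] at h3
    rw [Gco (hm1 j₀ (j β)) hmle (hej₀ δ),
      Gco (hm2 j₀ (j β)) hmle (he β δ hβδ)] at h3
    exact h3
  -- the cocone defining ψ
  have hμnat : ∀ {β γ : lam.ord.ToType} (ff : β ⟶ γ),
      (E ⋙ F).map ff ≫
        (χ (j γ) ≫ G.map (D.map (homOfLE (he γ (sσ γ) (hsσ γ))) ≫ colimit.ι E (sσ γ))) =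
      χ (j β) ≫ G.map (D.map (homOfLE (he β (sσ β) (hsσ β))) ≫ colimit.ι E (sσ β)) := by
    intro β γ ff
    have hβγ : β ≤ γ := ff.le
    set δ : lam.ord.ToType := sσ (max (sσ β) (sσ γ)) with hδdef
    have hσβδ : sσ β < δ := lt_of_le_of_lt (le_max_left _ _) (hsσ _)
    have hσγδ : sσ γ < δ := lt_of_le_of_lt (le_max_right _ _) (hsσ _)
    have hγδ : γ < δ := (hsσ γ).trans hσγδ
    have hβδ : β < δ := lt_of_le_of_lt hβγ hγδ
    have lγ : colimit.ι E (sσ γ) = E.map (homOfLE hσγδ.le) ≫ colimit.ι E δ :=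
      (colimit.w E (homOfLE hσγδ.le)).symm
    have lβ : colimit.ι E (sσ β) = E.map (homOfLE hσβδ.le) ≫ colimit.ι E δ :=
      (colimit.w E (homOfLE hσβδ.le)).symm
    have hEF : (E ⋙ F).map ff = F.map (D.map (homOfLE (jmono hβγ))) := rfl
    rw [hEF, lγ, lβ, hEmap (homOfLE hσγδ.le), hEmap (homOfLE hσβδ.le)]
    simp only [G.map_comp, Category.assoc]
    rw [Gco' (he γ (sσ γ) (hsσ γ)) (jmono hσγδ.le) (he γ δ hγδ),
      Gco' (he β (sσ β) (hsσ β)) (jmono hσβδ.le) (he β δ hβδ)]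
    have := step β γ δ hβγ hγδ
    have h4 := congrArg (fun z => z ≫ G.map (colimit.ι E δ)) this
    simp only [Category.assoc] at h4
    exact h4.symm
  let cμ : Cocone (E ⋙ F) := ⟨G.obj (colimit E),
    { app := fun β =>
        χ (j β) ≫ G.map (D.map (homOfLE (he β (sσ β) (hsσ β))) ≫ colimit.ι E (sσ β)),
      naturality := fun β γ ff => by
        simpa using hμnat ff }⟩
  letI instF : PreservesColimitsOfShape lam.ord.ToType F := hF₂.some
  have hFU : IsColimit (F.mapCocone (colimit.cocone E)) :=
    isColimitOfPreserves F (colimit.isColimit E)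
  set ψ : F.obj (colimit E) ⟶ G.obj (colimit E) := hFU.desc cμ with hψdef
  have hψfac : ∀ β, F.map (colimit.ι E β) ≫ ψ
      = χ (j β) ≫ G.map (D.map (homOfLE (he β (sσ β) (hsσ β))) ≫ colimit.ι E (sσ β)) := by
    intro β
    have := hFU.fac cμ β
    rwa [Functor.mapCocone_ι_app] at this
  set β₀ : lam.ord.ToType := Classical.arbitrary _ with hβ₀def
  set u : T ⟶ colimit E := t₀ ≫ D.map (homOfLE (hj₀j β₀)) ≫ colimit.ι E β₀ with hudef
  refine ⟨colimit E, ψ, u, h, ?_, ?_, ?_, ?_⟩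
  · -- presentability
    exact colimit_presentable hκ E (colimit.isColimit E) hO (fun β => presD (j β))
  · -- u ≫ h = t
    rw [hudef]
    simp only [Category.assoc]
    rw [hιh β₀]
    rw [← ht₀]
    congr 1
    exact c.w (homOfLE (hj₀j β₀))
  · -- the inserter square
    refine hFU.hom_ext fun β => ?_
    rw [Functor.mapCocone_ι_app]
    show F.map (colimit.ι E β) ≫ F.map h ≫ φ = F.map (colimit.ι E β) ≫ ψ ≫ G.map h
    have lhs : F.map (colimit.ι E β) ≫ F.map h ≫ φ = F.map (c.ι.app (j β)) ≫ φ := by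
      rw [← Category.assoc, ← F.map_comp, hιh β]
    rw [lhs, ← Category.assoc, hψfac β]
    simp only [Category.assoc, G.map_comp]
    have lleg : colimit.ι E (sσ β) ≫ h = c.ι.app (j (sσ β)) := hιh (sσ β)
    rw [← G.map_comp]
    rw [lleg]
    have : D.map (homOfLE (he β (sσ β) (hsσ β))) ≫ c.ι.app (j (sσ β))
        = c.ι.app (e (j β)) := c.w _
    rw [← G.map_comp, this]
    exact (hχ' (j β)).symm
  · -- the pentagon
    rw [hudef]
    have hLHS : F.map (t₀ ≫ D.map (homOfLE (hj₀j β₀)) ≫ colimit.ι E β₀) ≫ ψ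
        = F.map t₀ ≫ F.map (D.map (homOfLE (hj₀j β₀)))
          ≫ χ (j β₀) ≫ G.map (D.map (homOfLE (he β₀ (sσ β₀) (hsσ β₀)))
            ≫ colimit.ι E (sσ β₀)) := by
      simp only [F.map_comp, Category.assoc]
      rw [hψfac β₀]
    rw [hLHS]
    have hstep0 := step0 β₀ (sσ β₀) (hsσ β₀)
    have h5 := congrArg (fun z => z ≫ G.map (colimit.ι E (sσ β₀))) hstep0
    simp only [Category.assoc] at h5
    simp only [G.map_comp, Category.assoc]
    rw [← h5]
    -- now use the pushed pentagon equalization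
    have h6 := congrArg (fun z => z ≫ G.map (D.map (homOfLE (hpj (sσ β₀))))) hp3
    simp only [Category.assoc, Functor.comp_map] at h6
    rw [Gco hp1 (hpj (sσ β₀)) (hej₀ (sσ β₀)),
      Gco hp2 (hpj (sσ β₀)) (hj₀j (sσ β₀))] at h6
    have h7 := congrArg (fun z => z ≫ G.map (colimit.ι E (sσ β₀))) h6
    simp only [Category.assoc] at h7
    rw [h7]
    -- rewrite the right-hand side
    have lβ₀ : colimit.ι E β₀ = E.map (homOfLE (hsσ β₀).le) ≫ colimit.ι E (sσ β₀) :=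
      (colimit.w E (homOfLE (hsσ β₀).le)).symm
    rw [lβ₀, hEmap (homOfLE (hsσ β₀).le)]
    simp only [G.map_comp, Category.assoc]
    rw [Gco' (hj₀j β₀) (jmono (hsσ β₀).le) (hj₀j (sσ β₀))]
end Helpers
end
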